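/- arXiv:2502.15072 — 10 statements merged into one kernel-verified Lean document; each statement's English description precedes it below -/
import Mathlib

section
/- For every s ∈ (0,1), the CART criterion G is differentiable at s with G'(s) = f(s)·(2η(s) − μ_L(s) − μ_R(s))·(μ_R(s) − μ_L(s)). -/
open Set MeasureTheory intervalIntegral

/-- For every `s ∈ (0,1)`, the CART criterion `G` is differentiable at `s`
with `G' s = f s * (2 * η s - μL s - μR s) * (μR s - μL s)`. -/
theorem cart_criterion_hasDerivAt
    (f η : ℝ → ℝ)
    (hf_cont : ContinuousOn f (Set.Icc 0 1))
    (hf_pos : ∀ x ∈ Set.Icc (0:ℝ) 1, 0 < f x)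
    (hf_prob : (∫ x in (0:ℝ)..1, f x) = 1)
    (hη_cont : ContinuousOn η (Set.Icc 0 1))
    (hη_mem : ∀ x ∈ Set.Icc (0:ℝ) 1, η x ∈ Set.Icc (0:ℝ) 1)
    (F μL μR G : ℝ → ℝ)
    (hF : ∀ s, F s = ∫ x in (0:ℝ)..s, f x)
    (hμL : ∀ s, μL s = (∫ x in (0:ℝ)..s, η x * f x) / F s)
    (hμR : ∀ s, μR s = (∫ x in s..(1:ℝ), η x * f x) / (1 - F s))
    (hG : ∀ s, G s = F s * (μL s - (μL s) ^ 2) + (1 - F s) * (μR s - (μR s) ^ 2)) :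
    ∀ s ∈ Set.Ioo (0:ℝ) 1,
      HasDerivAt G (f s * (2 * η s - μL s - μR s) * (μR s - μL s)) s := by
  intro s hs
  obtain ⟨hs0, hs1⟩ := hs
  have hsIcc : s ∈ Set.Icc (0:ℝ) 1 := ⟨hs0.le, hs1.le⟩
  have hg_cont : ContinuousOn (fun x => η x * f x) (Set.Icc 0 1) := hη_cont.mul hf_cont
  -- integrability of f and η*f on subintervals
  have hint_f : ∀ a b : ℝ, 0 ≤ a → a ≤ b → b ≤ 1 → IntervalIntegrable f volume a b := by
    intro a b ha hab hb
    exact (hf_cont.mono (fun x hx => ⟨le_trans ha (Set.mem_Icc.mp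
      ((Set.uIcc_of_le hab ▸ hx : x ∈ Set.Icc a b)) ).1,
      le_trans (Set.mem_Icc.mp (Set.uIcc_of_le hab ▸ hx : x ∈ Set.Icc a b)).2 hb⟩)).intervalIntegrable
  have hint_g : ∀ a b : ℝ, 0 ≤ a → a ≤ b → b ≤ 1 →
      IntervalIntegrable (fun x => η x * f x) volume a b := by
    intro a b ha hab hb
    exact (hg_cont.mono (fun x hx => ⟨le_trans ha (Set.mem_Icc.mp
      ((Set.uIcc_of_le hab ▸ hx : x ∈ Set.Icc a b)) ).1,
      le_trans (Set.mem_Icc.mp (Set.uIcc_of_le hab ▸ hx : x ∈ Set.Icc a b)).2 hb⟩)).intervalIntegrable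
  -- continuity at s
  have hnhds : Set.Icc (0:ℝ) 1 ∈ nhds s := Icc_mem_nhds hs0 hs1
  have hf_at : ContinuousAt f s := hf_cont.continuousAt hnhds
  have hg_at : ContinuousAt (fun x => η x * f x) s := hg_cont.continuousAt hnhds
  have hf_meas : StronglyMeasurableAtFilter f (nhds s) volume :=
    ContinuousOn.stronglyMeasurableAtFilter isOpen_Ioo
      (hf_cont.mono Set.Ioo_subset_Icc_self) s ⟨hs0, hs1⟩
  have hg_meas : StronglyMeasurableAtFilter (fun x => η x * f x) (nhds s) volume :=
    ContinuousOn.stronglyMeasurableAtFilter isOpen_Ioo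
      (hg_cont.mono Set.Ioo_subset_Icc_self) s ⟨hs0, hs1⟩
  -- F positive, less than 1
  have hFpos : 0 < F s := by
    rw [hF]
    exact intervalIntegral_pos_of_pos_on (hint_f 0 s le_rfl hs0.le hs1.le)
      (fun x hx => hf_pos x ⟨hx.1.le, hx.2.le.trans hs1.le⟩) hs0
  have hsplit0 : (∫ x in (0:ℝ)..s, f x) + (∫ x in s..(1:ℝ), f x) = ∫ x in (0:ℝ)..1, f x :=
    integral_add_adjacent_intervals (hint_f 0 s le_rfl hs0.le hs1.le)
      (hint_f s 1 hs0.le hs1.le le_rfl)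
  have hsplit : F s + (∫ x in s..(1:ℝ), f x) = 1 := by rw [hF]; rw [hsplit0, hf_prob]
  have hFlt : F s < 1 := by
    have : 0 < ∫ x in s..(1:ℝ), f x :=
      intervalIntegral_pos_of_pos_on (hint_f s 1 hs0.le hs1.le le_rfl)
        (fun x hx => hf_pos x ⟨hs0.le.trans hx.1.le, hx.2.le⟩) hs1
    linarith
  have hFne : F s ≠ 0 := ne_of_gt hFpos
  have h1Fne : (1:ℝ) - F s ≠ 0 := by linarith
  -- derivatives of the integral functions
  have hFfun : F = fun t => ∫ x in (0:ℝ)..t, f x := funext hF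
  have hF' : HasDerivAt F (f s) s := by
    rw [hFfun]
    exact integral_hasDerivAt_right (hint_f 0 s le_rfl hs0.le hs1.le) hf_meas hf_at
  have hB' : HasDerivAt (fun t => ∫ x in (0:ℝ)..t, η x * f x) (η s * f s) s :=
    integral_hasDerivAt_right (hint_g 0 s le_rfl hs0.le hs1.le) hg_meas hg_at
  have hC' : HasDerivAt (fun t => ∫ x in t..(1:ℝ), η x * f x) (-(η s * f s)) s :=
    integral_hasDerivAt_left (hint_g s 1 hs0.le hs1.le le_rfl) hg_meas hg_at
  -- μL and μR as explicit functions
  have hμLfun : μL = fun t => (∫ x in (0:ℝ)..t, η x * f x) / F t := funext hμL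
  have hμRfun : μR = fun t => (∫ x in t..(1:ℝ), η x * f x) / (1 - F t) := funext hμR
  have hμL' : HasDerivAt μL ((η s * f s * F s - (∫ x in (0:ℝ)..s, η x * f x) * f s) / (F s)^2) s := by
    rw [hμLfun]; exact hB'.div hF' hFne
  have h1F' : HasDerivAt (fun t => 1 - F t) (-(f s)) s := by
    exact ((hasDerivAt_const s (1:ℝ)).sub hF').congr_deriv (by simp)
  have hμR' : HasDerivAt μR ((-(η s * f s) * (1 - F s) - (∫ x in s..(1:ℝ), η x * f x) * (-(f s))) / (1 - F s)^2) s := by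
    rw [hμRfun]; exact hC'.div h1F' h1Fne
  have hGfun : G = fun t => F t * (μL t - (μL t) ^ 2) + (1 - F t) * (μR t - (μR t) ^ 2) :=
    funext hG
  have hG' := (hF'.mul (hμL'.sub (hμL'.pow 2))).add
    (h1F'.mul (hμR'.sub (hμR'.pow 2)))
  rw [show (F * (μL - μL ^ 2) + (fun t => 1 - F t) * (μR - μR ^ 2)) = G from hGfun.symm] at hG'
  simp only [Pi.sub_apply, Pi.pow_apply, Nat.cast_ofNat, show (2:ℕ) - 1 = 1 from rfl, pow_one] at hG'
  refine hG'.congr_deriv ?_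
  have hLs := hμL s
  have hRs := hμR s
  set B := ∫ x in (0:ℝ)..s, η x * f x
  set C := ∫ x in s..(1:ℝ), η x * f x
  rw [hLs, hRs]
  field_simp
  ring
end

section
/- Suppose s₀ ∈ (0,1) satisfies μ_L(s₀) = μ_R(s₀). Then G(s₀) = E − E² where E = ∫₀¹ η(x) f(x) dx, and G(s₀) ≥ G(s) for every s ∈ (0,1) (s₀ is a global maximizer of G). If moreover η is not constant on [0,1], then there exists s' ∈ (0,1) with G(s') < G(s₀); hence no split point with equal node means can minimize the CART criterion. -/
open Set MeasureTheory intervalIntegral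

/-- Suppose `s₀ ∈ (0,1)` satisfies `μL s₀ = μR s₀`. Then
`G s₀ = E - E²` where `E = ∫₀¹ η x * f x dx`, and `G s₀ ≥ G s` for every `s ∈ (0,1)`
(`s₀` is a global maximizer of `G`). If moreover `η` is not constant on `[0,1]`,
then there exists `s' ∈ (0,1)` with `G s' < G s₀`; hence no split point with equal
node means can minimize the CART criterion. -/
theorem equal_node_means_not_minimizer
    (f η : ℝ → ℝ)
    (hf_cont : ContinuousOn f (Set.Icc 0 1))
    (hf_pos : ∀ x ∈ Set.Icc (0:ℝ) 1, 0 < f x)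
    (hf_prob : (∫ x in (0:ℝ)..1, f x) = 1)
    (hη_cont : ContinuousOn η (Set.Icc 0 1))
    (hη_mem : ∀ x ∈ Set.Icc (0:ℝ) 1, η x ∈ Set.Icc (0:ℝ) 1)
    (F μL μR G : ℝ → ℝ) (E : ℝ)
    (hF : ∀ s, F s = ∫ x in (0:ℝ)..s, f x)
    (hμL : ∀ s, μL s = (∫ x in (0:ℝ)..s, η x * f x) / F s)
    (hμR : ∀ s, μR s = (∫ x in s..(1:ℝ), η x * f x) / (1 - F s))
    (hG : ∀ s, G s = F s * (μL s - (μL s) ^ 2) + (1 - F s) * (μR s - (μR s) ^ 2))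
    (hE : E = ∫ x in (0:ℝ)..1, η x * f x)
    (s₀ : ℝ) (hs₀ : s₀ ∈ Set.Ioo (0:ℝ) 1)
    (heq : μL s₀ = μR s₀) :
    G s₀ = E - E ^ 2 ∧
    (∀ s ∈ Set.Ioo (0:ℝ) 1, G s ≤ G s₀) ∧
    ((∃ x ∈ Set.Icc (0:ℝ) 1, ∃ y ∈ Set.Icc (0:ℝ) 1, η x ≠ η y) →
      ∃ s' ∈ Set.Ioo (0:ℝ) 1, G s' < G s₀) := by
  have h0m : (0:ℝ) ∈ Icc (0:ℝ) 1 := by norm_num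
  have h1m : (1:ℝ) ∈ Icc (0:ℝ) 1 := by norm_num
  have hηf_cont : ContinuousOn (fun x => η x * f x) (Icc 0 1) := hη_cont.mul hf_cont
  have hfint : ∀ a b : ℝ, a ∈ Icc (0:ℝ) 1 → b ∈ Icc (0:ℝ) 1 →
      IntervalIntegrable f volume a b :=
    fun a b ha hb => (hf_cont.mono (uIcc_subset_Icc ha hb)).intervalIntegrable
  have hηfint : ∀ a b : ℝ, a ∈ Icc (0:ℝ) 1 → b ∈ Icc (0:ℝ) 1 →
      IntervalIntegrable (fun x => η x * f x) volume a b :=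
    fun a b ha hb => (hηf_cont.mono (uIcc_subset_Icc ha hb)).intervalIntegrable
  set H : ℝ → ℝ := fun s => ∫ x in (0:ℝ)..s, η x * f x with hHdef
  have hsplitF : ∀ s ∈ Icc (0:ℝ) 1, F s + (∫ x in s..(1:ℝ), f x) = 1 := by
    intro s hs
    rw [hF s, integral_add_adjacent_intervals (hfint 0 s h0m hs) (hfint s 1 hs h1m), hf_prob]
  have hsplitH : ∀ s ∈ Icc (0:ℝ) 1, (∫ x in s..(1:ℝ), η x * f x) = E - H s := by
    intro s hs
    have := integral_add_adjacent_intervals (hηfint 0 s h0m hs) (hηfint s 1 hs h1m)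
    rw [← hE] at this
    simp only [hHdef]
    linarith [this]
  have hFpos : ∀ s ∈ Ioo (0:ℝ) 1, 0 < F s := by
    intro s hs
    rw [hF s]
    apply intervalIntegral_pos_of_pos_on (hfint 0 s h0m (Ioo_subset_Icc_self hs))
    · exact fun x hx => hf_pos x ⟨hx.1.le, hx.2.le.trans hs.2.le⟩
    · exact hs.1
  have hFlt : ∀ s ∈ Ioo (0:ℝ) 1, F s < 1 := by
    intro s hs
    have hpos : 0 < ∫ x in s..(1:ℝ), f x := by
      apply intervalIntegral_pos_of_pos_on (hfint s 1 (Ioo_subset_Icc_self hs) h1m)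
      · exact fun x hx => hf_pos x ⟨hs.1.le.trans hx.1.le, hx.2.le⟩
      · exact hs.2
    linarith [hsplitF s (Ioo_subset_Icc_self hs)]
  -- key identity
  have key : ∀ s ∈ Ioo (0:ℝ) 1,
      G s = (E - E ^ 2) - (H s - E * F s) ^ 2 / (F s * (1 - F s)) := by
    intro s hs
    have hp := hFpos s hs
    have hq : 0 < 1 - F s := by linarith [hFlt s hs]
    rw [hG s, hμL s, hμR s, hsplitH s (Ioo_subset_Icc_self hs)]
    have hHs : (∫ x in (0:ℝ)..s, η x * f x) = H s := rfl
    rw [hHs]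
    field_simp
    ring
  -- H s₀ = E * F s₀
  have hp₀ := hFpos s₀ hs₀
  have hq₀ : 0 < 1 - F s₀ := by linarith [hFlt s₀ hs₀]
  have ha₀ : H s₀ = E * F s₀ := by
    have h := heq
    rw [hμL s₀, hμR s₀, hsplitH s₀ (Ioo_subset_Icc_self hs₀)] at h
    have hHs : (∫ x in (0:ℝ)..s₀, η x * f x) = H s₀ := rfl
    rw [hHs] at h
    field_simp at h
    nlinarith [h]
  have part1 : G s₀ = E - E ^ 2 := by
    rw [key s₀ hs₀, ha₀]
    simp
  have part2 : ∀ s ∈ Ioo (0:ℝ) 1, G s ≤ G s₀ := by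
    intro s hs
    rw [key s hs, part1]
    have hp := hFpos s hs
    have hq : 0 < 1 - F s := by linarith [hFlt s hs]
    have := div_nonneg (sq_nonneg (H s - E * F s)) (mul_pos hp hq).le
    linarith
  refine ⟨part1, part2, ?_⟩
  rintro ⟨x, hx, y, hy, hxy⟩
  by_contra hcon
  push_neg at hcon
  -- then H s = E * F s for all s ∈ Ioo 0 1
  have hHs : ∀ s ∈ Ioo (0:ℝ) 1, H s = E * F s := by
    intro s hs
    have h1 := hcon s hs
    have h2 := part2 s hs
    have h3 : G s = G s₀ := le_antisymm h2 h1
    rw [key s hs, part1] at h3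
    have hp := hFpos s hs
    have hq : 0 < 1 - F s := by linarith [hFlt s hs]
    have h4 : (H s - E * F s) ^ 2 / (F s * (1 - F s)) = 0 := by linarith
    have h5 : (H s - E * F s) ^ 2 = 0 := by
      rcases div_eq_zero_iff.mp h4 with h | h
      · exact h
      · nlinarith
    have := pow_eq_zero_iff (n := 2) (by norm_num) |>.mp h5
    linarith
  -- η = E on Ioo 0 1 via FTC
  have hψ_cont : ContinuousOn (fun x => η x * f x - E * f x) (Icc 0 1) :=
    hηf_cont.sub (continuousOn_const.mul hf_cont)
  have hΦeq : ∀ u ∈ Icc (0:ℝ) 1,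
      (∫ x in (0:ℝ)..u, (η x * f x - E * f x)) = H u - E * F u := by
    intro u hu
    rw [integral_sub (hηfint 0 u h0m hu)
      ((hfint 0 u h0m hu).const_mul E), intervalIntegral.integral_const_mul, hF u]
  have hηIoo : ∀ s ∈ Ioo (0:ℝ) 1, η s = E := by
    intro s hs
    have hIccnhds : Icc (0:ℝ) 1 ∈ nhds s := Icc_mem_nhds hs.1 hs.2
    have hcont : ContinuousAt (fun x => η x * f x - E * f x) s :=
      (hψ_cont.continuousAt hIccnhds)
    have hmeas : StronglyMeasurableAtFilter (fun x => η x * f x - E * f x) (nhds s) volume :=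
      ContinuousOn.stronglyMeasurableAtFilter isOpen_Ioo
        (hψ_cont.mono Ioo_subset_Icc_self) s hs
    have hint : IntervalIntegrable (fun x => η x * f x - E * f x) volume 0 s :=
      ((hηfint 0 s h0m (Ioo_subset_Icc_self hs)).sub
        ((hfint 0 s h0m (Ioo_subset_Icc_self hs)).const_mul E))
    have hd : HasDerivAt (fun u => ∫ x in (0:ℝ)..u, (η x * f x - E * f x))
        (η s * f s - E * f s) s :=
      integral_hasDerivAt_right hint hmeas hcont
    -- the function is eventually 0 near s
    have hev : (fun u => ∫ x in (0:ℝ)..u, (η x * f x - E * f x)) =ᶠ[nhds s] fun _ => 0 := by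
      filter_upwards [isOpen_Ioo.mem_nhds hs] with u hu
      rw [hΦeq u (Ioo_subset_Icc_self hu), hHs u hu]
      ring
    have hd0 : HasDerivAt (fun u => ∫ x in (0:ℝ)..u, (η x * f x - E * f x)) 0 s :=
      (hasDerivAt_const s (0:ℝ)).congr_of_eventuallyEq hev
    have huniq : η s * f s - E * f s = 0 := hd.unique hd0
    have hfpos := hf_pos s (Ioo_subset_Icc_self hs)
    have : (η s - E) * f s = 0 := by linarith [huniq]
    rcases mul_eq_zero.mp this with h | h
    · linarith
    · linarith
  -- extend to endpoints by continuity
  have hne01 : (0:ℝ) ≠ 1 := by norm_num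
  have hclos : closure (Ioo (0:ℝ) 1) = Icc 0 1 := closure_Ioo hne01
  have hend : ∀ z ∈ Icc (0:ℝ) 1, η z = E := by
    intro z hz
    have hmem : z ∈ closure (Ioo (0:ℝ) 1) := by rw [hclos]; exact hz
    have hNB : (nhdsWithin z (Ioo (0:ℝ) 1)).NeBot :=
      mem_closure_iff_nhdsWithin_neBot.mp hmem
    have t1 : Filter.Tendsto η (nhdsWithin z (Ioo (0:ℝ) 1)) (nhds (η z)) :=
      (hη_cont z hz).mono_left (nhdsWithin_mono _ Ioo_subset_Icc_self)
    have t2 : Filter.Tendsto η (nhdsWithin z (Ioo (0:ℝ) 1)) (nhds E) := by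
      apply Filter.Tendsto.congr' _ tendsto_const_nhds
      filter_upwards [self_mem_nhdsWithin] with u hu
      exact (hηIoo u hu).symm
    exact tendsto_nhds_unique t1 t2
  exact hxy ((hend x hx).trans (hend y hy).symm)
end

section
/- (Midpoint property of the CART split) Suppose η is not constant on [0,1]. If s° ∈ (0,1) satisfies G(s°) ≤ G(s) for all s ∈ (0,1) (i.e., s° minimizes the CART criterion over (0,1)), then μ_L(s°) ≠ μ_R(s°) and 2η(s°) = μ_L(s°) + μ_R(s°), i.e., the value of η at the optimal split equals the average of the two node means. -/
open Set MeasureTheory intervalIntegral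

/-- Midpoint property of the CART split: Suppose `η` is not constant on
`[0,1]`. If `s° ∈ (0,1)` satisfies `G s° ≤ G s` for all `s ∈ (0,1)` (i.e., `s°`
minimizes the CART criterion over `(0,1)`), then `μL s° ≠ μR s°` and
`2 * η s° = μL s° + μR s°`. -/
theorem cart_minimizer_midpoint_property
    (f η : ℝ → ℝ)
    (hf_cont : ContinuousOn f (Set.Icc 0 1))
    (hf_pos : ∀ x ∈ Set.Icc (0:ℝ) 1, 0 < f x)
    (hf_prob : (∫ x in (0:ℝ)..1, f x) = 1)
    (hη_cont : ContinuousOn η (Set.Icc 0 1))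
    (hη_mem : ∀ x ∈ Set.Icc (0:ℝ) 1, η x ∈ Set.Icc (0:ℝ) 1)
    (hη_nonconst : ∃ x ∈ Set.Icc (0:ℝ) 1, ∃ y ∈ Set.Icc (0:ℝ) 1, η x ≠ η y)
    (F μL μR G : ℝ → ℝ)
    (hF : ∀ s, F s = ∫ x in (0:ℝ)..s, f x)
    (hμL : ∀ s, μL s = (∫ x in (0:ℝ)..s, η x * f x) / F s)
    (hμR : ∀ s, μR s = (∫ x in s..(1:ℝ), η x * f x) / (1 - F s))
    (hG : ∀ s, G s = F s * (μL s - (μL s) ^ 2) + (1 - F s) * (μR s - (μR s) ^ 2))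
    (s₀ : ℝ) (hs₀ : s₀ ∈ Set.Ioo (0:ℝ) 1)
    (hmin : ∀ s ∈ Set.Ioo (0:ℝ) 1, G s₀ ≤ G s) :
    μL s₀ ≠ μR s₀ ∧ 2 * η s₀ = μL s₀ + μR s₀ := by
  obtain ⟨hs0, hs1⟩ := hs₀
  have hs₀mem : s₀ ∈ Set.Icc (0:ℝ) 1 := ⟨hs0.le, hs1.le⟩
  -- basic continuity / integrability
  have hηf_cont : ContinuousOn (fun x => η x * f x) (Set.Icc 0 1) := hη_cont.mul hf_cont
  have hf_int : ∀ a b, a ∈ Set.Icc (0:ℝ) 1 → b ∈ Set.Icc (0:ℝ) 1 →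
      IntervalIntegrable f volume a b := fun a b ha hb =>
    (hf_cont.mono (Set.uIcc_subset_Icc ha hb)).intervalIntegrable
  have hηf_int : ∀ a b, a ∈ Set.Icc (0:ℝ) 1 → b ∈ Set.Icc (0:ℝ) 1 →
      IntervalIntegrable (fun x => η x * f x) volume a b := fun a b ha hb =>
    (hηf_cont.mono (Set.uIcc_subset_Icc ha hb)).intervalIntegrable
  set A : ℝ → ℝ := fun s => ∫ x in (0:ℝ)..s, η x * f x with hAdef
  set T : ℝ := ∫ x in (0:ℝ)..1, η x * f x with hTdef
  -- splitting of integrals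
  have hAsplit : ∀ s ∈ Set.Icc (0:ℝ) 1, (∫ x in s..(1:ℝ), η x * f x) = T - A s := by
    intro s hs
    have := intervalIntegral.integral_add_adjacent_intervals
      (hηf_int 0 s ⟨le_refl 0, zero_le_one⟩ hs) (hηf_int s 1 hs ⟨zero_le_one, le_refl 1⟩)
    simp only [hAdef, hTdef]
    linarith [this]
  have hFsplit : ∀ s ∈ Set.Icc (0:ℝ) 1, (∫ x in s..(1:ℝ), f x) = 1 - F s := by
    intro s hs
    have := intervalIntegral.integral_add_adjacent_intervals
      (hf_int 0 s ⟨le_refl 0, zero_le_one⟩ hs) (hf_int s 1 hs ⟨zero_le_one, le_refl 1⟩)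
    rw [hf_prob] at this
    rw [hF s]; linarith [this]
  -- positivity of F and 1 - F on (0,1)
  have hFpos : ∀ s ∈ Set.Ioo (0:ℝ) 1, 0 < F s := by
    intro s hs
    rw [hF s]
    apply intervalIntegral.intervalIntegral_pos_of_pos_on
      (hf_int 0 s ⟨le_refl 0, zero_le_one⟩ ⟨hs.1.le, hs.2.le⟩)
    · intro x hx; exact hf_pos x ⟨hx.1.le, hx.2.le.trans hs.2.le⟩
    · exact hs.1
  have hFlt : ∀ s ∈ Set.Ioo (0:ℝ) 1, F s < 1 := by
    intro s hs
    have h1 : 0 < ∫ x in s..(1:ℝ), f x := by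
      apply intervalIntegral.intervalIntegral_pos_of_pos_on
        (hf_int s 1 ⟨hs.1.le, hs.2.le⟩ ⟨zero_le_one, le_refl 1⟩)
      · intro x hx; exact hf_pos x ⟨hs.1.le.trans hx.1.le, hx.2.le⟩
      · exact hs.2
    have := hFsplit s ⟨hs.1.le, hs.2.le⟩
    linarith
  -- the key algebraic identity for G on (0,1)
  have hGid : ∀ s ∈ Set.Ioo (0:ℝ) 1, G s =
      T - T ^ 2 - (A s - T * F s) ^ 2 / (F s * (1 - F s)) := by
    intro s hs
    have hb0 : F s ≠ 0 := (hFpos s hs).ne'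
    have hb1 : 1 - F s ≠ 0 := by have := hFlt s hs; linarith
    rw [hG s, hμL s, hμR s, hAsplit s ⟨hs.1.le, hs.2.le⟩]
    rw [show (∫ x in (0:ℝ)..s, η x * f x) = A s from rfl]
    field_simp
    ring
  -- derivatives
  have hFd : ∀ s ∈ Set.Ioo (0:ℝ) 1, HasDerivAt F (f s) s := by
    intro s hs
    have hmem : Set.Icc (0:ℝ) 1 ∈ nhds s := Icc_mem_nhds hs.1 hs.2
    have h := intervalIntegral.integral_hasDerivAt_right
      (hf_int 0 s ⟨le_refl 0, zero_le_one⟩ ⟨hs.1.le, hs.2.le⟩)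
      ⟨Set.Icc 0 1, hmem, hf_cont.aestronglyMeasurable measurableSet_Icc⟩
      (hf_cont.continuousAt hmem)
    have hfun : F = fun u => ∫ x in (0:ℝ)..u, f x := funext hF
    rw [hfun]; exact h
  have hAd : ∀ s ∈ Set.Ioo (0:ℝ) 1, HasDerivAt A (η s * f s) s := by
    intro s hs
    have hmem : Set.Icc (0:ℝ) 1 ∈ nhds s := Icc_mem_nhds hs.1 hs.2
    exact intervalIntegral.integral_hasDerivAt_right
      (hηf_int 0 s ⟨le_refl 0, zero_le_one⟩ ⟨hs.1.le, hs.2.le⟩)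
      ⟨Set.Icc 0 1, hmem, hηf_cont.aestronglyMeasurable measurableSet_Icc⟩
      (hηf_cont.continuousAt hmem)
  -- local minimum gives derivative zero
  have hIoo_nhds : Set.Ioo (0:ℝ) 1 ∈ nhds s₀ := Ioo_mem_nhds hs0 hs1
  have hb0 : F s₀ ≠ 0 := (hFpos s₀ ⟨hs0, hs1⟩).ne'
  have hb1 : (1:ℝ) - F s₀ ≠ 0 := by have := hFlt s₀ ⟨hs0, hs1⟩; linarith
  have hv0 : F s₀ * (1 - F s₀) ≠ 0 := mul_ne_zero hb0 hb1
  have hHd : HasDerivAt (fun s => A s - T * F s) (η s₀ * f s₀ - T * f s₀) s₀ :=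
    (hAd s₀ ⟨hs0, hs1⟩).sub ((hFd s₀ ⟨hs0, hs1⟩).const_mul T)
  have hud : HasDerivAt (fun s => (A s - T * F s) ^ 2)
      ((2:ℕ) * (A s₀ - T * F s₀) ^ 1 * (η s₀ * f s₀ - T * f s₀)) s₀ := hHd.pow 2
  have hvd : HasDerivAt (fun s => F s * (1 - F s))
      (f s₀ * (1 - F s₀) + F s₀ * (0 - f s₀)) s₀ :=
    (hFd s₀ ⟨hs0, hs1⟩).mul ((hasDerivAt_const s₀ (1:ℝ)).sub (hFd s₀ ⟨hs0, hs1⟩))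
  have hφd : HasDerivAt (fun s => T - T ^ 2 - (A s - T * F s) ^ 2 / (F s * (1 - F s)))
      (0 - (((2:ℕ) * (A s₀ - T * F s₀) ^ 1 * (η s₀ * f s₀ - T * f s₀)) * (F s₀ * (1 - F s₀))
        - (A s₀ - T * F s₀) ^ 2 * (f s₀ * (1 - F s₀) + F s₀ * (0 - f s₀)))
        / (F s₀ * (1 - F s₀)) ^ 2) s₀ :=
    (hasDerivAt_const s₀ (T - T ^ 2)).sub (hud.div hvd hv0)
  have hGeq : G =ᶠ[nhds s₀] fun s => T - T ^ 2 - (A s - T * F s) ^ 2 / (F s * (1 - F s)) :=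
    Filter.eventually_of_mem hIoo_nhds (fun s hs => hGid s hs)
  have hGd : HasDerivAt G
      (0 - (((2:ℕ) * (A s₀ - T * F s₀) ^ 1 * (η s₀ * f s₀ - T * f s₀)) * (F s₀ * (1 - F s₀))
        - (A s₀ - T * F s₀) ^ 2 * (f s₀ * (1 - F s₀) + F s₀ * (0 - f s₀)))
        / (F s₀ * (1 - F s₀)) ^ 2) s₀ := hφd.congr_of_eventuallyEq hGeq
  have hlocmin : IsLocalMin G s₀ :=
    Filter.eventually_of_mem hIoo_nhds (fun s hs => hmin s hs)
  have hD0 : (0 - (((2:ℕ) * (A s₀ - T * F s₀) ^ 1 * (η s₀ * f s₀ - T * f s₀)) * (F s₀ * (1 - F s₀))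
        - (A s₀ - T * F s₀) ^ 2 * (f s₀ * (1 - F s₀) + F s₀ * (0 - f s₀)))
        / (F s₀ * (1 - F s₀)) ^ 2) = 0 := by
    rw [← hGd.deriv]; exact hlocmin.deriv_eq_zero
  -- from hD0 : numerator vanishes
  have hnum : ((2:ℝ) * (A s₀ - T * F s₀) * (η s₀ * f s₀ - T * f s₀)) * (F s₀ * (1 - F s₀))
      = (A s₀ - T * F s₀) ^ 2 * (f s₀ * (1 - F s₀) + F s₀ * (0 - f s₀)) := by
    have hv2 : (F s₀ * (1 - F s₀)) ^ 2 ≠ 0 := pow_ne_zero 2 hv0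
    field_simp at hD0
    push_cast at hD0
    linarith [hD0]
  -- case analysis on H s₀ = A s₀ - T * F s₀
  by_cases hH : A s₀ - T * F s₀ = 0
  · -- then G s₀ attains the maximal value T - T², so G is constant, η ≡ T: contradiction
    exfalso
    have hGs₀ : G s₀ = T - T ^ 2 := by
      rw [hGid s₀ ⟨hs0, hs1⟩, hH]; simp
    have hH0 : ∀ s ∈ Set.Ioo (0:ℝ) 1, A s - T * F s = 0 := by
      intro s hs
      have hvpos : 0 < F s * (1 - F s) :=
        mul_pos (hFpos s hs) (by have := hFlt s hs; linarith)
      have h1 := hmin s hs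
      rw [hGs₀, hGid s hs] at h1
      have h2 : (A s - T * F s) ^ 2 / (F s * (1 - F s)) ≤ 0 := by linarith
      have h3 : 0 ≤ (A s - T * F s) ^ 2 / (F s * (1 - F s)) :=
        div_nonneg (sq_nonneg _) hvpos.le
      have h4 := le_antisymm h2 h3
      field_simp at h4
      exact (pow_eq_zero_iff (n := 2) (by norm_num)).mp ((div_eq_zero_iff.mp h4).resolve_right hvpos.ne')
    have hηT : ∀ s ∈ Set.Ioo (0:ℝ) 1, η s = T := by
      intro s hs
      have hd1 : HasDerivAt (fun u => A u - T * F u) (η s * f s - T * f s) s :=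
        (hAd s hs).sub ((hFd s hs).const_mul T)
      have hd2 : HasDerivAt (fun u => A u - T * F u) 0 s := by
        have : (fun u => A u - T * F u) =ᶠ[nhds s] fun _ => (0:ℝ) :=
          Filter.eventually_of_mem (Ioo_mem_nhds hs.1 hs.2) (fun u hu => hH0 u hu)
        exact (hasDerivAt_const s (0:ℝ)).congr_of_eventuallyEq this
      have h5 : η s * f s - T * f s = 0 := hd1.unique hd2
      have hfp : 0 < f s := hf_pos s ⟨hs.1.le, hs.2.le⟩
      have : (η s - T) * f s = 0 := by ring_nf; linarith [h5]
      rcases mul_eq_zero.mp this with h | h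
      · linarith
      · exact absurd h hfp.ne'
    have hηconst : Set.EqOn η (fun _ => T) (Set.Icc 0 1) := by
      apply Set.EqOn.of_subset_closure (s := Set.Ioo (0:ℝ) 1)
        (fun s hs => hηT s hs) hη_cont continuousOn_const Ioo_subset_Icc_self
      rw [closure_Ioo (zero_ne_one)]
    obtain ⟨x, hx, y, hy, hxy⟩ := hη_nonconst
    exact hxy ((hηconst hx).trans (hηconst hy).symm)
  · -- main case: derive the midpoint property
    have hfp : 0 < f s₀ := hf_pos s₀ hs₀mem
    -- cancel f s₀ * (A s₀ - T * F s₀) in hnum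
    have hE : 2 * (η s₀ - T) * (F s₀ * (1 - F s₀)) = (A s₀ - T * F s₀) * (1 - 2 * F s₀) := by
      have hc : f s₀ * (A s₀ - T * F s₀) ≠ 0 := mul_ne_zero hfp.ne' hH
      apply mul_left_cancel₀ hc
      ring_nf
      ring_nf at hnum
      linarith [hnum]
    have hμRs : μR s₀ = (T - A s₀) / (1 - F s₀) := by
      rw [hμR s₀, hAsplit s₀ hs₀mem]
    constructor
    · rw [hμL s₀, hμRs]
      intro heq
      rw [div_eq_div_iff hb0 hb1] at heq
      apply hH
      rw [show (∫ x in (0:ℝ)..s₀, η x * f x) = A s₀ from rfl] at heq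
      nlinarith [heq]
    · rw [hμL s₀, hμRs]
      rw [show (∫ x in (0:ℝ)..s₀, η x * f x) = A s₀ from rfl]
      field_simp
      nlinarith [hE]
end

section
/- (Midpoint property of the knowledge-distillation CART split) Define the knowledge-distillation criterion G^KD(s) = F(s)·((∫₀^s η(x)² f(x) dx)/F(s) − μ_L(s)²) + (1 − F(s))·((∫_s^1 η(x)² f(x) dx)/(1 − F(s)) − μ_R(s)²) for s ∈ (0,1). Suppose η is not constant on [0,1]. If s° ∈ (0,1) satisfies G^KD(s°) ≤ G^KD(s) for all s ∈ (0,1), then μ_L(s°) ≠ μ_R(s°) and 2η(s°) = μ_L(s°) + μ_R(s°). -/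
open Set MeasureTheory intervalIntegral

/-- Midpoint property of the knowledge-distillation CART split: Define
`G^KD s = F s * ((∫₀^s η² f)/F s - μL s²) + (1 - F s) * ((∫_s^1 η² f)/(1 - F s) - μR s²)`
for `s ∈ (0,1)`. Suppose `η` is not constant on `[0,1]`. If `s° ∈ (0,1)` satisfies
`G^KD s° ≤ G^KD s` for all `s ∈ (0,1)`, then `μL s° ≠ μR s°` and
`2 * η s° = μL s° + μR s°`. -/
theorem kd_cart_minimizer_midpoint_property
    (f η : ℝ → ℝ)
    (hf_cont : ContinuousOn f (Set.Icc 0 1))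
    (hf_pos : ∀ x ∈ Set.Icc (0:ℝ) 1, 0 < f x)
    (hf_prob : (∫ x in (0:ℝ)..1, f x) = 1)
    (hη_cont : ContinuousOn η (Set.Icc 0 1))
    (hη_mem : ∀ x ∈ Set.Icc (0:ℝ) 1, η x ∈ Set.Icc (0:ℝ) 1)
    (hη_nonconst : ∃ x ∈ Set.Icc (0:ℝ) 1, ∃ y ∈ Set.Icc (0:ℝ) 1, η x ≠ η y)
    (F μL μR GKD : ℝ → ℝ)
    (hF : ∀ s, F s = ∫ x in (0:ℝ)..s, f x)
    (hμL : ∀ s, μL s = (∫ x in (0:ℝ)..s, η x * f x) / F s)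
    (hμR : ∀ s, μR s = (∫ x in s..(1:ℝ), η x * f x) / (1 - F s))
    (hGKD : ∀ s, GKD s =
        F s * ((∫ x in (0:ℝ)..s, (η x) ^ 2 * f x) / F s - (μL s) ^ 2) +
        (1 - F s) * ((∫ x in s..(1:ℝ), (η x) ^ 2 * f x) / (1 - F s) - (μR s) ^ 2))
    (s₀ : ℝ) (hs₀ : s₀ ∈ Set.Ioo (0:ℝ) 1)
    (hmin : ∀ s ∈ Set.Ioo (0:ℝ) 1, GKD s₀ ≤ GKD s) :
    μL s₀ ≠ μR s₀ ∧ 2 * η s₀ = μL s₀ + μR s₀ := by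
  -- basic integrability / FTC helpers
  have hInt : ∀ (g : ℝ → ℝ), ContinuousOn g (Icc 0 1) → ∀ a b : ℝ, a ∈ Icc (0:ℝ) 1 →
      b ∈ Icc (0:ℝ) 1 → IntervalIntegrable g volume a b := by
    intro g hg a b ha hb
    exact (hg.mono (uIcc_subset_Icc ha hb)).intervalIntegrable
  have hDeriv : ∀ (g : ℝ → ℝ), ContinuousOn g (Icc 0 1) → ∀ s ∈ Ioo (0:ℝ) 1,
      HasDerivAt (fun t => ∫ x in (0:ℝ)..t, g x) (g s) s := by
    intro g hg s hs
    exact intervalIntegral.integral_hasDerivAt_right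
      (hInt g hg 0 s ⟨le_refl _, zero_le_one⟩ ⟨hs.1.le, hs.2.le⟩)
      (ContinuousOn.stronglyMeasurableAtFilter isOpen_Ioo (hg.mono Ioo_subset_Icc_self) s hs)
      (hg.continuousAt (Icc_mem_nhds hs.1 hs.2))
  have hηf : ContinuousOn (fun x => η x * f x) (Icc 0 1) := hη_cont.mul hf_cont
  have hη2f : ContinuousOn (fun x => (η x)^2 * f x) (Icc 0 1) := (hη_cont.pow 2).mul hf_cont
  have hmemIoo : ∀ s ∈ Ioo (0:ℝ) 1, s ∈ Icc (0:ℝ) 1 := fun s hs => Ioo_subset_Icc_self hs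
  -- split (adjacent intervals) for any continuous g
  have hsplit : ∀ (g : ℝ → ℝ), ContinuousOn g (Icc 0 1) → ∀ s ∈ Ioo (0:ℝ) 1,
      (∫ x in s..(1:ℝ), g x) = (∫ x in (0:ℝ)..1, g x) - ∫ x in (0:ℝ)..s, g x := by
    intro g hg s hs
    have := integral_add_adjacent_intervals
      (hInt g hg 0 s ⟨le_refl _, zero_le_one⟩ (hmemIoo s hs))
      (hInt g hg s 1 (hmemIoo s hs) ⟨zero_le_one, le_refl _⟩)
    linarith
  set A1 : ℝ → ℝ := fun s => ∫ x in (0:ℝ)..s, η x * f x with hA1def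
  set M : ℝ := ∫ x in (0:ℝ)..1, η x * f x with hMdef
  set C : ℝ := ∫ x in (0:ℝ)..1, (η x)^2 * f x with hCdef
  -- F positivity
  have hFpos : ∀ s ∈ Ioo (0:ℝ) 1, 0 < F s := by
    intro s hs
    rw [hF s]
    exact intervalIntegral_pos_of_pos_on
      (hInt f hf_cont 0 s ⟨le_refl _, zero_le_one⟩ (hmemIoo s hs))
      (fun x hx => hf_pos x ⟨hx.1.le, hx.2.le.trans hs.2.le⟩) hs.1
  have hFlt : ∀ s ∈ Ioo (0:ℝ) 1, F s < 1 := by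
    intro s hs
    have hpos : 0 < ∫ x in s..(1:ℝ), f x :=
      intervalIntegral_pos_of_pos_on
        (hInt f hf_cont s 1 (hmemIoo s hs) ⟨zero_le_one, le_refl _⟩)
        (fun x hx => hf_pos x ⟨hs.1.le.trans hx.1.le, hx.2.le⟩) hs.2
    have hsum := hsplit f hf_cont s hs
    rw [hf_prob] at hsum
    rw [hF s]; linarith
  -- F derivative
  have hFd : ∀ s ∈ Ioo (0:ℝ) 1, HasDerivAt F (f s) s := by
    intro s hs
    have : F = fun t => ∫ x in (0:ℝ)..t, f x := funext hF
    rw [this]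
    exact hDeriv f hf_cont s hs
  have hA1d : ∀ s ∈ Ioo (0:ℝ) 1, HasDerivAt A1 (η s * f s) s := fun s hs =>
    hDeriv _ hηf s hs
  -- rewrite GKD in terms of φ
  set φ : ℝ → ℝ := fun s => (A1 s - M * F s)^2 / (F s * (1 - F s)) with hφdef
  have hGφ : ∀ s ∈ Ioo (0:ℝ) 1, GKD s = C - M^2 - φ s := by
    intro s hs
    have h1 : F s ≠ 0 := (hFpos s hs).ne'
    have h2 : 1 - F s ≠ 0 := by have := hFlt s hs; linarith
    have e1 : (∫ x in s..(1:ℝ), η x * f x) = M - A1 s := hsplit _ hηf s hs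
    have e2 : (∫ x in s..(1:ℝ), (η x)^2 * f x) = C - ∫ x in (0:ℝ)..s, (η x)^2 * f x :=
      hsplit _ hη2f s hs
    rw [hGKD s, hμL s, hμR s, e1, e2]
    simp only [hφdef, ← hA1def]
    field_simp
    ring
  have hmax : ∀ s ∈ Ioo (0:ℝ) 1, φ s ≤ φ s₀ := by
    intro s hs
    have := hmin s hs
    rw [hGφ s hs, hGφ s₀ hs₀] at this
    linarith
  have h1 : F s₀ ≠ 0 := (hFpos s₀ hs₀).ne'
  have h2 : 1 - F s₀ ≠ 0 := by have := hFlt s₀ hs₀; linarith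
  -- the key nondegeneracy: A1 s₀ - M * F s₀ ≠ 0
  have hd : A1 s₀ - M * F s₀ ≠ 0 := by
    intro hd0
    -- then φ s₀ = 0, hence φ ≡ 0 on Ioo, hence A1 = M * F on Ioo
    have hφ0 : φ s₀ = 0 := by simp [hφdef, hd0]
    have hzero : ∀ s ∈ Ioo (0:ℝ) 1, A1 s - M * F s = 0 := by
      intro s hs
      have hQ : 0 < F s * (1 - F s) := by
        have := hFpos s hs; have := hFlt s hs; nlinarith
      have hle : φ s ≤ 0 := hφ0 ▸ hmax s hs
      have hge : 0 ≤ φ s := div_nonneg (sq_nonneg _) hQ.le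
      have : φ s = 0 := le_antisymm hle hge
      have : (A1 s - M * F s)^2 = 0 := by
        have := (div_eq_zero_iff.mp this).resolve_right hQ.ne'
        exact this
      exact pow_eq_zero_iff (n := 2) (by norm_num) |>.mp this
    -- hence η = M on Ioo by differentiating
    have hηM : ∀ s ∈ Ioo (0:ℝ) 1, η s = M := by
      intro s hs
      have hDz : HasDerivAt (fun t => A1 t - M * F t) ((η s - M) * f s) s := by
        have := (hA1d s hs).sub ((hFd s hs).const_mul M)
        rw [show (η s - M) * f s = η s * f s - M * f s by ring]; exact this
      have heq : (fun t => A1 t - M * F t) =ᶠ[nhds s] (fun _ => (0:ℝ)) := by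
        filter_upwards [Ioo_mem_nhds hs.1 hs.2] with t ht
        exact hzero t ht
      have hDz' : HasDerivAt (fun _ : ℝ => (0:ℝ)) ((η s - M) * f s) s :=
        hDz.congr_of_eventuallyEq heq.symm
      have : (η s - M) * f s = 0 := hDz'.unique (hasDerivAt_const s 0)
      have hfs : f s ≠ 0 := (hf_pos s (hmemIoo s hs)).ne'
      have : η s - M = 0 := by
        rcases mul_eq_zero.mp this with h | h
        · exact h
        · exact absurd h hfs
      linarith
    -- continuity extends to Icc, contradicting nonconstancy
    have hEq : EqOn η (fun _ => M) (Icc (0:ℝ) 1) := by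
      have := Set.EqOn.of_subset_closure (s := Ioo (0:ℝ) 1) (t := Icc (0:ℝ) 1)
        (fun x hx => hηM x hx) hη_cont continuousOn_const Ioo_subset_Icc_self
        (by rw [closure_Ioo (zero_ne_one)])
      exact this
    obtain ⟨x, hx, y, hy, hxy⟩ := hη_nonconst
    exact hxy (by rw [hEq hx, hEq hy])
  -- first conclusion
  have hμLR : μL s₀ ≠ μR s₀ := by
    intro heq
    apply hd
    rw [hμL s₀, hμR s₀, hsplit _ hηf s₀ hs₀] at heq
    rw [show (∫ x in (0:ℝ)..s₀, η x * f x) = A1 s₀ from rfl,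
        show (∫ x in (0:ℝ)..1, η x * f x) = M from rfl] at heq
    field_simp at heq
    linarith
  refine ⟨hμLR, ?_⟩
  -- local max of φ at s₀, derivative zero
  have hnum : HasDerivAt (fun s => (A1 s - M * F s)^2)
      ((2:ℕ) * (A1 s₀ - M * F s₀)^1 * ((η s₀ - M) * f s₀)) s₀ := by
    have hD : HasDerivAt (fun t => A1 t - M * F t) ((η s₀ - M) * f s₀) s₀ := by
      have := (hA1d s₀ hs₀).sub ((hFd s₀ hs₀).const_mul M)
      rw [show (η s₀ - M) * f s₀ = η s₀ * f s₀ - M * f s₀ by ring]; exact this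
    exact hD.pow 2
  have hden : HasDerivAt (fun s => F s * (1 - F s))
      (f s₀ * (1 - F s₀) + F s₀ * (0 - f s₀)) s₀ :=
    (hFd s₀ hs₀).mul ((hasDerivAt_const s₀ 1).sub (hFd s₀ hs₀))
  have hQne : F s₀ * (1 - F s₀) ≠ 0 := mul_ne_zero h1 h2
  have hφd : HasDerivAt φ
      (((2:ℕ) * (A1 s₀ - M * F s₀)^1 * ((η s₀ - M) * f s₀) * (F s₀ * (1 - F s₀)) -
        (A1 s₀ - M * F s₀)^2 * (f s₀ * (1 - F s₀) + F s₀ * (0 - f s₀))) /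
        (F s₀ * (1 - F s₀))^2) s₀ := hnum.div hden hQne
  have hlocmax : IsLocalMax φ s₀ := by
    filter_upwards [Ioo_mem_nhds hs₀.1 hs₀.2] with t ht
    exact hmax t ht
  have hzero := hlocmax.hasDerivAt_eq_zero hφd
  have hnum0 : (2:ℝ) * (A1 s₀ - M * F s₀) * ((η s₀ - M) * f s₀) * (F s₀ * (1 - F s₀)) -
      (A1 s₀ - M * F s₀)^2 * (f s₀ * (1 - F s₀) + F s₀ * (0 - f s₀)) = 0 := by
    have hQ2 : (F s₀ * (1 - F s₀))^2 ≠ 0 := pow_ne_zero 2 hQne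
    have := (div_eq_zero_iff.mp hzero).resolve_right hQ2
    push_cast at this
    linarith [this]
  -- extract the key cancelled identity
  have hfs₀ : (0:ℝ) < f s₀ := hf_pos s₀ (hmemIoo s₀ hs₀)
  have key : 2 * (η s₀ - M) * (F s₀ * (1 - F s₀)) = (A1 s₀ - M * F s₀) * (1 - 2 * F s₀) := by
    have hfac : (A1 s₀ - M * F s₀) * f s₀ *
        (2 * (η s₀ - M) * (F s₀ * (1 - F s₀)) - (A1 s₀ - M * F s₀) * (1 - 2 * F s₀)) = 0 := by
      linear_combination hnum0
    have h3 : (A1 s₀ - M * F s₀) * f s₀ ≠ 0 := mul_ne_zero hd hfs₀.ne'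
    have := (mul_eq_zero.mp hfac).resolve_left h3
    linarith
  -- final algebra
  rw [hμL s₀, hμR s₀, hsplit _ hηf s₀ hs₀,
      show (∫ x in (0:ℝ)..s₀, η x * f x) = A1 s₀ from rfl,
      show (∫ x in (0:ℝ)..1, η x * f x) = M from rfl]
  field_simp
  linear_combination key
end

section
/- (Existence of a threshold-crossing split) Let s° ∈ (0,1) and c ∈ (0,1) satisfy min(μ_L(s°), μ_R(s°)) ≤ c ≤ max(μ_L(s°), μ_R(s°)), μ_L(s°) ≠ μ_R(s°) and η(s°) ≠ c. If (η(s°) − c)·(μ_R(s°) − μ_L(s°)) > 0, then there exists s ∈ [0, s°) with η(s) = c; if (η(s°) − c)·(μ_R(s°) − μ_L(s°)) < 0, then there exists s ∈ (s°, 1] with η(s) = c. -/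
open Set MeasureTheory intervalIntegral

private lemma ipos (g : ℝ → ℝ) (a b : ℝ) (hab : a < b)
    (hg : ContinuousOn g (Set.Icc a b)) (hpos : ∀ x ∈ Set.Icc a b, 0 < g x) :
    0 < ∫ x in a..b, g x := by
  apply intervalIntegral.intervalIntegral_pos_of_pos_on
  · exact hg.intervalIntegrable_of_Icc hab.le
  · intro x hx; exact hpos x ⟨hx.1.le, hx.2.le⟩
  · exact hab

private lemma left_cross (f η : ℝ → ℝ) (c : ℝ)
    (hf_cont : ContinuousOn f (Set.Icc 0 1)) (hf_pos : ∀ x ∈ Set.Icc (0:ℝ) 1, 0 < f x)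
    (hη_cont : ContinuousOn η (Set.Icc 0 1))
    (s₀ : ℝ) (hs₀ : s₀ ∈ Set.Ioo (0:ℝ) 1)
    (hμ : (∫ x in (0:ℝ)..s₀, η x * f x) ≤ c * ∫ x in (0:ℝ)..s₀, f x)
    (hη : c < η s₀) : ∃ s ∈ Set.Ico (0:ℝ) s₀, η s = c := by
  have hsub : Set.Icc (0:ℝ) s₀ ⊆ Set.Icc 0 1 := Set.Icc_subset_Icc le_rfl hs₀.2.le
  have hfc : ContinuousOn f (Set.Icc 0 s₀) := hf_cont.mono hsub
  have hηc : ContinuousOn η (Set.Icc 0 s₀) := hη_cont.mono hsub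
  have hx : ∃ x ∈ Set.Icc (0:ℝ) s₀, η x ≤ c := by
    by_contra h
    push_neg at h
    have h1 : 0 < ∫ x in (0:ℝ)..s₀, (η x - c) * f x := by
      apply ipos _ _ _ hs₀.1 (((hηc.sub continuousOn_const)).mul hfc)
      intro x hx
      exact mul_pos (sub_pos.2 (h x hx)) (hf_pos x (hsub hx))
    have int1 : IntervalIntegrable (fun x => η x * f x) volume 0 s₀ :=
      (hηc.mul hfc).intervalIntegrable_of_Icc hs₀.1.le
    have int2 : IntervalIntegrable (fun x => c * f x) volume 0 s₀ :=
      (continuousOn_const.mul hfc).intervalIntegrable_of_Icc hs₀.1.le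
    have h2 : ∫ x in (0:ℝ)..s₀, (η x - c) * f x =
        (∫ x in (0:ℝ)..s₀, η x * f x) - c * ∫ x in (0:ℝ)..s₀, f x := by
      have : ∀ x, (η x - c) * f x = η x * f x - c * f x := fun x => by ring
      simp_rw [this]
      rw [intervalIntegral.integral_sub int1 int2, intervalIntegral.integral_const_mul]
    linarith
  obtain ⟨x, hx1, hx2⟩ := hx
  have hcont : ContinuousOn η (Set.Icc x s₀) := hηc.mono (Set.Icc_subset_Icc hx1.1 le_rfl)
  obtain ⟨s, hs, hsc⟩ := intermediate_value_Icc hx1.2 hcont ⟨hx2, hη.le⟩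
  refine ⟨s, ⟨le_trans hx1.1 hs.1, lt_of_le_of_ne hs.2 ?_⟩, hsc⟩
  rintro rfl
  exact hη.ne' hsc

private lemma right_cross (f η : ℝ → ℝ) (c : ℝ)
    (hf_cont : ContinuousOn f (Set.Icc 0 1)) (hf_pos : ∀ x ∈ Set.Icc (0:ℝ) 1, 0 < f x)
    (hη_cont : ContinuousOn η (Set.Icc 0 1))
    (s₀ : ℝ) (hs₀ : s₀ ∈ Set.Ioo (0:ℝ) 1)
    (hμ : (∫ x in s₀..(1:ℝ), η x * f x) ≤ c * ∫ x in s₀..(1:ℝ), f x)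
    (hη : c < η s₀) : ∃ s ∈ Set.Ioc s₀ (1:ℝ), η s = c := by
  have hsub : Set.Icc s₀ (1:ℝ) ⊆ Set.Icc 0 1 := Set.Icc_subset_Icc hs₀.1.le le_rfl
  have hfc : ContinuousOn f (Set.Icc s₀ 1) := hf_cont.mono hsub
  have hηc : ContinuousOn η (Set.Icc s₀ 1) := hη_cont.mono hsub
  have hx : ∃ x ∈ Set.Icc s₀ (1:ℝ), η x ≤ c := by
    by_contra h
    push_neg at h
    have h1 : 0 < ∫ x in s₀..(1:ℝ), (η x - c) * f x := by
      apply ipos _ _ _ hs₀.2 (((hηc.sub continuousOn_const)).mul hfc)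
      intro x hx
      exact mul_pos (sub_pos.2 (h x hx)) (hf_pos x (hsub hx))
    have int1 : IntervalIntegrable (fun x => η x * f x) volume s₀ 1 :=
      (hηc.mul hfc).intervalIntegrable_of_Icc hs₀.2.le
    have int2 : IntervalIntegrable (fun x => c * f x) volume s₀ 1 :=
      (continuousOn_const.mul hfc).intervalIntegrable_of_Icc hs₀.2.le
    have h2 : ∫ x in s₀..(1:ℝ), (η x - c) * f x =
        (∫ x in s₀..(1:ℝ), η x * f x) - c * ∫ x in s₀..(1:ℝ), f x := by
      have : ∀ x, (η x - c) * f x = η x * f x - c * f x := fun x => by ring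
      simp_rw [this]
      rw [intervalIntegral.integral_sub int1 int2, intervalIntegral.integral_const_mul]
    linarith
  obtain ⟨x, hx1, hx2⟩ := hx
  have hcont : ContinuousOn η (Set.Icc s₀ x) := hηc.mono (Set.Icc_subset_Icc le_rfl hx1.2)
  obtain ⟨s, hs, hsc⟩ := intermediate_value_Icc' hx1.1 hcont ⟨hx2, hη.le⟩
  refine ⟨s, ⟨lt_of_le_of_ne hs.1 ?_, le_trans hs.2 hx1.2⟩, hsc⟩
  rintro rfl
  exact hη.ne' hsc

/-- Existence of a threshold-crossing split: Let `s° ∈ (0,1)` and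
`c ∈ (0,1)` satisfy `min (μL s°) (μR s°) ≤ c ≤ max (μL s°) (μR s°)`,
`μL s° ≠ μR s°` and `η s° ≠ c`. If `(η s° - c) * (μR s° - μL s°) > 0`, then there
exists `s ∈ [0, s°)` with `η s = c`; if `(η s° - c) * (μR s° - μL s°) < 0`, then
there exists `s ∈ (s°, 1]` with `η s = c`. -/
theorem exists_threshold_crossing_split
    (f η : ℝ → ℝ) (c : ℝ) (hc : c ∈ Set.Ioo (0:ℝ) 1)
    (hf_cont : ContinuousOn f (Set.Icc 0 1))
    (hf_pos : ∀ x ∈ Set.Icc (0:ℝ) 1, 0 < f x)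
    (hf_prob : (∫ x in (0:ℝ)..1, f x) = 1)
    (hη_cont : ContinuousOn η (Set.Icc 0 1))
    (hη_mem : ∀ x ∈ Set.Icc (0:ℝ) 1, η x ∈ Set.Icc (0:ℝ) 1)
    (F μL μR : ℝ → ℝ)
    (hF : ∀ s, F s = ∫ x in (0:ℝ)..s, f x)
    (hμL : ∀ s, μL s = (∫ x in (0:ℝ)..s, η x * f x) / F s)
    (hμR : ∀ s, μR s = (∫ x in s..(1:ℝ), η x * f x) / (1 - F s))
    (s₀ : ℝ) (hs₀ : s₀ ∈ Set.Ioo (0:ℝ) 1)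
    (hcmin : min (μL s₀) (μR s₀) ≤ c) (hcmax : c ≤ max (μL s₀) (μR s₀))
    (hne : μL s₀ ≠ μR s₀) (hηc : η s₀ ≠ c) :
    ((η s₀ - c) * (μR s₀ - μL s₀) > 0 → ∃ s ∈ Set.Ico (0:ℝ) s₀, η s = c) ∧
    ((η s₀ - c) * (μR s₀ - μL s₀) < 0 → ∃ s ∈ Set.Ioc s₀ (1:ℝ), η s = c) := by
  have hsubL : Set.Icc (0:ℝ) s₀ ⊆ Set.Icc 0 1 := Set.Icc_subset_Icc le_rfl hs₀.2.le
  have hsubR : Set.Icc s₀ (1:ℝ) ⊆ Set.Icc 0 1 := Set.Icc_subset_Icc hs₀.1.le le_rfl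
  -- F s₀ > 0
  have hFs : F s₀ = ∫ x in (0:ℝ)..s₀, f x := hF s₀
  have hF0 : 0 < F s₀ := by
    rw [hFs]
    exact ipos f 0 s₀ hs₀.1 (hf_cont.mono hsubL) (fun x hx => hf_pos x (hsubL hx))
  -- 1 - F s₀ = ∫_{s₀}^1 f > 0
  have intL : IntervalIntegrable f volume 0 s₀ :=
    (hf_cont.mono hsubL).intervalIntegrable_of_Icc hs₀.1.le
  have intR : IntervalIntegrable f volume s₀ 1 :=
    (hf_cont.mono hsubR).intervalIntegrable_of_Icc hs₀.2.le
  have hFR : 1 - F s₀ = ∫ x in s₀..(1:ℝ), f x := by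
    have := intervalIntegral.integral_add_adjacent_intervals intL intR
    rw [hf_prob] at this
    rw [hFs]; linarith
  have hF1 : 0 < 1 - F s₀ := by
    rw [hFR]
    exact ipos f s₀ 1 hs₀.2 (hf_cont.mono hsubR) (fun x hx => hf_pos x (hsubR hx))
  -- translate μL, μR inequalities
  have hμLs := hμL s₀
  have hμRs := hμR s₀
  have hLle : μL s₀ ≤ c ↔ (∫ x in (0:ℝ)..s₀, η x * f x) ≤ c * F s₀ := by
    rw [hμLs, div_le_iff₀ hF0]
  have hLge : c ≤ μL s₀ ↔ c * F s₀ ≤ ∫ x in (0:ℝ)..s₀, η x * f x := by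
    rw [hμLs, le_div_iff₀ hF0]
  have hRle : μR s₀ ≤ c ↔ (∫ x in s₀..(1:ℝ), η x * f x) ≤ c * (1 - F s₀) := by
    rw [hμRs, div_le_iff₀ hF1]
  have hRge : c ≤ μR s₀ ↔ c * (1 - F s₀) ≤ ∫ x in s₀..(1:ℝ), η x * f x := by
    rw [hμRs, le_div_iff₀ hF1]
  have hηnc : ContinuousOn (fun x => -η x) (Set.Icc (0:ℝ) 1) := hη_cont.neg
  have hnegL : (∫ x in (0:ℝ)..s₀, -η x * f x) = -(∫ x in (0:ℝ)..s₀, η x * f x) := by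
    simp_rw [neg_mul]
    rw [intervalIntegral.integral_neg]
  have hnegR : (∫ x in s₀..(1:ℝ), -η x * f x) = -(∫ x in s₀..(1:ℝ), η x * f x) := by
    simp_rw [neg_mul]
    rw [intervalIntegral.integral_neg]
  constructor
  · intro hprod
    rcases lt_or_gt_of_ne hηc with hlt | hgt
    · -- η s₀ < c, so μL > μR, hence max = μL and c ≤ μL
      have hML : μR s₀ < μL s₀ := by nlinarith
      have hmaxL : c ≤ μL s₀ := by
        rw [max_eq_left hML.le] at hcmax; exact hcmax
      obtain ⟨s, hs, hsc⟩ := left_cross f (fun x => -η x) (-c) hf_cont hf_pos hηnc s₀ hs₀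
        (by
          rw [hnegL, ← hFs]
          have := hLge.mp hmaxL
          linarith)
        (by simpa using hlt)
      exact ⟨s, hs, neg_inj.mp hsc⟩
    · -- η s₀ > c, so μL < μR, min = μL ≤ c
      have hML : μL s₀ < μR s₀ := by nlinarith
      have hminL : μL s₀ ≤ c := by
        rw [min_eq_left hML.le] at hcmin; exact hcmin
      exact left_cross f η c hf_cont hf_pos hη_cont s₀ hs₀ (by rw [← hFs]; exact hLle.mp hminL) hgt
  · intro hprod
    rcases lt_or_gt_of_ne hηc with hlt | hgt
    · -- η s₀ < c, μR > μL, hence max = μR ≥ c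
      have hML : μL s₀ < μR s₀ := by nlinarith
      have hmaxR : c ≤ μR s₀ := by
        rw [max_eq_right hML.le] at hcmax; exact hcmax
      obtain ⟨s, hs, hsc⟩ := right_cross f (fun x => -η x) (-c) hf_cont hf_pos hηnc s₀ hs₀
        (by
          rw [hnegR, ← hFR]
          have := hRge.mp hmaxR
          linarith)
        (by simpa using hlt)
      exact ⟨s, hs, neg_inj.mp hsc⟩
    · -- η s₀ > c, μR < μL, min = μR ≤ c
      have hML : μR s₀ < μL s₀ := by nlinarith
      have hminR : μR s₀ ≤ c := by
        rw [min_eq_right hML.le] at hcmin; exact hcmin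
      exact right_cross f η c hf_cont hf_pos hη_cont s₀ hs₀ (by rw [← hFR]; exact hRle.mp hminR) hgt
end

section
/- (Preservation of node-mean ordering) Let s° ∈ (0,1) and c ∈ (0,1) satisfy μ_L(s°) ≤ c ≤ μ_R(s°). (a) If s ∈ (s°, 1) and η(x) < c for all x ∈ (s°, s], then μ_L(s) < c and μ_R(s) > c. (b) If s ∈ (0, s°) and η(x) > c for all x ∈ [s, s°), then μ_L(s) < c and μ_R(s) > c. -/
open Set MeasureTheory intervalIntegral

/-- Preservation of node-mean ordering: Let `s° ∈ (0,1)` and `c ∈ (0,1)`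
satisfy `μL s° ≤ c ≤ μR s°`.
(a) If `s ∈ (s°, 1)` and `η x < c` for all `x ∈ (s°, s]`, then `μL s < c` and `μR s > c`.
(b) If `s ∈ (0, s°)` and `η x > c` for all `x ∈ [s, s°)`, then `μL s < c` and `μR s > c`. -/
theorem node_mean_ordering_preserved
    (f η : ℝ → ℝ) (c : ℝ) (hc : c ∈ Set.Ioo (0:ℝ) 1)
    (hf_cont : ContinuousOn f (Set.Icc 0 1))
    (hf_pos : ∀ x ∈ Set.Icc (0:ℝ) 1, 0 < f x)
    (hf_prob : (∫ x in (0:ℝ)..1, f x) = 1)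
    (hη_cont : ContinuousOn η (Set.Icc 0 1))
    (hη_mem : ∀ x ∈ Set.Icc (0:ℝ) 1, η x ∈ Set.Icc (0:ℝ) 1)
    (F μL μR : ℝ → ℝ)
    (hF : ∀ s, F s = ∫ x in (0:ℝ)..s, f x)
    (hμL : ∀ s, μL s = (∫ x in (0:ℝ)..s, η x * f x) / F s)
    (hμR : ∀ s, μR s = (∫ x in s..(1:ℝ), η x * f x) / (1 - F s))
    (s₀ : ℝ) (hs₀ : s₀ ∈ Set.Ioo (0:ℝ) 1)
    (hL : μL s₀ ≤ c) (hRc : c ≤ μR s₀) :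
    (∀ s ∈ Set.Ioo s₀ (1:ℝ), (∀ x ∈ Set.Ioc s₀ s, η x < c) → μL s < c ∧ c < μR s) ∧
    (∀ s ∈ Set.Ioo (0:ℝ) s₀, (∀ x ∈ Set.Ico s s₀, c < η x) → μL s < c ∧ c < μR s) := by
  obtain ⟨hc0, hc1⟩ := hc
  obtain ⟨hs₀0, hs₀1⟩ := hs₀
  set g : ℝ → ℝ := fun x => (η x - c) * f x with hg
  have hgcont : ContinuousOn g (Icc 0 1) := (hη_cont.sub continuousOn_const).mul hf_cont
  have hfint : ∀ a b : ℝ, 0 ≤ a → a ≤ b → b ≤ 1 → IntervalIntegrable f volume a b := by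
    intro a b ha hab hb
    exact (hf_cont.mono (Icc_subset_Icc ha hb)).intervalIntegrable_of_Icc hab
  have hgint : ∀ a b : ℝ, 0 ≤ a → a ≤ b → b ≤ 1 → IntervalIntegrable g volume a b := by
    intro a b ha hab hb
    exact (hgcont.mono (Icc_subset_Icc ha hb)).intervalIntegrable_of_Icc hab
  have hηfint : ∀ a b : ℝ, 0 ≤ a → a ≤ b → b ≤ 1 →
      IntervalIntegrable (fun x => η x * f x) volume a b := by
    intro a b ha hab hb
    exact ((hη_cont.mul hf_cont).mono (Icc_subset_Icc ha hb)).intervalIntegrable_of_Icc hab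
  have hgid : ∀ a b : ℝ, 0 ≤ a → a ≤ b → b ≤ 1 →
      (∫ x in a..b, g x) = (∫ x in a..b, η x * f x) - c * ∫ x in a..b, f x := by
    intro a b ha hab hb
    rw [← intervalIntegral.integral_const_mul,
      ← intervalIntegral.integral_sub (hηfint a b ha hab hb) ((hfint a b ha hab hb).const_mul c)]
    simp only [hg]
    congr 1
    ext x
    ring
  have hFpos : ∀ s : ℝ, 0 < s → s ≤ 1 → 0 < F s := by
    intro s h0 h1
    rw [hF]
    exact intervalIntegral_pos_of_pos_on (hfint 0 s le_rfl h0.le h1)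
      (fun x hx => hf_pos x ⟨hx.1.le, hx.2.le.trans h1⟩) h0
  have hFc : ∀ s : ℝ, 0 ≤ s → s ≤ 1 → (1 : ℝ) - F s = ∫ x in s..1, f x := by
    intro s h0 h1
    have h := integral_add_adjacent_intervals (hfint 0 s le_rfl h0 h1) (hfint s 1 h0 h1 le_rfl)
    rw [hf_prob] at h
    rw [hF]
    linarith
  have hFlt : ∀ s : ℝ, 0 ≤ s → s < 1 → F s < 1 := by
    intro s h0 h1
    have hp : 0 < ∫ x in s..1, f x := intervalIntegral_pos_of_pos_on
      (hfint s 1 h0 h1.le le_rfl) (fun x hx => hf_pos x ⟨h0.trans hx.1.le, hx.2.le⟩) h1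
    have := hFc s h0 h1.le
    linarith
  -- key inequalities at s₀
  have hA : (∫ x in (0:ℝ)..s₀, g x) ≤ 0 := by
    have hFp := hFpos s₀ hs₀0 hs₀1.le
    rw [hμL s₀, div_le_iff₀ hFp] at hL
    have hid := hgid 0 s₀ le_rfl hs₀0.le hs₀1.le
    rw [← hF s₀] at hid
    linarith
  have hB : (0:ℝ) ≤ ∫ x in s₀..1, g x := by
    have h1F : 0 < 1 - F s₀ := by have := hFlt s₀ hs₀0.le hs₀1; linarith
    rw [hμR s₀, le_div_iff₀ h1F] at hRc
    have hid := hgid s₀ 1 hs₀0.le hs₀1.le le_rfl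
    rw [← hFc s₀ hs₀0.le hs₀1.le] at hid
    linarith
  constructor
  · intro s hs hη
    have hx0 : (0:ℝ) ≤ s := (hs₀0.trans hs.1).le
    have hneg : (∫ x in s₀..s, g x) < 0 := by
      have h2 : 0 < ∫ x in s₀..s, -g x :=
        intervalIntegral_pos_of_pos_on (hgint s₀ s hs₀0.le hs.1.le hs.2.le).neg
          (fun x hx => by
            have h1 := hη x ⟨hx.1, hx.2.le⟩
            have h2 := hf_pos x ⟨(hs₀0.trans hx.1).le, (hx.2.trans hs.2).le⟩
            simp only [hg]
            nlinarith) hs.1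
      rw [intervalIntegral.integral_neg] at h2
      linarith
    have hsum1 : (∫ x in (0:ℝ)..s₀, g x) + (∫ x in s₀..s, g x) = ∫ x in (0:ℝ)..s, g x :=
      integral_add_adjacent_intervals (hgint 0 s₀ le_rfl hs₀0.le hs₀1.le)
        (hgint s₀ s hs₀0.le hs.1.le hs.2.le)
    have hsum2 : (∫ x in s₀..s, g x) + (∫ x in s..1, g x) = ∫ x in s₀..1, g x :=
      integral_add_adjacent_intervals (hgint s₀ s hs₀0.le hs.1.le hs.2.le)
        (hgint s 1 hx0 hs.2.le le_rfl)
    constructor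
    · have hFp := hFpos s (hs₀0.trans hs.1) hs.2.le
      rw [hμL s, div_lt_iff₀ hFp]
      have hid := hgid 0 s le_rfl hx0 hs.2.le
      rw [← hF s] at hid
      linarith
    · have h1F : 0 < 1 - F s := by have := hFlt s hx0 hs.2; linarith
      rw [hμR s, lt_div_iff₀ h1F]
      have hid := hgid s 1 hx0 hs.2.le le_rfl
      rw [← hFc s hx0 hs.2.le] at hid
      linarith
  · intro s hs hη
    have hx1 : s ≤ 1 := (hs.2.trans hs₀1).le
    have hpos : 0 < ∫ x in s..s₀, g x :=
      intervalIntegral_pos_of_pos_on (hgint s s₀ hs.1.le hs.2.le hs₀1.le)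
        (fun x hx => by
          have h1 := hη x ⟨hx.1.le, hx.2⟩
          have h2 := hf_pos x ⟨(hs.1.trans hx.1).le, (hx.2.trans hs₀1).le⟩
          simp only [hg]
          nlinarith) hs.2
    have hsum1 : (∫ x in (0:ℝ)..s, g x) + (∫ x in s..s₀, g x) = ∫ x in (0:ℝ)..s₀, g x :=
      integral_add_adjacent_intervals (hgint 0 s le_rfl hs.1.le hx1)
        (hgint s s₀ hs.1.le hs.2.le hs₀1.le)
    have hsum2 : (∫ x in s..s₀, g x) + (∫ x in s₀..1, g x) = ∫ x in s..1, g x :=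
      integral_add_adjacent_intervals (hgint s s₀ hs.1.le hs.2.le hs₀1.le)
        (hgint s₀ 1 hs₀0.le hs₀1.le le_rfl)
    constructor
    · have hFp := hFpos s hs.1 hx1
      rw [hμL s, div_lt_iff₀ hFp]
      have hid := hgid 0 s le_rfl hs.1.le hx1
      rw [← hF s] at hid
      linarith
    · have h1F : 0 < 1 - F s := by have := hFlt s hs.1.le (hs.2.trans hs₀1); linarith
      rw [hμR s, lt_div_iff₀ h1F]
      have hid := hgid s 1 hs.1.le hx1 le_rfl
      rw [← hFc s hs.1.le hx1] at hid
      linarith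
end

section
/- (MDFS point-identifies the threshold crossing) Suppose there exists a unique s* ∈ (0,1) with η(s*) = c, and there is ε₀ > 0 with [s* − ε₀, s* + ε₀] ⊆ (0,1) such that η is strictly monotone and differentiable on [s* − ε₀, s* + ε₀]. Then s* is the unique maximizer of G*(·, c) over (0,1): for every s ∈ (0,1) with s ≠ s*, G*(s, c) < G*(s*, c). -/
open Set MeasureTheory intervalIntegral


private lemma key_abs (H : ℝ → ℝ) (sstar : ℝ) (hs : sstar ∈ Set.Ioo (0:ℝ) 1)
    (hH0 : H 0 = 0) (ha : StrictAntiOn H (Set.Icc 0 sstar))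
    (hm : StrictMonoOn H (Set.Icc sstar 1)) :
    ∀ s ∈ Set.Ioo (0:ℝ) 1, s ≠ sstar →
      |H s| + |H 1 - H s| < |H sstar| + |H 1 - H sstar| := by
  obtain ⟨h0s, hs1⟩ := hs
  have hmem0 : (0:ℝ) ∈ Set.Icc (0:ℝ) sstar := ⟨le_refl _, h0s.le⟩
  have hmemS : sstar ∈ Set.Icc (0:ℝ) sstar := ⟨h0s.le, le_refl _⟩
  have hmemS' : sstar ∈ Set.Icc sstar (1:ℝ) := ⟨le_refl _, hs1.le⟩
  have hmem1 : (1:ℝ) ∈ Set.Icc sstar (1:ℝ) := ⟨hs1.le, le_refl _⟩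
  have hAs : H sstar < 0 := by have := ha hmem0 hmemS h0s; rwa [hH0] at this
  have hB : H sstar < H 1 := hm hmemS' hmem1 hs1
  have habsS : |H sstar| = -H sstar := abs_of_neg hAs
  have habsB : |H 1 - H sstar| = H 1 - H sstar := abs_of_pos (by linarith)
  intro s hsIoo hne
  obtain ⟨h0s', hs1'⟩ := hsIoo
  rcases lt_or_gt_of_ne hne with hlt | hgt
  · have h1 : H sstar < H s := ha ⟨h0s'.le, hlt.le⟩ hmemS hlt
    have h2 : H s < 0 := by have := ha hmem0 ⟨h0s'.le, hlt.le⟩ h0s'; rwa [hH0] at this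
    rw [habsS, habsB, abs_of_neg h2]
    rcases abs_cases (H 1 - H s) with ⟨he, _⟩ | ⟨he, _⟩ <;> rw [he] <;> linarith
  · have h1 : H sstar < H s := hm hmemS' ⟨hgt.le, hs1'.le⟩ hgt
    have h2 : H s < H 1 := hm ⟨hgt.le, hs1'.le⟩ hmem1 hs1'
    rw [habsS, habsB, abs_of_pos (by linarith : (0:ℝ) < H 1 - H s)]
    rcases abs_cases (H s) with ⟨he, _⟩ | ⟨he, _⟩ <;> rw [he] <;> linarith

private lemma same_side_lt (η : ℝ → ℝ) (c : ℝ)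
    (hcont : ContinuousOn η (Set.Icc 0 1)) (sstar : ℝ)
    (huniq : ∀ s ∈ Set.Ioo (0:ℝ) 1, η s = c → s = sstar)
    (x t0 : ℝ) (hx : x ∈ Set.Ioo (0:ℝ) 1) (ht0 : t0 ∈ Set.Ioo (0:ℝ) 1)
    (hside : (x < sstar ∧ t0 < sstar) ∨ (sstar < x ∧ sstar < t0))
    (h : η t0 < c) : η x < c := by
  have hxne : η x ≠ c := by
    intro hc
    have := huniq x hx hc
    rcases hside with ⟨h1, _⟩ | ⟨h1, _⟩ <;> exact absurd this (by intro h'; rw [h'] at h1; exact lt_irrefl _ h1)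
  rcases lt_or_gt_of_ne hxne with h' | h'
  · exact h'
  exfalso
  have hsub : Set.uIcc t0 x ⊆ Set.Icc (0:ℝ) 1 :=
    Set.uIcc_subset_Icc ⟨ht0.1.le, ht0.2.le⟩ ⟨hx.1.le, hx.2.le⟩
  have hmemc : c ∈ Set.uIcc (η t0) (η x) := Set.mem_uIcc.2 (Or.inl ⟨h.le, h'.le⟩)
  obtain ⟨z, hz, hzc⟩ := intermediate_value_uIcc (hcont.mono hsub) hmemc
  have hz' : z ∈ Set.Icc (min t0 x) (max t0 x) := by
    rwa [Set.uIcc] at hz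
  have hzIoo : z ∈ Set.Ioo (0:ℝ) 1 := ⟨lt_of_lt_of_le (lt_min ht0.1 hx.1) hz'.1,
    lt_of_le_of_lt hz'.2 (max_lt ht0.2 hx.2)⟩
  have hzs := huniq z hzIoo hzc
  rcases hside with ⟨h1, h2⟩ | ⟨h1, h2⟩
  · exact absurd hzs (ne_of_lt (lt_of_le_of_lt hz'.2 (max_lt h2 h1)))
  · exact absurd hzs (ne_of_gt (lt_of_lt_of_le (lt_min h2 h1) hz'.1))

private lemma strictAntiOn_H (η : ℝ → ℝ) (c : ℝ)
    (hcont : ContinuousOn η (Set.Icc 0 1)) (a b : ℝ)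
    (hab : Set.Icc a b ⊆ Set.Icc (0:ℝ) 1) (ha0 : (0:ℝ) ≤ a)
    (hneg : ∀ t ∈ Set.Ioo a b, η t < c) :
    StrictAntiOn (fun s => ∫ t in (0:ℝ)..s, (η t - c)) (Set.Icc a b) := by
  have hc0 : ContinuousOn (fun t => η t - c) (Set.Icc 0 1) := hcont.sub continuousOn_const
  have h01 : (0:ℝ) ∈ Set.Icc (0:ℝ) 1 := ⟨le_refl _, zero_le_one⟩
  have hInt : ∀ u v : ℝ, u ∈ Set.Icc (0:ℝ) 1 → v ∈ Set.Icc (0:ℝ) 1 →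
      IntervalIntegrable (fun t => η t - c) volume u v := fun u v hu hv =>
    (hc0.mono (Set.uIcc_subset_Icc hu hv)).intervalIntegrable
  intro x hx y hy hxy
  have hx1 := hab hx
  have hy1 := hab hy
  have hadj : (∫ t in (0:ℝ)..x, (η t - c)) + ∫ t in x..y, (η t - c) =
      ∫ t in (0:ℝ)..y, (η t - c) :=
    integral_add_adjacent_intervals (hInt 0 x h01 hx1) (hInt x y hx1 hy1)
  have hpos : 0 < ∫ t in x..y, (-(η t - c)) := by
    apply intervalIntegral_pos_of_pos_on ((hInt x y hx1 hy1).neg)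
    · intro t ht
      simp only [Pi.neg_apply]
      have := hneg t ⟨lt_of_le_of_lt hx.1 ht.1, lt_of_lt_of_le ht.2 hy.2⟩
      linarith
    · exact hxy
  rw [intervalIntegral.integral_neg] at hpos
  simp only []
  linarith

private lemma strictMonoOn_H (η : ℝ → ℝ) (c : ℝ)
    (hcont : ContinuousOn η (Set.Icc 0 1)) (a b : ℝ)
    (hab : Set.Icc a b ⊆ Set.Icc (0:ℝ) 1) (ha0 : (0:ℝ) ≤ a)
    (hpos : ∀ t ∈ Set.Ioo a b, c < η t) :
    StrictMonoOn (fun s => ∫ t in (0:ℝ)..s, (η t - c)) (Set.Icc a b) := by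
  have hc0 : ContinuousOn (fun t => η t - c) (Set.Icc 0 1) := hcont.sub continuousOn_const
  have h01 : (0:ℝ) ∈ Set.Icc (0:ℝ) 1 := ⟨le_refl _, zero_le_one⟩
  have hInt : ∀ u v : ℝ, u ∈ Set.Icc (0:ℝ) 1 → v ∈ Set.Icc (0:ℝ) 1 →
      IntervalIntegrable (fun t => η t - c) volume u v := fun u v hu hv =>
    (hc0.mono (Set.uIcc_subset_Icc hu hv)).intervalIntegrable
  intro x hx y hy hxy
  have hx1 := hab hx
  have hy1 := hab hy
  have hadj : (∫ t in (0:ℝ)..x, (η t - c)) + ∫ t in x..y, (η t - c) =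
      ∫ t in (0:ℝ)..y, (η t - c) :=
    integral_add_adjacent_intervals (hInt 0 x h01 hx1) (hInt x y hx1 hy1)
  have hp : 0 < ∫ t in x..y, (η t - c) := by
    apply intervalIntegral_pos_of_pos_on (hInt x y hx1 hy1)
    · intro t ht
      have := hpos t ⟨lt_of_le_of_lt hx.1 ht.1, lt_of_lt_of_le ht.2 hy.2⟩
      linarith
    · exact hxy
  simp only []
  linarith

/-- MDFS point-identifies the threshold crossing: In the uniform setup,
suppose there exists a unique `s* ∈ (0,1)` with `η s* = c`, and there is `ε₀ > 0` with
`[s* - ε₀, s* + ε₀] ⊆ (0,1)` such that `η` is strictly monotone and differentiable on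
`[s* - ε₀, s* + ε₀]`. Then `s*` is the unique maximizer of `G*(·, c)` over `(0,1)`:
for every `s ∈ (0,1)` with `s ≠ s*`, `G*(s, c) < G*(s*, c)`. -/
theorem mdfs_point_identifies_crossing
    (η : ℝ → ℝ) (c : ℝ) (hc : c ∈ Set.Ioo (0:ℝ) 1)
    (hη_cont : ContinuousOn η (Set.Icc 0 1))
    (hη_mem : ∀ x ∈ Set.Icc (0:ℝ) 1, η x ∈ Set.Icc (0:ℝ) 1)
    (μL μR : ℝ → ℝ) (Gstar : ℝ → ℝ)
    (hμL : ∀ s, μL s = (∫ x in (0:ℝ)..s, η x) / s)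
    (hμR : ∀ s, μR s = (∫ x in s..(1:ℝ), η x) / (1 - s))
    (hGstar : ∀ s, Gstar s = s * |μL s - c| + (1 - s) * |μR s - c|)
    (sstar : ℝ) (hstar : sstar ∈ Set.Ioo (0:ℝ) 1)
    (hcross : η sstar = c)
    (huniq : ∀ s ∈ Set.Ioo (0:ℝ) 1, η s = c → s = sstar)
    (ε₀ : ℝ) (hε₀ : 0 < ε₀)
    (hsub : Set.Icc (sstar - ε₀) (sstar + ε₀) ⊆ Set.Ioo (0:ℝ) 1)
    (hmono : StrictMonoOn η (Set.Icc (sstar - ε₀) (sstar + ε₀)) ∨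
             StrictAntiOn η (Set.Icc (sstar - ε₀) (sstar + ε₀)))
    (hdiff : DifferentiableOn ℝ η (Set.Icc (sstar - ε₀) (sstar + ε₀))) :
    ∀ s ∈ Set.Ioo (0:ℝ) 1, s ≠ sstar → Gstar s < Gstar sstar := by
  set H : ℝ → ℝ := fun s => ∫ t in (0:ℝ)..s, (η t - c) with hHdef
  have h01 : (0:ℝ) ∈ Set.Icc (0:ℝ) 1 := ⟨le_refl _, zero_le_one⟩
  have h11 : (1:ℝ) ∈ Set.Icc (0:ℝ) 1 := ⟨zero_le_one, le_refl _⟩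
  have hc0 : ContinuousOn (fun t => η t - c) (Set.Icc 0 1) := hη_cont.sub continuousOn_const
  have hInt : ∀ u v : ℝ, u ∈ Set.Icc (0:ℝ) 1 → v ∈ Set.Icc (0:ℝ) 1 →
      IntervalIntegrable (fun t => η t - c) volume u v := fun u v hu hv =>
    (hc0.mono (Set.uIcc_subset_Icc hu hv)).intervalIntegrable
  have hIntη : ∀ u v : ℝ, u ∈ Set.Icc (0:ℝ) 1 → v ∈ Set.Icc (0:ℝ) 1 →
      IntervalIntegrable η volume u v := fun u v hu hv =>
    (hη_cont.mono (Set.uIcc_subset_Icc hu hv)).intervalIntegrable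
  -- H s in terms of ∫ η
  have hHs : ∀ s ∈ Set.Icc (0:ℝ) 1, H s = (∫ x in (0:ℝ)..s, η x) - s * c := by
    intro s hs
    have h1 : H s = (∫ x in (0:ℝ)..s, η x) - ∫ x in (0:ℝ)..s, (c : ℝ) :=
      intervalIntegral.integral_sub (hIntη 0 s h01 hs) intervalIntegrable_const
    rw [h1, intervalIntegral.integral_const, smul_eq_mul, sub_zero]
  have hH0 : H 0 = 0 := by
    rw [hHs 0 h01]; simp
  have hH1sub : ∀ s ∈ Set.Icc (0:ℝ) 1,
      H 1 - H s = (∫ x in s..(1:ℝ), η x) - (1 - s) * c := by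
    intro s hs
    have hadj : H s + ∫ t in s..(1:ℝ), (η t - c) = H 1 :=
      integral_add_adjacent_intervals (hInt 0 s h01 hs) (hInt s 1 hs h11)
    have h1 : (∫ t in s..(1:ℝ), (η t - c)) =
        (∫ x in s..(1:ℝ), η x) - ∫ x in s..(1:ℝ), (c : ℝ) :=
      intervalIntegral.integral_sub (hIntη s 1 hs h11) intervalIntegrable_const
    rw [intervalIntegral.integral_const, smul_eq_mul] at h1
    linarith
  -- Gstar in terms of H
  have hGH : ∀ s ∈ Set.Ioo (0:ℝ) 1, Gstar s = |H s| + |H 1 - H s| := by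
    intro s hs
    obtain ⟨hs0, hs1⟩ := hs
    have hsIcc : s ∈ Set.Icc (0:ℝ) 1 := ⟨hs0.le, hs1.le⟩
    have hs1' : (0:ℝ) < 1 - s := by linarith
    have hsne : s ≠ 0 := ne_of_gt hs0
    have hsne' : (1:ℝ) - s ≠ 0 := ne_of_gt hs1'
    have e1 : μL s - c = ((∫ x in (0:ℝ)..s, η x) - s * c) / s := by
      rw [hμL, sub_div, mul_div_cancel_left₀ _ hsne]
    have e2 : μR s - c = ((∫ x in s..(1:ℝ), η x) - (1 - s) * c) / (1 - s) := by
      rw [hμR, sub_div, mul_div_cancel_left₀ _ hsne']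
    rw [hGstar, e1, e2, abs_div, abs_div, abs_of_pos hs0, abs_of_pos hs1',
      mul_div_cancel₀ _ (ne_of_gt hs0), mul_div_cancel₀ _ (ne_of_gt hs1'),
      hH1sub s hsIcc, hHs s hsIcc]
  -- endpoints of the monotonicity interval
  have hLmem : sstar - ε₀ ∈ Set.Icc (sstar - ε₀) (sstar + ε₀) := ⟨le_refl _, by linarith⟩
  have hRmem : sstar + ε₀ ∈ Set.Icc (sstar - ε₀) (sstar + ε₀) := ⟨by linarith, le_refl _⟩
  have hSmem : sstar ∈ Set.Icc (sstar - ε₀) (sstar + ε₀) := ⟨by linarith, by linarith⟩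
  have hLIoo : sstar - ε₀ ∈ Set.Ioo (0:ℝ) 1 := hsub hLmem
  have hRIoo : sstar + ε₀ ∈ Set.Ioo (0:ℝ) 1 := hsub hRmem
  intro s hs hne
  rw [hGH s hs, hGH sstar hstar]
  rcases hmono with hm | hm
  · -- increasing: η < c on (0, sstar), η > c on (sstar, 1)
    have hηL : η (sstar - ε₀) < c := by
      have := hm hLmem hSmem (by linarith); rwa [hcross] at this
    have hηR : c < η (sstar + ε₀) := by
      have := hm hSmem hRmem (by linarith); rwa [hcross] at this
    have hsignL : ∀ x ∈ Set.Ioo (0:ℝ) sstar, η x < c := fun x hx =>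
      same_side_lt η c hη_cont sstar huniq x (sstar - ε₀)
        ⟨hx.1, hx.2.trans hstar.2⟩ hLIoo (Or.inl ⟨hx.2, by linarith⟩) hηL
    have hsignR : ∀ x ∈ Set.Ioo sstar (1:ℝ), c < η x := by
      intro x hx
      by_contra h
      push_neg at h
      have hxIoo : x ∈ Set.Ioo (0:ℝ) 1 := ⟨hstar.1.trans hx.1, hx.2⟩
      have hne' : η x ≠ c := fun hc' => by
        have := huniq x hxIoo hc'
        rw [this] at hx
        exact lt_irrefl _ hx.1
      have hlt : η x < c := lt_of_le_of_ne h hne'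
      have := same_side_lt η c hη_cont sstar huniq (sstar + ε₀) x
        hRIoo hxIoo (Or.inr ⟨by linarith, hx.1⟩) hlt
      linarith
    have hanti : StrictAntiOn H (Set.Icc 0 sstar) :=
      strictAntiOn_H η c hη_cont 0 sstar
        (Set.Icc_subset_Icc (le_refl _) hstar.2.le) (le_refl _) hsignL
    have hmonoH : StrictMonoOn H (Set.Icc sstar 1) :=
      strictMonoOn_H η c hη_cont sstar 1
        (Set.Icc_subset_Icc hstar.1.le (le_refl _)) hstar.1.le hsignR
    exact key_abs H sstar hstar hH0 hanti hmonoH s hs hne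
  · -- decreasing: η > c on (0, sstar), η < c on (sstar, 1); apply key_abs to -H
    have hηL : c < η (sstar - ε₀) := by
      have := hm hLmem hSmem (by linarith); rwa [hcross] at this
    have hηR : η (sstar + ε₀) < c := by
      have := hm hSmem hRmem (by linarith); rwa [hcross] at this
    have hsignR : ∀ x ∈ Set.Ioo sstar (1:ℝ), η x < c := fun x hx =>
      same_side_lt η c hη_cont sstar huniq x (sstar + ε₀)
        ⟨hstar.1.trans hx.1, hx.2⟩ hRIoo (Or.inr ⟨hx.1, by linarith⟩) hηR
    have hsignL : ∀ x ∈ Set.Ioo (0:ℝ) sstar, c < η x := by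
      intro x hx
      by_contra h
      push_neg at h
      have hxIoo : x ∈ Set.Ioo (0:ℝ) 1 := ⟨hx.1, hx.2.trans hstar.2⟩
      have hne' : η x ≠ c := fun hc' => by
        have := huniq x hxIoo hc'
        rw [this] at hx
        exact lt_irrefl _ hx.2
      have hlt : η x < c := lt_of_le_of_ne h hne'
      have := same_side_lt η c hη_cont sstar huniq (sstar - ε₀) x
        hLIoo hxIoo (Or.inl ⟨by linarith, hx.2⟩) hlt
      linarith
    have hmonoH : StrictMonoOn H (Set.Icc 0 sstar) :=
      strictMonoOn_H η c hη_cont 0 sstar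
        (Set.Icc_subset_Icc (le_refl _) hstar.2.le) (le_refl _) hsignL
    have hantiH : StrictAntiOn H (Set.Icc sstar 1) :=
      strictAntiOn_H η c hη_cont sstar 1
        (Set.Icc_subset_Icc hstar.1.le (le_refl _)) hstar.1.le hsignR
    have hkey := key_abs (fun t => -(H t)) sstar hstar (by show -H 0 = 0; rw [hH0, neg_zero])
      (fun x hx y hy hxy => neg_lt_neg (hmonoH hx hy hxy))
      (fun x hx y hy hxy => neg_lt_neg (hantiH hx hy hxy)) s hs hne
    simpa [neg_sub_neg, abs_neg, abs_sub_comm, neg_add_eq_sub] using hkey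
end

section
/- (MDFS under monotone η) Suppose η is monotone on [0,1], there exists s* ∈ (0,1) with η(s*) = c, and η is strictly monotone and differentiable on [s* − ε₀, s* + ε₀] ⊆ (0,1) for some ε₀ > 0. Then s* is the unique maximizer of G*(·, c) over (0,1): for every s ∈ (0,1) with s ≠ s*, G*(s, c) < G*(s*, c). -/
open Set MeasureTheory intervalIntegral

private lemma mdfs_abs_lemma {a b δ : ℝ} (ha : 0 < a) (hb : 0 < b) (hδ : 0 < δ)
    (h : δ ≤ a ∨ δ ≤ b) : |a - δ| + |b - δ| < a + b := by
  rcases abs_cases (a - δ) with ⟨h1, _⟩ | ⟨h1, _⟩ <;>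
    rcases abs_cases (b - δ) with ⟨h2, _⟩ | ⟨h2, _⟩ <;>
      rcases h with h | h <;> linarith

private lemma mdfs_aux (η : ℝ → ℝ) (c : ℝ)
    (hη_cont : ContinuousOn η (Set.Icc 0 1))
    (hmonoG : MonotoneOn η (Set.Icc (0:ℝ) 1))
    (sstar : ℝ) (hstar : sstar ∈ Set.Ioo (0:ℝ) 1)
    (hcross : η sstar = c)
    (ε₀ : ℝ) (hε₀ : 0 < ε₀)
    (hsub : Set.Icc (sstar - ε₀) (sstar + ε₀) ⊆ Set.Ioo (0:ℝ) 1)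
    (hmonoS : StrictMonoOn η (Set.Icc (sstar - ε₀) (sstar + ε₀)))
    (s : ℝ) (hs : s ∈ Set.Ioo (0:ℝ) 1) (hne : s ≠ sstar) :
    s * |(∫ x in (0:ℝ)..s, η x) / s - c| + (1 - s) * |(∫ x in s..(1:ℝ), η x) / (1 - s) - c|
      < sstar * |(∫ x in (0:ℝ)..sstar, η x) / sstar - c|
        + (1 - sstar) * |(∫ x in sstar..(1:ℝ), η x) / (1 - sstar) - c| := by
  obtain ⟨hs0, hs1⟩ := hs
  obtain ⟨hst0, hst1⟩ := hstar
  have hεl : (0:ℝ) < sstar - ε₀ := (hsub ⟨le_refl _, by linarith⟩).1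
  have hεr : sstar + ε₀ < 1 := (hsub ⟨by linarith, le_refl _⟩).2
  -- integrability helpers
  have hiη : ∀ a b : ℝ, a ∈ Set.Icc (0:ℝ) 1 → b ∈ Set.Icc (0:ℝ) 1 →
      IntervalIntegrable η volume a b := fun a b ha hb =>
    (hη_cont.mono (Set.uIcc_subset_Icc ha hb)).intervalIntegrable
  have hii : ∀ a b : ℝ, a ∈ Set.Icc (0:ℝ) 1 → b ∈ Set.Icc (0:ℝ) 1 →
      IntervalIntegrable (fun x => c - η x) volume a b := fun a b ha hb =>
    ((continuousOn_const.sub hη_cont).mono (Set.uIcc_subset_Icc ha hb)).intervalIntegrable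
  have hjj : ∀ a b : ℝ, a ∈ Set.Icc (0:ℝ) 1 → b ∈ Set.Icc (0:ℝ) 1 →
      IntervalIntegrable (fun x => η x - c) volume a b := fun a b ha hb =>
    ((hη_cont.sub continuousOn_const).mono (Set.uIcc_subset_Icc ha hb)).intervalIntegrable
  -- reduction of the terms of the objective
  have htermL : ∀ t : ℝ, t ∈ Set.Ioo (0:ℝ) 1 →
      t * |(∫ x in (0:ℝ)..t, η x) / t - c| = |∫ x in (0:ℝ)..t, (c - η x)| := by
    intro t ht
    have h1 : IntervalIntegrable η volume 0 t :=
      hiη 0 t ⟨le_refl _, zero_le_one⟩ ⟨ht.1.le, ht.2.le⟩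
    have h2 : (∫ x in (0:ℝ)..t, (c - η x)) = c * t - ∫ x in (0:ℝ)..t, η x := by
      rw [intervalIntegral.integral_sub intervalIntegrable_const h1,
        intervalIntegral.integral_const]
      simp [smul_eq_mul]; ring
    have ht0 : t ≠ 0 := ne_of_gt ht.1
    rw [h2, show (∫ x in (0:ℝ)..t, η x) / t - c
        = -((c * t - ∫ x in (0:ℝ)..t, η x) / t) by field_simp [ht0]; ring,
      abs_neg, abs_div, abs_of_pos ht.1, mul_div_cancel₀ _ (ne_of_gt ht.1)]
  have htermR : ∀ t : ℝ, t ∈ Set.Ioo (0:ℝ) 1 →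
      (1 - t) * |(∫ x in t..(1:ℝ), η x) / (1 - t) - c| = |∫ x in t..(1:ℝ), (η x - c)| := by
    intro t ht
    have h1t : (0:ℝ) < 1 - t := by linarith [ht.2]
    have h1 : IntervalIntegrable η volume t 1 :=
      hiη t 1 ⟨ht.1.le, ht.2.le⟩ ⟨zero_le_one, le_refl _⟩
    have h2 : (∫ x in t..(1:ℝ), (η x - c)) = (∫ x in t..(1:ℝ), η x) - c * (1 - t) := by
      rw [intervalIntegral.integral_sub h1 intervalIntegrable_const,
        intervalIntegral.integral_const]
      simp [smul_eq_mul]; ring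
    rw [h2, show (∫ x in t..(1:ℝ), η x) / (1 - t) - c
        = ((∫ x in t..(1:ℝ), η x) - c * (1 - t)) / (1 - t) by field_simp [h1t.ne'],
      abs_div, abs_of_pos h1t, mul_div_cancel₀ _ (ne_of_gt h1t)]
  rw [htermL s ⟨hs0, hs1⟩, htermL sstar ⟨hst0, hst1⟩,
    htermR s ⟨hs0, hs1⟩, htermR sstar ⟨hst0, hst1⟩]
  -- abbreviations
  set a := ∫ x in (0:ℝ)..sstar, (c - η x) with ha_def
  set b := ∫ x in sstar..(1:ℝ), (η x - c) with hb_def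
  set δ := ∫ x in s..sstar, (c - η x) with hδ_def
  -- pointwise sign facts
  have hle_left : ∀ x : ℝ, 0 ≤ x → x ≤ sstar → η x ≤ c := fun x h0 h1 =>
    hcross ▸ hmonoG ⟨h0, by linarith⟩ ⟨hst0.le, hst1.le⟩ h1
  have hle_right : ∀ x : ℝ, sstar ≤ x → x ≤ 1 → c ≤ η x := fun x h0 h1 =>
    hcross ▸ hmonoG ⟨hst0.le, hst1.le⟩ ⟨by linarith, h1⟩ h0
  -- nonnegativity of partial integrals
  have hnnL : ∀ u v : ℝ, 0 ≤ u → u ≤ v → v ≤ sstar → 0 ≤ ∫ x in u..v, (c - η x) := by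
    intro u v h0 huv hv
    apply intervalIntegral.integral_nonneg huv
    intro x hx
    have := hle_left x (le_trans h0 hx.1) (le_trans hx.2 hv)
    linarith
  have hnnR : ∀ u v : ℝ, sstar ≤ u → u ≤ v → v ≤ 1 → 0 ≤ ∫ x in u..v, (η x - c) := by
    intro u v h0 huv hv
    apply intervalIntegral.integral_nonneg huv
    intro x hx
    have := hle_right x (le_trans h0 hx.1) (le_trans hx.2 hv)
    linarith
  -- strict positivity near sstar
  have hposL : ∀ u : ℝ, sstar - ε₀ ≤ u → u < sstar → 0 < ∫ x in u..sstar, (c - η x) := by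
    intro u h1 h2
    apply intervalIntegral.intervalIntegral_pos_of_pos_on
      (hii u sstar ⟨by linarith, by linarith⟩ ⟨hst0.le, hst1.le⟩) _ h2
    intro x hx
    have hlt : η x < η sstar :=
      hmonoS ⟨by linarith [hx.1], by linarith [hx.2]⟩ ⟨by linarith, by linarith⟩ hx.2
    rw [hcross] at hlt; linarith
  have hposR : ∀ v : ℝ, v ≤ sstar + ε₀ → sstar < v → 0 < ∫ x in sstar..v, (η x - c) := by
    intro v h1 h2
    apply intervalIntegral.intervalIntegral_pos_of_pos_on
      (hjj sstar v ⟨hst0.le, hst1.le⟩ ⟨by linarith, by linarith⟩) _ h2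
    intro x hx
    have hlt : η sstar < η x :=
      hmonoS ⟨by linarith, by linarith⟩ ⟨by linarith [hx.1], by linarith [hx.2]⟩ hx.1
    rw [hcross] at hlt; linarith
  -- a > 0
  have hsplit_a : (∫ x in (0:ℝ)..(sstar - ε₀), (c - η x))
      + (∫ x in (sstar - ε₀)..sstar, (c - η x)) = a :=
    intervalIntegral.integral_add_adjacent_intervals
      (hii 0 (sstar - ε₀) ⟨le_refl _, zero_le_one⟩ ⟨hεl.le, by linarith⟩)
      (hii (sstar - ε₀) sstar ⟨hεl.le, by linarith⟩ ⟨hst0.le, hst1.le⟩)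
  have ha_pos : 0 < a := by
    have h1 := hnnL 0 (sstar - ε₀) (le_refl _) hεl.le (by linarith)
    have h2 := hposL (sstar - ε₀) (le_refl _) (by linarith)
    linarith
  -- b > 0
  have hsplit_b : (∫ x in sstar..(sstar + ε₀), (η x - c))
      + (∫ x in (sstar + ε₀)..(1:ℝ), (η x - c)) = b :=
    intervalIntegral.integral_add_adjacent_intervals
      (hjj sstar (sstar + ε₀) ⟨hst0.le, hst1.le⟩ ⟨by linarith, hεr.le⟩)
      (hjj (sstar + ε₀) 1 ⟨by linarith, hεr.le⟩ ⟨zero_le_one, le_refl _⟩)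
  have hb_pos : 0 < b := by
    have h1 := hposR (sstar + ε₀) (le_refl _) (by linarith)
    have h2 := hnnR (sstar + ε₀) 1 (by linarith) hεr.le (le_refl _)
    linarith
  -- A s = a - δ
  have hAs : (∫ x in (0:ℝ)..s, (c - η x)) = a - δ := by
    have h := intervalIntegral.integral_add_adjacent_intervals
      (hii 0 s ⟨le_refl _, zero_le_one⟩ ⟨hs0.le, hs1.le⟩)
      (hii s sstar ⟨hs0.le, hs1.le⟩ ⟨hst0.le, hst1.le⟩)
    rw [← ha_def] at h
    linarith [h]
  -- flipping the integrand sign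
  have hflip : ∀ u v : ℝ, (∫ x in u..v, (η x - c)) = -∫ x in u..v, (c - η x) := by
    intro u v
    rw [← intervalIntegral.integral_neg]
    congr 1; funext x; ring
  -- B s = b - δ
  have hBs : (∫ x in s..(1:ℝ), (η x - c)) = b - δ := by
    have h := intervalIntegral.integral_add_adjacent_intervals
      (hjj s sstar ⟨hs0.le, hs1.le⟩ ⟨hst0.le, hst1.le⟩)
      (hjj sstar 1 ⟨hst0.le, hst1.le⟩ ⟨zero_le_one, le_refl _⟩)
    rw [← hb_def, hflip s sstar, ← hδ_def] at h
    linarith [h]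
  -- δ > 0 and the bound δ ≤ a or δ ≤ b
  rcases lt_or_gt_of_ne hne with hlt | hgt
  · -- s < sstar
    have hδa : δ ≤ a := by
      have := hnnL 0 s (le_refl _) hs0.le (by linarith)
      rw [hAs] at this; linarith
    have hδ_pos : 0 < δ := by
      rcases le_or_gt (sstar - ε₀) s with h | h
      · exact hposL s h hlt
      · have h1 := hnnL s (sstar - ε₀) hs0.le h.le (by linarith)
        have h2 := hposL (sstar - ε₀) (le_refl _) (by linarith)
        have h3 := intervalIntegral.integral_add_adjacent_intervals
          (hii s (sstar - ε₀) ⟨hs0.le, hs1.le⟩ ⟨hεl.le, by linarith⟩)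
          (hii (sstar - ε₀) sstar ⟨hεl.le, by linarith⟩ ⟨hst0.le, hst1.le⟩)
        rw [← hδ_def] at h3
        linarith
    rw [hAs, hBs, abs_of_pos ha_pos, abs_of_pos hb_pos]
    exact mdfs_abs_lemma ha_pos hb_pos hδ_pos (Or.inl hδa)
  · -- sstar < s
    have hδ_eq : δ = ∫ x in sstar..s, (η x - c) := by
      rw [hflip, hδ_def, intervalIntegral.integral_symm s sstar, neg_neg]
    have hδb : δ ≤ b := by
      have := hnnR s 1 (by linarith) hs1.le (le_refl _)
      rw [hBs] at this; linarith
    have hδ_pos : 0 < δ := by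
      rw [hδ_eq]
      rcases le_or_gt s (sstar + ε₀) with h | h
      · exact hposR s h hgt
      · have h1 := hposR (sstar + ε₀) (le_refl _) (by linarith)
        have h2 := hnnR (sstar + ε₀) s (by linarith) h.le hs1.le
        have h3 := intervalIntegral.integral_add_adjacent_intervals
          (hjj sstar (sstar + ε₀) ⟨hst0.le, hst1.le⟩ ⟨by linarith, hεr.le⟩)
          (hjj (sstar + ε₀) s ⟨by linarith, hεr.le⟩ ⟨hs0.le, hs1.le⟩)
        linarith
    rw [hAs, hBs, abs_of_pos ha_pos, abs_of_pos hb_pos]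
    exact mdfs_abs_lemma ha_pos hb_pos hδ_pos (Or.inr hδb)

/-- MDFS under monotone η: In the uniform setup, suppose `η` is monotone
on `[0,1]`, there exists `s* ∈ (0,1)` with `η s* = c`, and `η` is strictly monotone and
differentiable on `[s* - ε₀, s* + ε₀] ⊆ (0,1)` for some `ε₀ > 0`. Then `s*` is the
unique maximizer of `G*(·, c)` over `(0,1)`: for every `s ∈ (0,1)` with `s ≠ s*`,
`G*(s, c) < G*(s*, c)`. -/
theorem mdfs_monotone_eta
    (η : ℝ → ℝ) (c : ℝ) (hc : c ∈ Set.Ioo (0:ℝ) 1)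
    (hη_cont : ContinuousOn η (Set.Icc 0 1))
    (hη_mem : ∀ x ∈ Set.Icc (0:ℝ) 1, η x ∈ Set.Icc (0:ℝ) 1)
    (hη_mono : MonotoneOn η (Set.Icc (0:ℝ) 1) ∨ AntitoneOn η (Set.Icc (0:ℝ) 1))
    (μL μR : ℝ → ℝ) (Gstar : ℝ → ℝ)
    (hμL : ∀ s, μL s = (∫ x in (0:ℝ)..s, η x) / s)
    (hμR : ∀ s, μR s = (∫ x in s..(1:ℝ), η x) / (1 - s))
    (hGstar : ∀ s, Gstar s = s * |μL s - c| + (1 - s) * |μR s - c|)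
    (sstar : ℝ) (hstar : sstar ∈ Set.Ioo (0:ℝ) 1)
    (hcross : η sstar = c)
    (ε₀ : ℝ) (hε₀ : 0 < ε₀)
    (hsub : Set.Icc (sstar - ε₀) (sstar + ε₀) ⊆ Set.Ioo (0:ℝ) 1)
    (hmono : StrictMonoOn η (Set.Icc (sstar - ε₀) (sstar + ε₀)) ∨
             StrictAntiOn η (Set.Icc (sstar - ε₀) (sstar + ε₀)))
    (hdiff : DifferentiableOn ℝ η (Set.Icc (sstar - ε₀) (sstar + ε₀))) :
    ∀ s ∈ Set.Ioo (0:ℝ) 1, s ≠ sstar → Gstar s < Gstar sstar := by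
  intro s hs hne
  obtain ⟨hst0, hst1⟩ := hstar
  have hεl : (0:ℝ) < sstar - ε₀ := (hsub ⟨le_refl _, by linarith⟩).1
  have hεr : sstar + ε₀ < 1 := (hsub ⟨by linarith, le_refl _⟩).2
  have hm1 : sstar - ε₀ ∈ Set.Icc (sstar - ε₀) (sstar + ε₀) := ⟨le_refl _, by linarith⟩
  have hm2 : sstar ∈ Set.Icc (sstar - ε₀) (sstar + ε₀) := ⟨by linarith, by linarith⟩
  have hg1 : sstar - ε₀ ∈ Set.Icc (0:ℝ) 1 := ⟨hεl.le, by linarith⟩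
  have hg2 : sstar ∈ Set.Icc (0:ℝ) 1 := ⟨hst0.le, hst1.le⟩
  rw [hGstar, hGstar, hμL, hμL, hμR, hμR]
  rcases hη_mono with hmG | hmG
  · rcases hmono with hmS | hmS
    · exact mdfs_aux η c hη_cont hmG sstar ⟨hst0, hst1⟩ hcross ε₀ hε₀ hsub hmS s hs hne
    · exfalso
      have h1 : η sstar < η (sstar - ε₀) := hmS hm1 hm2 (by linarith)
      have h2 : η (sstar - ε₀) ≤ η sstar := hmG hg1 hg2 (by linarith)
      linarith
  · rcases hmono with hmS | hmS
    · exfalso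
      have h1 : η (sstar - ε₀) < η sstar := hmS hm1 hm2 (by linarith)
      have h2 : η sstar ≤ η (sstar - ε₀) := hmG hg1 hg2 (by linarith)
      linarith
    · -- antitone case: apply the aux lemma to 2c - η
      have haux := mdfs_aux (fun x => 2 * c - η x) c
        (continuousOn_const.sub hη_cont)
        (fun x hx y hy hxy => by simp only; linarith [hmG hx hy hxy])
        sstar ⟨hst0, hst1⟩ (by simp only [hcross]; ring) ε₀ hε₀ hsub
        (fun x hx y hy hxy => by simp only; linarith [hmS hx hy hxy])
        s hs hne
      have keyL : ∀ t : ℝ, t ∈ Set.Ioo (0:ℝ) 1 →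
          |(∫ x in (0:ℝ)..t, (2 * c - η x)) / t - c| = |(∫ x in (0:ℝ)..t, η x) / t - c| := by
        intro t ht
        have h1 : IntervalIntegrable η volume 0 t :=
          (hη_cont.mono (Set.uIcc_subset_Icc ⟨le_refl _, zero_le_one⟩
            ⟨ht.1.le, ht.2.le⟩)).intervalIntegrable
        have h2 : (∫ x in (0:ℝ)..t, (2 * c - η x))
            = 2 * c * t - ∫ x in (0:ℝ)..t, η x := by
          rw [intervalIntegral.integral_sub intervalIntegrable_const h1,
            intervalIntegral.integral_const]
          simp [smul_eq_mul]; ring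
        have ht0 : t ≠ 0 := ne_of_gt ht.1
        rw [h2, show (2 * c * t - ∫ x in (0:ℝ)..t, η x) / t - c
            = -((∫ x in (0:ℝ)..t, η x) / t - c) by
          field_simp [ht0]; ring, abs_neg]
      have keyR : ∀ t : ℝ, t ∈ Set.Ioo (0:ℝ) 1 →
          |(∫ x in t..(1:ℝ), (2 * c - η x)) / (1 - t) - c|
            = |(∫ x in t..(1:ℝ), η x) / (1 - t) - c| := by
        intro t ht
        have h1t : (1:ℝ) - t ≠ 0 := by have := ht.2; intro h; linarith
        have h1 : IntervalIntegrable η volume t 1 :=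
          (hη_cont.mono (Set.uIcc_subset_Icc ⟨ht.1.le, ht.2.le⟩
            ⟨zero_le_one, le_refl _⟩)).intervalIntegrable
        have h2 : (∫ x in t..(1:ℝ), (2 * c - η x))
            = 2 * c * (1 - t) - ∫ x in t..(1:ℝ), η x := by
          rw [intervalIntegral.integral_sub intervalIntegrable_const h1,
            intervalIntegral.integral_const]
          simp [smul_eq_mul]; ring
        rw [h2, show (2 * c * (1 - t) - ∫ x in t..(1:ℝ), η x) / (1 - t) - c
            = -((∫ x in t..(1:ℝ), η x) / (1 - t) - c) by
          field_simp [h1t]; ring, abs_neg]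
      rwa [keyL s hs, keyL sstar ⟨hst0, hst1⟩, keyR s hs, keyR sstar ⟨hst0, hst1⟩] at haux
end

section
/- (The threshold crossing has zero risk) Suppose there exists a unique s* ∈ (0,1) with η(s*) = c, and there is ε₀ > 0 with [s* − ε₀, s* + ε₀] ⊆ (0,1) such that η is strictly monotone and differentiable on [s* − ε₀, s* + ε₀]. Then R(s*) = 0, and consequently inf_{s ∈ (0,1)} R(s) = 0. -/
open Set MeasureTheory intervalIntegral

/-- The threshold crossing has zero risk: In the uniform setup, suppose
there exists a unique `s* ∈ (0,1)` with `η s* = c`, and there is `ε₀ > 0` with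
`[s* - ε₀, s* + ε₀] ⊆ (0,1)` such that `η` is strictly monotone and differentiable on
`[s* - ε₀, s* + ε₀]`. Then `R s* = 0`, and consequently `inf_{s ∈ (0,1)} R s = 0`. -/
theorem threshold_crossing_zero_risk
    (η : ℝ → ℝ) (c : ℝ) (hc : c ∈ Set.Ioo (0:ℝ) 1)
    (hη_cont : ContinuousOn η (Set.Icc 0 1))
    (hη_mem : ∀ x ∈ Set.Icc (0:ℝ) 1, η x ∈ Set.Icc (0:ℝ) 1)
    (μL μR : ℝ → ℝ) (μt : ℝ → ℝ → ℝ) (R : ℝ → ℝ)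
    (hμL : ∀ s, μL s = (∫ x in (0:ℝ)..s, η x) / s)
    (hμR : ∀ s, μR s = (∫ x in s..(1:ℝ), η x) / (1 - s))
    (hμt : ∀ x s, μt x s = if x ≤ s then μL s else μR s)
    (hR : ∀ s, R s = ∫ x in (0:ℝ)..1,
        ((if c < η x ∧ μt x s ≤ c then (1:ℝ) else 0) +
         (if η x ≤ c ∧ c < μt x s then (1:ℝ) else 0)))
    (sstar : ℝ) (hstar : sstar ∈ Set.Ioo (0:ℝ) 1)
    (hcross : η sstar = c)
    (huniq : ∀ s ∈ Set.Ioo (0:ℝ) 1, η s = c → s = sstar)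
    (ε₀ : ℝ) (hε₀ : 0 < ε₀)
    (hsub : Set.Icc (sstar - ε₀) (sstar + ε₀) ⊆ Set.Ioo (0:ℝ) 1)
    (hmono : StrictMonoOn η (Set.Icc (sstar - ε₀) (sstar + ε₀)) ∨
             StrictAntiOn η (Set.Icc (sstar - ε₀) (sstar + ε₀)))
    (hdiff : DifferentiableOn ℝ η (Set.Icc (sstar - ε₀) (sstar + ε₀))) :
    R sstar = 0 ∧ sInf (R '' Set.Ioo (0:ℝ) 1) = 0 := by
  obtain ⟨hs0, hs1⟩ := hstar
  -- sign propagation lemmas via IVT and uniqueness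
  have key_gt : ∀ x t : ℝ, x ∈ Set.Ioo (0:ℝ) 1 → t ∈ Set.Ioo (0:ℝ) 1 →
      sstar ∉ Set.uIcc x t → c < η t → c < η x := by
    intro x t hx ht hns hct
    by_contra hcon
    push_neg at hcon
    have hsubI : Set.uIcc x t ⊆ Set.Ioo (0:ℝ) 1 :=
      Set.ordConnected_Ioo.uIcc_subset hx ht
    have hcIcc : Set.uIcc x t ⊆ Set.Icc (0:ℝ) 1 := hsubI.trans Set.Ioo_subset_Icc_self
    obtain ⟨y, hy, hyc⟩ := intermediate_value_uIcc (hη_cont.mono hcIcc)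
      (show c ∈ Set.uIcc (η x) (η t) from Set.mem_uIcc.2 (Or.inl ⟨hcon, hct.le⟩))
    have hyeq : y = sstar := huniq y (hsubI hy) hyc
    exact hns (hyeq ▸ hy)
  have key_lt : ∀ x t : ℝ, x ∈ Set.Ioo (0:ℝ) 1 → t ∈ Set.Ioo (0:ℝ) 1 →
      sstar ∉ Set.uIcc x t → η t < c → η x < c := by
    intro x t hx ht hns hct
    by_contra hcon
    push_neg at hcon
    have hsubI : Set.uIcc x t ⊆ Set.Ioo (0:ℝ) 1 :=
      Set.ordConnected_Ioo.uIcc_subset hx ht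
    have hcIcc : Set.uIcc x t ⊆ Set.Icc (0:ℝ) 1 := hsubI.trans Set.Ioo_subset_Icc_self
    obtain ⟨y, hy, hyc⟩ := intermediate_value_uIcc (hη_cont.mono hcIcc)
      (show c ∈ Set.uIcc (η x) (η t) from Set.mem_uIcc.2 (Or.inr ⟨hct.le, hcon⟩))
    have hyeq : y = sstar := huniq y (hsubI hy) hyc
    exact hns (hyeq ▸ hy)
  -- the two test points
  have htp : sstar + ε₀ ∈ Set.Ioo (0:ℝ) 1 := hsub (Set.right_mem_Icc.2 (by linarith))
  have htm : sstar - ε₀ ∈ Set.Ioo (0:ℝ) 1 := hsub (Set.left_mem_Icc.2 (by linarith))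
  have hsmem : sstar ∈ Set.Icc (sstar - ε₀) (sstar + ε₀) :=
    ⟨by linarith, by linarith⟩
  have htpmem : sstar + ε₀ ∈ Set.Icc (sstar - ε₀) (sstar + ε₀) :=
    Set.right_mem_Icc.2 (by linarith)
  have htmmem : sstar - ε₀ ∈ Set.Icc (sstar - ε₀) (sstar + ε₀) :=
    Set.left_mem_Icc.2 (by linarith)
  have hnsR : ∀ x ∈ Set.Ioo sstar 1, sstar ∉ Set.uIcc x (sstar + ε₀) := by
    intro x hx h
    rcases Set.mem_uIcc.1 h with ⟨h1, _⟩ | ⟨h1, _⟩ <;> linarith [hx.1]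
  have hnsL : ∀ x ∈ Set.Ioo 0 sstar, sstar ∉ Set.uIcc x (sstar - ε₀) := by
    intro x hx h
    rcases Set.mem_uIcc.1 h with ⟨_, h2⟩ | ⟨_, h2⟩ <;> linarith [hx.2]
  -- integrability
  have hintL : IntervalIntegrable η volume 0 sstar :=
    (hη_cont.mono (Set.uIcc_subset_Icc ⟨le_refl _, by linarith⟩
      ⟨hs0.le, hs1.le⟩)).intervalIntegrable
  have hintR : IntervalIntegrable η volume sstar 1 :=
    (hη_cont.mono (Set.uIcc_subset_Icc ⟨hs0.le, hs1.le⟩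
      ⟨by linarith, le_refl _⟩)).intervalIntegrable
  -- the common finishing argument
  have hfinish : (∀ x ∈ Set.Ioo (0:ℝ) 1, x ≠ sstar →
      ((if c < η x ∧ μt x sstar ≤ c then (1:ℝ) else 0) +
       (if η x ≤ c ∧ c < μt x sstar then (1:ℝ) else 0)) = 0) → R sstar = 0 := by
    intro hz
    rw [hR]
    have hae : ∫ x in (0:ℝ)..1,
        ((if c < η x ∧ μt x sstar ≤ c then (1:ℝ) else 0) +
         (if η x ≤ c ∧ c < μt x sstar then (1:ℝ) else 0)) = ∫ _x in (0:ℝ)..1, (0:ℝ) := by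
      apply intervalIntegral.integral_congr_ae
      have h1 : ∀ᵐ x ∂(volume : Measure ℝ), x ≠ sstar := by simp [ae_iff]
      have h2 : ∀ᵐ x ∂(volume : Measure ℝ), x ≠ (1:ℝ) := by simp [ae_iff]
      filter_upwards [h1, h2] with x hx1 hx2 hx
      rw [Set.uIoc_of_le (by norm_num : (0:ℝ) ≤ 1)] at hx
      exact hz x ⟨hx.1, lt_of_le_of_ne hx.2 hx2⟩ hx1
    rw [hae]
    simp
  have hRzero : R sstar = 0 := by
    rcases hmono with hm | hm
    · -- increasing case
      have hηp : c < η (sstar + ε₀) := hcross ▸ hm hsmem htpmem (by linarith)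
      have hηm : η (sstar - ε₀) < c := hcross ▸ hm htmmem hsmem (by linarith)
      have hsR : ∀ x ∈ Set.Ioo sstar 1, c < η x := fun x hx =>
        key_gt x (sstar + ε₀) ⟨lt_trans hs0 hx.1, hx.2⟩ htp (hnsR x hx) hηp
      have hsL : ∀ x ∈ Set.Ioo (0:ℝ) sstar, η x < c := fun x hx =>
        key_lt x (sstar - ε₀) ⟨hx.1, lt_trans hx.2 hs1⟩ htm (hnsL x hx) hηm
      -- μL sstar < c
      have hposL : 0 < ∫ x in (0:ℝ)..sstar, (c - η x) :=
        intervalIntegral.intervalIntegral_pos_of_pos_on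
          (intervalIntegrable_const.sub hintL)
          (fun x hx => sub_pos.2 (hsL x hx)) hs0
      have hIL : ∫ x in (0:ℝ)..sstar, (c - η x)
          = sstar * c - ∫ x in (0:ℝ)..sstar, η x := by
        rw [intervalIntegral.integral_sub intervalIntegrable_const hintL,
          intervalIntegral.integral_const]
        simp [smul_eq_mul]
      have hmL : μL sstar < c := by
        rw [hμL, div_lt_iff₀ hs0]
        nlinarith [hposL, hIL]
      -- c < μR sstar
      have hposR : 0 < ∫ x in sstar..(1:ℝ), (η x - c) :=
        intervalIntegral.intervalIntegral_pos_of_pos_on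
          (hintR.sub intervalIntegrable_const)
          (fun x hx => sub_pos.2 (hsR x hx)) hs1
      have hIR : ∫ x in sstar..(1:ℝ), (η x - c)
          = (∫ x in sstar..(1:ℝ), η x) - (1 - sstar) * c := by
        rw [intervalIntegral.integral_sub hintR intervalIntegrable_const,
          intervalIntegral.integral_const]
        simp [smul_eq_mul]
      have hmR : c < μR sstar := by
        rw [hμR, lt_div_iff₀ (by linarith)]
        nlinarith [hposR, hIR]
      apply hfinish
      intro x hx hxs
      rcases le_or_gt x sstar with hxle | hxgt
      · have hμ : μt x sstar = μL sstar := by rw [hμt]; simp [hxle]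
        have hηx : η x < c := hsL x ⟨hx.1, lt_of_le_of_ne hxle hxs⟩
        have h1 : ¬ (c < η x ∧ μt x sstar ≤ c) := fun h => absurd h.1 (by linarith)
        have h2 : ¬ (η x ≤ c ∧ c < μt x sstar) := fun h => absurd h.2 (by rw [hμ]; linarith)
        simp [h1, h2]
      · have hμ : μt x sstar = μR sstar := by rw [hμt]; simp [not_le.2 hxgt]
        have hηx : c < η x := hsR x ⟨hxgt, hx.2⟩
        have h1 : ¬ (c < η x ∧ μt x sstar ≤ c) := fun h => absurd h.2 (by rw [hμ]; linarith)
        have h2 : ¬ (η x ≤ c ∧ c < μt x sstar) := fun h => absurd h.1 (by linarith)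
        simp [h1, h2]
    · -- decreasing case
      have hηp : η (sstar + ε₀) < c := hcross ▸ hm hsmem htpmem (by linarith)
      have hηm : c < η (sstar - ε₀) := hcross ▸ hm htmmem hsmem (by linarith)
      have hsR : ∀ x ∈ Set.Ioo sstar 1, η x < c := fun x hx =>
        key_lt x (sstar + ε₀) ⟨lt_trans hs0 hx.1, hx.2⟩ htp (hnsR x hx) hηp
      have hsL : ∀ x ∈ Set.Ioo (0:ℝ) sstar, c < η x := fun x hx =>
        key_gt x (sstar - ε₀) ⟨hx.1, lt_trans hx.2 hs1⟩ htm (hnsL x hx) hηm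
      -- c < μL sstar
      have hposL : 0 < ∫ x in (0:ℝ)..sstar, (η x - c) :=
        intervalIntegral.intervalIntegral_pos_of_pos_on
          (hintL.sub intervalIntegrable_const)
          (fun x hx => sub_pos.2 (hsL x hx)) hs0
      have hIL : ∫ x in (0:ℝ)..sstar, (η x - c)
          = (∫ x in (0:ℝ)..sstar, η x) - sstar * c := by
        rw [intervalIntegral.integral_sub hintL intervalIntegrable_const,
          intervalIntegral.integral_const]
        simp [smul_eq_mul]
      have hmL : c < μL sstar := by
        rw [hμL, lt_div_iff₀ hs0]
        nlinarith [hposL, hIL]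
      -- μR sstar < c
      have hposR : 0 < ∫ x in sstar..(1:ℝ), (c - η x) :=
        intervalIntegral.intervalIntegral_pos_of_pos_on
          (intervalIntegrable_const.sub hintR)
          (fun x hx => sub_pos.2 (hsR x hx)) hs1
      have hIR : ∫ x in sstar..(1:ℝ), (c - η x)
          = (1 - sstar) * c - ∫ x in sstar..(1:ℝ), η x := by
        rw [intervalIntegral.integral_sub intervalIntegrable_const hintR,
          intervalIntegral.integral_const]
        simp [smul_eq_mul]
      have hmR : μR sstar < c := by
        rw [hμR, div_lt_iff₀ (by linarith)]
        nlinarith [hposR, hIR]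
      apply hfinish
      intro x hx hxs
      rcases le_or_gt x sstar with hxle | hxgt
      · have hμ : μt x sstar = μL sstar := by rw [hμt]; simp [hxle]
        have hηx : c < η x := hsL x ⟨hx.1, lt_of_le_of_ne hxle hxs⟩
        have h1 : ¬ (c < η x ∧ μt x sstar ≤ c) := fun h => absurd h.2 (by rw [hμ]; linarith)
        have h2 : ¬ (η x ≤ c ∧ c < μt x sstar) := fun h => absurd h.1 (by linarith)
        simp [h1, h2]
      · have hμ : μt x sstar = μR sstar := by rw [hμt]; simp [not_le.2 hxgt]
        have hηx : η x < c := hsR x ⟨hxgt, hx.2⟩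
        have h1 : ¬ (c < η x ∧ μt x sstar ≤ c) := fun h => absurd h.1 (by linarith)
        have h2 : ¬ (η x ≤ c ∧ c < μt x sstar) := fun h => absurd h.2 (by rw [hμ]; linarith)
        simp [h1, h2]
  -- nonnegativity of R on (0,1)
  have hnonneg : ∀ s ∈ Set.Ioo (0:ℝ) 1, 0 ≤ R s := by
    intro s hs
    rw [hR]
    apply intervalIntegral.integral_nonneg (by norm_num : (0:ℝ) ≤ 1)
    intro u _
    split_ifs <;> norm_num
  refine ⟨hRzero, le_antisymm ?_ ?_⟩
  · exact csInf_le ⟨0, by rintro r ⟨s, hs, rfl⟩; exact hnonneg s hs⟩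
      ⟨sstar, ⟨hs0, hs1⟩, hRzero⟩
  · exact le_csInf ⟨R sstar, sstar, ⟨hs0, hs1⟩, rfl⟩
      (by rintro r ⟨s, hs, rfl⟩; exact hnonneg s hs)
end

section
/- (Consistency of the MDFS estimator) Suppose there exists a unique s* ∈ (0,1) with η(s*) = c, and there is ε₀ > 0 with [s* − ε₀, s* + ε₀] ⊆ (0,1) such that η is strictly monotone and differentiable on [s* − ε₀, s* + ε₀]. Let ε ∈ (0, 1/2) be such that s* ∈ (ε, 1−ε). If ŝ_n are random variables taking values in (ε, 1−ε) and satisfying Ĝ*_n(ŝ_n, c) ≥ sup_{s ∈ (ε, 1−ε)} Ĝ*_n(s, c) − δ_n for a deterministic sequence δ_n → 0 (in particular, if ŝ_n is an exact maximizer of Ĝ*_n(·, c) over (ε, 1−ε)), then ŝ_n converges to s* in probability as n → ∞. -/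
open Set MeasureTheory ProbabilityTheory intervalIntegral Filter


/-- `|a| + |b - a| ≤ max |b| |2a - b|` -/
lemma mdfs_abs_max (a b : ℝ) : |a| + |b - a| ≤ max |b| |2*a - b| := by
  rcases le_total 0 a with h1 | h1 <;> rcases le_total a b with h2 | h2
  · rw [abs_of_nonneg h1, abs_of_nonneg (by linarith)]
    exact le_max_of_le_left (by rw [le_abs]; left; linarith)
  · rw [abs_of_nonneg h1, abs_of_nonpos (by linarith)]
    exact le_max_of_le_right (by rw [le_abs]; left; linarith)
  · rw [abs_of_nonpos h1, abs_of_nonneg (by linarith)]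
    exact le_max_of_le_right (by rw [le_abs]; right; linarith)
  · rw [abs_of_nonpos h1, abs_of_nonpos (by linarith)]
    exact le_max_of_le_left (by rw [le_abs]; right; linarith)

/-- strict gap lemma -/
lemma mdfs_absGap {b m x : ℝ} (hm : m < 0) (hmb : m < b) (hx : m < x)
    (hxb : x < 0 ∨ x < b) : |x| + |b - x| < -m + (b - m) := by
  refine lt_of_le_of_lt (mdfs_abs_max x b) ?_
  rw [max_lt_iff, abs_lt, abs_lt]
  rcases hxb with h | h
  · constructor <;> constructor <;> linarith
  · constructor <;> constructor <;> linarith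

lemma mdfs_gstar_gap {b m x : ℝ}
    (hcase : (m < 0 ∧ m < b ∧ m < x ∧ (x < 0 ∨ x < b)) ∨
             (0 < m ∧ b < m ∧ x < m ∧ (0 < x ∨ b < x))) :
    |x| + |b - x| < |m| + |b - m| := by
  rcases hcase with ⟨h1, h2, h3, h4⟩ | ⟨h1, h2, h3, h4⟩
  · rw [abs_of_neg h1, abs_of_pos (by linarith : (0:ℝ) < b - m)]
    exact mdfs_absGap h1 h2 h3 h4
  · have h4' : -x < 0 ∨ -x < -b := by
      rcases h4 with h | h
      · exact Or.inl (by linarith)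
      · exact Or.inr (by linarith)
    have := mdfs_absGap (b := -b) (m := -m) (x := -x) (by linarith) (by linarith)
      (by linarith) h4'
    rw [abs_neg, show -b - -x = -(b-x) by ring, abs_neg] at this
    rw [abs_of_pos h1, abs_of_neg (by linarith : b - m < 0)]
    linarith

/-- ratio bound -/
lemma mdfs_ratio_bound {a b N S d E : ℝ} (ha0 : 0 ≤ a) (ha1 : a ≤ 1)
    (hb0 : 0 ≤ b) (hb1 : b ≤ 1) (hE : 0 < E) (hN : E ≤ N)
    (hNa : |N - a| ≤ d) (hSb : |S - b| ≤ d) (hd : 0 ≤ d) :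
    |a * (S / N) - b| ≤ 2 * d / E := by
  have hNpos : 0 < N := lt_of_lt_of_le hE hN
  have hN0 : N ≠ 0 := ne_of_gt hNpos
  have key : a * (S / N) - b = (a * (S - b) + b * (a - N)) / N := by
    field_simp; ring
  rw [key, abs_div, abs_of_pos hNpos]
  have h1 : |a * (S - b) + b * (a - N)| ≤ 2 * d := by
    calc |a * (S - b) + b * (a - N)| ≤ |a * (S - b)| + |b * (a - N)| := abs_add_le _ _
    _ = a * |S - b| + b * |a - N| := by
        rw [abs_mul, abs_mul, abs_of_nonneg ha0, abs_of_nonneg hb0]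
    _ ≤ 1 * d + 1 * d := by
        rw [abs_sub_comm a N]
        exact add_le_add (mul_le_mul ha1 hSb (abs_nonneg _) zero_le_one)
          (mul_le_mul hb1 hNa (abs_nonneg _) zero_le_one)
    _ = 2 * d := by ring
  calc |a * (S - b) + b * (a - N)| / N ≤ (2*d) / N := by gcongr
    _ ≤ 2 * d / E := by gcongr <;> linarith

/-- Sign of `η - c` away from the unique crossing, strictly monotone case. -/
lemma mdfs_sign (η : ℝ → ℝ) (c sstar ε₀ : ℝ)
    (hη_cont : ContinuousOn η (Set.Icc 0 1))
    (hstar : sstar ∈ Set.Ioo (0:ℝ) 1) (hcross : η sstar = c)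
    (huniq : ∀ s ∈ Set.Ioo (0:ℝ) 1, η s = c → s = sstar)
    (hε₀ : 0 < ε₀)
    (hm : StrictMonoOn η (Set.Icc (sstar - ε₀) (sstar + ε₀))) :
    (∀ x ∈ Set.Ioo (0:ℝ) sstar, η x < c) ∧ (∀ x ∈ Set.Ioo sstar (1:ℝ), c < η x) := by
  obtain ⟨hs0, hs1⟩ := hstar
  have hstarmem : sstar ∈ Set.Icc (sstar - ε₀) (sstar + ε₀) :=
    ⟨by linarith, by linarith⟩
  constructor
  · intro x hx
    obtain ⟨hx0, hxs⟩ := hx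
    by_contra hcon
    push_neg at hcon  -- c ≤ η x
    set z := max ((x + sstar)/2) (sstar - ε₀) with hz
    have hxz : x < z := lt_of_lt_of_le (by linarith) (le_max_left _ _)
    have hzs : z < sstar := max_lt (by linarith) (by linarith)
    have hzmem : z ∈ Set.Icc (sstar - ε₀) (sstar + ε₀) :=
      ⟨le_max_right _ _, by linarith⟩
    have hηz : η z < c := hcross ▸ hm hzmem hstarmem hzs
    have hsub01 : Set.Icc x z ⊆ Set.Icc (0:ℝ) 1 :=
      Set.Icc_subset_Icc (le_of_lt hx0) (by linarith)
    have := intermediate_value_Icc' (le_of_lt hxz) (hη_cont.mono hsub01)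
    obtain ⟨y, hy, hyc⟩ := this ⟨le_of_lt hηz, hcon⟩
    have hy01 : y ∈ Set.Ioo (0:ℝ) 1 := ⟨lt_of_lt_of_le hx0 hy.1, by
      have := hy.2; linarith⟩
    have h1 := huniq y hy01 hyc
    have h2 : y < sstar := lt_of_le_of_lt hy.2 hzs
    rw [h1] at h2; exact lt_irrefl _ h2
  · intro x hx
    obtain ⟨hsx, hx1⟩ := hx
    by_contra hcon
    push_neg at hcon  -- η x ≤ c
    set z := min ((x + sstar)/2) (sstar + ε₀) with hz
    have hzx : z < x := lt_of_le_of_lt (min_le_left _ _) (by linarith)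
    have hsz : sstar < z := lt_min (by linarith) (by linarith)
    have hzmem : z ∈ Set.Icc (sstar - ε₀) (sstar + ε₀) :=
      ⟨by linarith, min_le_right _ _⟩
    have hηz : c < η z := hcross ▸ hm hstarmem hzmem hsz
    have hsub01 : Set.Icc z x ⊆ Set.Icc (0:ℝ) 1 :=
      Set.Icc_subset_Icc (by linarith) (le_of_lt hx1)
    have := intermediate_value_Icc' (le_of_lt hzx) (hη_cont.mono hsub01)
    obtain ⟨y, hy, hyc⟩ := this ⟨hcon, le_of_lt hηz⟩
    have hy01 : y ∈ Set.Ioo (0:ℝ) 1 := ⟨by have := hy.1; linarith,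
      lt_of_le_of_lt hy.2 hx1⟩
    have h1 := huniq y hy01 hyc
    have h2 : sstar < y := lt_of_lt_of_le hsz hy.1
    rw [h1] at h2; exact lt_irrefl _ h2

/-- integral strict bound -/
lemma mdfs_int_lt (η : ℝ → ℝ) (c a b : ℝ)
    (hcont : ContinuousOn η (Set.Icc 0 1))
    (ha : 0 ≤ a) (hb : b ≤ 1) (hab : a < b)
    (hneg : ∀ x ∈ Set.Ioo a b, η x < c) :
    (∫ x in a..b, η x) < c * (b - a) := by
  have hsub : Set.uIcc a b ⊆ Set.Icc (0:ℝ) 1 :=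
    Set.uIcc_subset_Icc ⟨ha, by linarith⟩ ⟨by linarith, hb⟩
  have hInt : IntervalIntegrable η MeasureTheory.volume a b :=
    (hcont.mono hsub).intervalIntegrable
  have hInt2 : IntervalIntegrable (fun x => c - η x) MeasureTheory.volume a b :=
    (continuousOn_const.sub (hcont.mono hsub)).intervalIntegrable
  have hpos : 0 < ∫ x in a..b, (c - η x) :=
    intervalIntegral.intervalIntegral_pos_of_pos_on hInt2 (fun x hx => by linarith [hneg x hx]) hab
  rw [intervalIntegral.integral_sub intervalIntegrable_const hInt,
    intervalIntegral.integral_const] at hpos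
  have : (b - a) • c = (b - a) * c := rfl
  rw [this] at hpos
  linarith

lemma mdfs_lln {Ω : Type*} [MeasureSpace Ω] [IsProbabilityMeasure (ℙ : Measure Ω)]
    (X Y : ℕ → Ω → ℝ) (hX_meas : ∀ i, Measurable (X i)) (hY_meas : ∀ i, Measurable (Y i))
    (hiid : iIndepFun
        (fun i ω => (X i ω, Y i ω)) ℙ)
    (hident : ∀ i j : ℕ, Measure.map (fun ω => (X i ω, Y i ω)) (ℙ : Measure Ω) =
        Measure.map (fun ω => (X j ω, Y j ω)) (ℙ : Measure Ω))
    (g : ℝ × ℝ → ℝ) (hg : Measurable g) (hgb : ∀ p, |g p| ≤ 1)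
    (μ0 : ℝ) (hμ0 : ∫ ω, g (X 0 ω, Y 0 ω) ∂ℙ = μ0) (t : ℝ) (ht : 0 < t) :
    Tendsto (fun n => (ℙ : Measure Ω)
        {ω | t ≤ |(∑ i ∈ Finset.range n, g (X i ω, Y i ω)) / n - μ0|})
      atTop (nhds 0) := by
  set Z : ℕ → Ω → ℝ := fun i ω => g (X i ω, Y i ω) with hZ
  have hpair : ∀ i, Measurable (fun ω => (X i ω, Y i ω)) :=
    fun i => (hX_meas i).prodMk (hY_meas i)
  have hZmeas : ∀ i, Measurable (Z i) := fun i => hg.comp (hpair i)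
  have hint : Integrable (Z 0) ℙ := by
    apply (integrable_const (1:ℝ)).mono' ((hZmeas 0).aestronglyMeasurable)
    filter_upwards with ω
    simpa using hgb _
  have hindep : Pairwise (Function.onFun (IndepFun · · (ℙ : Measure Ω)) Z) := by
    intro i j hij
    exact (hiid.indepFun hij).comp hg hg
  have hid : ∀ i, IdentDistrib (Z i) (Z 0) ℙ ℙ := by
    intro i
    refine ⟨(hZmeas i).aemeasurable, (hZmeas 0).aemeasurable, ?_⟩
    show Measure.map (g ∘ fun ω => (X i ω, Y i ω)) ℙ =
      Measure.map (g ∘ fun ω => (X 0 ω, Y 0 ω)) ℙ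
    rw [← Measure.map_map hg (hpair i), ← Measure.map_map hg (hpair 0), hident i 0]
  have hae := strong_law_ae_real Z hint hindep hid
  have hEμ : (ℙ : Measure Ω)[Z 0] = μ0 := hμ0
  rw [hEμ] at hae
  have hmeasavg : ∀ n : ℕ, AEStronglyMeasurable
      (fun ω => (∑ i ∈ Finset.range n, Z i ω) / (n:ℝ)) (ℙ : Measure Ω) := by
    intro n
    exact ((Finset.measurable_sum _ (fun i _ => hZmeas i)).div_const _).aestronglyMeasurable
  have h2 : TendstoInMeasure (ℙ : Measure Ω)
      (fun n ω => (∑ i ∈ Finset.range n, Z i ω) / (n:ℝ)) atTop (fun _ => μ0) :=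
    tendstoInMeasure_of_tendsto_ae hmeasavg hae
  have := (tendstoInMeasure_iff_dist.mp h2) t ht
  simpa [Real.dist_eq] using this

lemma mdfs_mean_ind {Ω : Type*} [MeasureSpace Ω] [IsProbabilityMeasure (ℙ : Measure Ω)]
    (X0 : Ω → ℝ) (hX_meas : Measurable X0)
    (hX_unif : Measure.map X0 (ℙ : Measure Ω) = volume.restrict (Set.Icc (0:ℝ) 1))
    (s : ℝ) (hs : s ∈ Set.Icc (0:ℝ) 1) :
    ∫ ω, (if X0 ω ≤ s then (1:ℝ) else 0) ∂ℙ = s := by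
  have hset : Set.Iic s ∩ Set.Icc (0:ℝ) 1 = Set.Icc 0 s := by
    ext x
    simp only [Set.mem_inter_iff, Set.mem_Iic, Set.mem_Icc]
    constructor
    · rintro ⟨h1, h2, h3⟩; exact ⟨h2, h1⟩
    · rintro ⟨h1, h2⟩; exact ⟨h2, h1, le_trans h2 hs.2⟩
  have hfun : (fun ω => if X0 ω ≤ s then (1:ℝ) else 0) =
      Set.indicator (X0 ⁻¹' Set.Iic s) (fun _ => (1:ℝ)) := by
    funext ω
    by_cases h : X0 ω ≤ s <;> simp [Set.indicator, h]
  rw [hfun, integral_indicator_const (1:ℝ) (hX_meas measurableSet_Iic)]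
  have hP : (ℙ : Measure Ω) (X0 ⁻¹' Set.Iic s) = ENNReal.ofReal s := by
    rw [← Measure.map_apply hX_meas measurableSet_Iic, hX_unif,
      Measure.restrict_apply measurableSet_Iic, hset, Real.volume_Icc]
    norm_num
  rw [measureReal_def, hP, ENNReal.toReal_ofReal hs.1]
  simp

lemma mdfs_mean_Yind {Ω : Type*} [MeasureSpace Ω] [IsProbabilityMeasure (ℙ : Measure Ω)]
    (η : ℝ → ℝ) (hη_mem : ∀ x ∈ Set.Icc (0:ℝ) 1, η x ∈ Set.Icc (0:ℝ) 1)
    (X0 Y0 : Ω → ℝ) (hX_meas : Measurable X0) (hY_meas : Measurable Y0)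
    (hY01 : ∀ ω, Y0 ω = 0 ∨ Y0 ω = 1)
    (hjoint : ∀ A : Set ℝ, MeasurableSet A →
        (ℙ : Measure Ω) {ω | X0 ω ∈ A ∧ Y0 ω = 1} =
          ENNReal.ofReal (∫ x in A ∩ Set.Icc (0:ℝ) 1, η x))
    (s : ℝ) (hs : s ∈ Set.Icc (0:ℝ) 1) :
    ∫ ω, Y0 ω * (if X0 ω ≤ s then (1:ℝ) else 0) ∂ℙ = ∫ x in (0:ℝ)..s, η x := by
  have hset : Set.Iic s ∩ Set.Icc (0:ℝ) 1 = Set.Icc 0 s := by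
    ext x
    simp only [Set.mem_inter_iff, Set.mem_Iic, Set.mem_Icc]
    constructor
    · rintro ⟨h1, h2, h3⟩; exact ⟨h2, h1⟩
    · rintro ⟨h1, h2⟩; exact ⟨h2, h1, le_trans h2 hs.2⟩
  have hA : MeasurableSet {ω | X0 ω ∈ Set.Iic s ∧ Y0 ω = 1} := by
    exact (hX_meas measurableSet_Iic).inter (hY_meas (measurableSet_singleton 1))
  have hfun : (fun ω => Y0 ω * (if X0 ω ≤ s then (1:ℝ) else 0)) =
      Set.indicator {ω | X0 ω ∈ Set.Iic s ∧ Y0 ω = 1} (fun _ => (1:ℝ)) := by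
    funext ω
    rcases hY01 ω with h | h <;> by_cases h2 : X0 ω ≤ s <;>
      simp [Set.indicator, h, h2]
  rw [hfun, integral_indicator_const (1:ℝ) hA, measureReal_def, hjoint _ measurableSet_Iic, hset]
  have hnn : 0 ≤ ∫ x in Set.Icc (0:ℝ) s, η x := by
    apply setIntegral_nonneg measurableSet_Icc
    intro x hx
    exact (hη_mem x ⟨hx.1, le_trans hx.2 hs.2⟩).1
  rw [ENNReal.toReal_ofReal hnn]
  rw [intervalIntegral.integral_of_le hs.1, ← integral_Icc_eq_integral_Ioc]
  simp

lemma mdfs_mean_Y {Ω : Type*} [MeasureSpace Ω] [IsProbabilityMeasure (ℙ : Measure Ω)]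
    (η : ℝ → ℝ) (hη_mem : ∀ x ∈ Set.Icc (0:ℝ) 1, η x ∈ Set.Icc (0:ℝ) 1)
    (X0 Y0 : Ω → ℝ) (hX_meas : Measurable X0) (hY_meas : Measurable Y0)
    (hY01 : ∀ ω, Y0 ω = 0 ∨ Y0 ω = 1)
    (hjoint : ∀ A : Set ℝ, MeasurableSet A →
        (ℙ : Measure Ω) {ω | X0 ω ∈ A ∧ Y0 ω = 1} =
          ENNReal.ofReal (∫ x in A ∩ Set.Icc (0:ℝ) 1, η x)) :
    ∫ ω, Y0 ω ∂ℙ = ∫ x in (0:ℝ)..(1:ℝ), η x := by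
  have hA : MeasurableSet {ω | X0 ω ∈ (Set.univ : Set ℝ) ∧ Y0 ω = 1} := by
    simp only [Set.mem_univ, true_and]
    exact hY_meas (measurableSet_singleton 1)
  have hfun : Y0 = Set.indicator {ω | X0 ω ∈ (Set.univ : Set ℝ) ∧ Y0 ω = 1}
      (fun _ => (1:ℝ)) := by
    funext ω
    rcases hY01 ω with h | h <;> simp [Set.indicator, h]
  calc ∫ ω, Y0 ω ∂ℙ
      = ∫ ω, Set.indicator {ω | X0 ω ∈ (Set.univ : Set ℝ) ∧ Y0 ω = 1}
          (fun _ => (1:ℝ)) ω ∂ℙ := by rw [← hfun]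
    _ = ∫ x in (0:ℝ)..(1:ℝ), η x := by
        rw [integral_indicator_const (1:ℝ) hA, measureReal_def, hjoint _ MeasurableSet.univ]
        rw [Set.univ_inter]
        have hnn : 0 ≤ ∫ x in Set.Icc (0:ℝ) 1, η x := by
          apply setIntegral_nonneg measurableSet_Icc
          intro x hx
          exact (hη_mem x hx).1
        rw [ENNReal.toReal_ofReal hnn]
        rw [intervalIntegral.integral_of_le zero_le_one, ← integral_Icc_eq_integral_Ioc]
        simp

lemma mdfs_int_gt (η : ℝ → ℝ) (c a b : ℝ)
    (hcont : ContinuousOn η (Set.Icc 0 1))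
    (ha : 0 ≤ a) (hb : b ≤ 1) (hab : a < b)
    (hpos : ∀ x ∈ Set.Ioo a b, c < η x) :
    c * (b - a) < ∫ x in a..b, η x := by
  have h := mdfs_int_lt (fun x => -η x) (-c) a b (hcont.neg) ha hb hab
    (fun x hx => by simpa using hpos x hx)
  rw [intervalIntegral.integral_neg] at h
  linarith

lemma mdfs_Bfacts (η : ℝ → ℝ)
    (hcont : ContinuousOn η (Set.Icc 0 1))
    (hmem : ∀ x ∈ Set.Icc (0:ℝ) 1, η x ∈ Set.Icc (0:ℝ) 1) :
    ∀ s t : ℝ, 0 ≤ s → s ≤ t → t ≤ 1 →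
      (∫ x in (0:ℝ)..s, η x) ≤ (∫ x in (0:ℝ)..t, η x) ∧
      (∫ x in (0:ℝ)..t, η x) - (∫ x in (0:ℝ)..s, η x) ≤ t - s := by
  intro s t hs hst ht1
  have hInt : ∀ a b : ℝ, 0 ≤ a → b ≤ 1 → a ≤ b → IntervalIntegrable η volume a b := by
    intro a b ha hb hab
    exact (hcont.mono (Set.uIcc_subset_Icc ⟨ha, by linarith⟩ ⟨by linarith, hb⟩)).intervalIntegrable
  have hadd : (∫ x in (0:ℝ)..s, η x) + (∫ x in s..t, η x) = ∫ x in (0:ℝ)..t, η x :=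
    intervalIntegral.integral_add_adjacent_intervals
      (hInt 0 s le_rfl (by linarith) hs) (hInt s t hs ht1 hst)
  have h0 : 0 ≤ ∫ x in s..t, η x := by
    apply intervalIntegral.integral_nonneg hst
    intro x hx
    exact (hmem x ⟨le_trans hs hx.1, le_trans hx.2 ht1⟩).1
  have h1 : (∫ x in s..t, η x) ≤ ∫ x in s..t, (1:ℝ) := by
    apply intervalIntegral.integral_mono_on hst (hInt s t hs ht1 hst)
      intervalIntegrable_const
    intro x hx
    exact (hmem x ⟨le_trans hs hx.1, le_trans hx.2 ht1⟩).2
  rw [intervalIntegral.integral_const, smul_eq_mul, mul_one] at h1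
  constructor <;> linarith

/-- The population gap lemma. -/
lemma mdfs_gap
    (η : ℝ → ℝ) (c : ℝ) (hc : c ∈ Set.Ioo (0:ℝ) 1)
    (hη_cont : ContinuousOn η (Set.Icc 0 1))
    (hη_mem : ∀ x ∈ Set.Icc (0:ℝ) 1, η x ∈ Set.Icc (0:ℝ) 1)
    (μL μR Gstar : ℝ → ℝ)
    (hμL : ∀ s, μL s = (∫ x in (0:ℝ)..s, η x) / s)
    (hμR : ∀ s, μR s = (∫ x in s..(1:ℝ), η x) / (1 - s))
    (hGstar : ∀ s, Gstar s = s * |μL s - c| + (1 - s) * |μR s - c|)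
    (sstar : ℝ) (hstar : sstar ∈ Set.Ioo (0:ℝ) 1)
    (hcross : η sstar = c)
    (huniq : ∀ s ∈ Set.Ioo (0:ℝ) 1, η s = c → s = sstar)
    (ε₀ : ℝ) (hε₀ : 0 < ε₀)
    (hmono : StrictMonoOn η (Set.Icc (sstar - ε₀) (sstar + ε₀)) ∨
             StrictAntiOn η (Set.Icc (sstar - ε₀) (sstar + ε₀)))
    (ε : ℝ) (hε : ε ∈ Set.Ioo (0:ℝ) (1/2))
    (hstar_mem : sstar ∈ Set.Ioo ε (1 - ε))
    (r : ℝ) (hr : 0 < r) :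
    ∃ γ : ℝ, 0 < γ ∧ ∀ s ∈ Set.Icc ε (1-ε), r ≤ |s - sstar| →
      Gstar s ≤ Gstar sstar - γ := by
  obtain ⟨hs0, hs1⟩ := hstar
  obtain ⟨hε0, hε2⟩ := hε
  set B : ℝ → ℝ := fun s => ∫ x in (0:ℝ)..s, η x with hB
  set A : ℝ → ℝ := fun s => B s - c * s with hA
  have hInt : ∀ a b : ℝ, 0 ≤ a → b ≤ 1 → a ≤ b → IntervalIntegrable η volume a b := by
    intro a b ha hb hab
    exact (hη_cont.mono (Set.uIcc_subset_Icc ⟨ha, by linarith⟩ ⟨by linarith, hb⟩)).intervalIntegrable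
  have hBdiff : ∀ s t : ℝ, 0 ≤ s → s ≤ t → t ≤ 1 → B t - B s = ∫ x in s..t, η x := by
    intro s t hs hst ht
    have := intervalIntegral.integral_add_adjacent_intervals
      (hInt 0 s le_rfl (by linarith) hs) (hInt s t hs ht hst)
    simp only [hB]
    linarith
  -- Gstar in terms of A on (0,1)
  have hGform : ∀ s, 0 < s → s < 1 → Gstar s = |A s| + |A 1 - A s| := by
    intro s h0 h1
    have hsne : s ≠ 0 := ne_of_gt h0
    have hs1ne : (1:ℝ) - s ≠ 0 := by intro h; linarith [h]
    rw [hGstar, hμL, hμR]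
    have e1 : s * |(∫ x in (0:ℝ)..s, η x) / s - c| = |A s| := by
      have e0 : s * ((∫ x in (0:ℝ)..s, η x) / s - c) = A s := by
        simp only [hA, hB]
        field_simp
      rw [← e0, abs_mul, abs_of_pos h0]
    have e2 : (1-s) * |(∫ x in s..(1:ℝ), η x) / (1 - s) - c| = |A 1 - A s| := by
      have hd : (∫ x in s..(1:ℝ), η x) = B 1 - B s :=
        (hBdiff s 1 (le_of_lt h0) (le_of_lt h1) le_rfl).symm
      have e0 : (1-s) * ((∫ x in s..(1:ℝ), η x) / (1 - s) - c) = A 1 - A s := by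
        rw [hd]
        simp only [hA]
        field_simp
        ring
      rw [← e0, abs_mul, abs_of_pos (by linarith : (0:ℝ) < 1 - s)]
    rw [e1, e2]
  -- signs
  have hsig : ((∀ x ∈ Set.Ioo (0:ℝ) sstar, η x < c) ∧ (∀ x ∈ Set.Ioo sstar (1:ℝ), c < η x)) ∨
      ((∀ x ∈ Set.Ioo (0:ℝ) sstar, c < η x) ∧ (∀ x ∈ Set.Ioo sstar (1:ℝ), η x < c)) := by
    rcases hmono with hm | hm
    · exact Or.inl (mdfs_sign η c sstar ε₀ hη_cont ⟨hs0, hs1⟩ hcross huniq hε₀ hm)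
    · right
      have hm' : StrictMonoOn (fun x => -η x) (Set.Icc (sstar - ε₀) (sstar + ε₀)) := by
        intro a ha b hb hab
        simpa using hm ha hb hab
      have := mdfs_sign (fun x => -η x) (-c) sstar ε₀ hη_cont.neg ⟨hs0, hs1⟩
        (by simp [hcross])
        (fun s hs hsc => huniq s hs (by have h2 := hsc; simp at h2; linarith)) hε₀ hm'
      constructor
      · intro x hx
        have h := this.1 x hx
        simp at h
        linarith
      · intro x hx
        have h := this.2 x hx
        simp at h
        linarith
  -- pointwise strict gap
  have hpt : ∀ s ∈ Set.Icc ε (1-ε), s ≠ sstar → Gstar s < Gstar sstar := by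
    intro s hsmem hne
    have hsc0 : 0 < s := lt_of_lt_of_le hε0 hsmem.1
    have hsc1 : s < 1 := lt_of_le_of_lt hsmem.2 (by linarith)
    rw [hGform s hsc0 hsc1, hGform sstar hs0 hs1]
    apply mdfs_gstar_gap
    rcases hsig with ⟨hL, hR⟩ | ⟨hL, hR⟩
    · left
      have hAstar : A sstar < 0 := by
        have h1 := mdfs_int_lt η c 0 sstar hη_cont le_rfl (le_of_lt hs1) hs0
          (fun x hx => hL x hx)
        ring_nf at h1
        simp only [hA, hB]
        linarith
      have hA1 : A sstar < A 1 := by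
        have h1 := mdfs_int_gt η c sstar 1 hη_cont (le_of_lt hs0) le_rfl hs1
          (fun x hx => hR x hx)
        ring_nf at h1
        have h2 := hBdiff sstar 1 (le_of_lt hs0) (le_of_lt hs1) le_rfl
        simp only [hA]
        linarith
      refine ⟨hAstar, hA1, ?_, ?_⟩
      · rcases lt_or_gt_of_ne hne with h | h
        · have h1 := mdfs_int_lt η c s sstar hη_cont (le_of_lt hsc0) (le_of_lt hs1) h
            (fun x hx => hL x ⟨lt_trans hsc0 hx.1, hx.2⟩)
          ring_nf at h1
          have h2 := hBdiff s sstar (le_of_lt hsc0) (le_of_lt h) (le_of_lt hs1)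
          simp only [hA]; linarith
        · have h1 := mdfs_int_gt η c sstar s hη_cont (le_of_lt hs0) (le_of_lt hsc1) h
            (fun x hx => hR x ⟨hx.1, lt_trans hx.2 hsc1⟩)
          ring_nf at h1
          have h2 := hBdiff sstar s (le_of_lt hs0) (le_of_lt h) (le_of_lt hsc1)
          simp only [hA]; linarith
      · rcases lt_or_gt_of_ne hne with h | h
        · left
          have h1 := mdfs_int_lt η c 0 s hη_cont le_rfl (le_of_lt hsc1) hsc0
            (fun x hx => hL x ⟨hx.1, lt_trans hx.2 h⟩)
          ring_nf at h1
          simp only [hA, hB]; linarith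
        · right
          have h1 := mdfs_int_gt η c s 1 hη_cont (le_of_lt hsc0) le_rfl hsc1
            (fun x hx => hR x ⟨lt_trans h hx.1, hx.2⟩)
          ring_nf at h1
          have h2 := hBdiff s 1 (le_of_lt hsc0) (le_of_lt hsc1) le_rfl
          simp only [hA]; linarith
    · right
      have hAstar : 0 < A sstar := by
        have h1 := mdfs_int_gt η c 0 sstar hη_cont le_rfl (le_of_lt hs1) hs0
          (fun x hx => hL x hx)
        ring_nf at h1
        simp only [hA, hB]
        linarith
      have hA1 : A 1 < A sstar := by
        have h1 := mdfs_int_lt η c sstar 1 hη_cont (le_of_lt hs0) le_rfl hs1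
          (fun x hx => hR x hx)
        ring_nf at h1
        have h2 := hBdiff sstar 1 (le_of_lt hs0) (le_of_lt hs1) le_rfl
        simp only [hA]
        linarith
      refine ⟨hAstar, hA1, ?_, ?_⟩
      · rcases lt_or_gt_of_ne hne with h | h
        · have h1 := mdfs_int_gt η c s sstar hη_cont (le_of_lt hsc0) (le_of_lt hs1) h
            (fun x hx => hL x ⟨lt_trans hsc0 hx.1, hx.2⟩)
          ring_nf at h1
          have h2 := hBdiff s sstar (le_of_lt hsc0) (le_of_lt h) (le_of_lt hs1)
          simp only [hA]; linarith
        · have h1 := mdfs_int_lt η c sstar s hη_cont (le_of_lt hs0) (le_of_lt hsc1) h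
            (fun x hx => hR x ⟨hx.1, lt_trans hx.2 hsc1⟩)
          ring_nf at h1
          have h2 := hBdiff sstar s (le_of_lt hs0) (le_of_lt h) (le_of_lt hsc1)
          simp only [hA]; linarith
      · rcases lt_or_gt_of_ne hne with h | h
        · left
          have h1 := mdfs_int_gt η c 0 s hη_cont le_rfl (le_of_lt hsc1) hsc0
            (fun x hx => hL x ⟨hx.1, lt_trans hx.2 h⟩)
          ring_nf at h1
          simp only [hA, hB]; linarith
        · right
          have h1 := mdfs_int_lt η c s 1 hη_cont (le_of_lt hsc0) le_rfl hsc1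
            (fun x hx => hR x ⟨lt_trans h hx.1, hx.2⟩)
          ring_nf at h1
          have h2 := hBdiff s 1 (le_of_lt hsc0) (le_of_lt hsc1) le_rfl
          simp only [hA]; linarith
  -- continuity of Gstar on the compact region
  have hBfacts := mdfs_Bfacts η hη_cont hη_mem
  have hBlip : LipschitzOnWith 1 B (Set.Icc 0 1) := by
    apply LipschitzOnWith.of_dist_le_mul
    intro x hx y hy
    simp only [Real.dist_eq, NNReal.coe_one, one_mul]
    rcases le_total x y with h | h
    · obtain ⟨h1, h2⟩ := hBfacts x y hx.1 h hy.2
      rw [abs_of_nonpos (by linarith), abs_of_nonpos (by linarith)]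
      linarith
    · obtain ⟨h1, h2⟩ := hBfacts y x hy.1 h hx.2
      rw [abs_of_nonneg (by linarith), abs_of_nonneg (by linarith)]
      linarith
  have hKsub : Set.Icc ε (1-ε) ⊆ Set.Icc (0:ℝ) 1 :=
    Set.Icc_subset_Icc (le_of_lt hε0) (by linarith)
  have hGcont : ContinuousOn Gstar (Set.Icc ε (1-ε)) := by
    have hAcont : ContinuousOn A (Set.Icc ε (1-ε)) := by
      apply ContinuousOn.sub
      · exact (hBlip.continuousOn).mono hKsub
      · exact (continuous_const.mul continuous_id).continuousOn
    have : ContinuousOn (fun s => |A s| + |A 1 - A s|) (Set.Icc ε (1-ε)) :=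
      (hAcont.abs).add ((continuousOn_const.sub hAcont).abs)
    apply this.congr
    intro s hsmem
    exact hGform s (lt_of_lt_of_le hε0 hsmem.1) (lt_of_le_of_lt hsmem.2 (by linarith))
  -- compactness
  set Kr := {s : ℝ | s ∈ Set.Icc ε (1-ε) ∧ r ≤ |s - sstar|} with hKr
  have hKreq : Kr = Set.Icc ε (1-ε) ∩ {s : ℝ | r ≤ |s - sstar|} := by
    ext t; simp [hKr, Set.mem_setOf_eq, Set.mem_inter_iff]
  have hKrcompact : IsCompact Kr := by
    rw [hKreq]
    apply isCompact_Icc.inter_right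
    have : {s : ℝ | r ≤ |s - sstar|} = (fun s => |s - sstar|) ⁻¹' Set.Ici r := rfl
    rw [this]
    exact IsClosed.preimage ((continuous_id.sub continuous_const).abs) isClosed_Ici
  by_cases hne : Kr.Nonempty
  · obtain ⟨s₀, hs₀mem, hs₀max⟩ := hKrcompact.exists_isMaxOn hne
      (hGcont.mono (by rw [hKreq]; exact Set.inter_subset_left))
    have hs₀ne : s₀ ≠ sstar := by
      intro h
      have := hs₀mem.2
      rw [h] at this
      simp at this
      linarith
    refine ⟨Gstar sstar - Gstar s₀, by linarith [hpt s₀ hs₀mem.1 hs₀ne], ?_⟩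
    intro s hsmem hsr
    have : Gstar s ≤ Gstar s₀ := hs₀max ⟨hsmem, hsr⟩
    linarith
  · refine ⟨1, one_pos, ?_⟩
    intro s hsmem hsr
    exact absurd ⟨hsmem, hsr⟩ (fun h => hne ⟨s, h⟩)

lemma mdfs_Gform
    (η : ℝ → ℝ) (c : ℝ)
    (hη_cont : ContinuousOn η (Set.Icc 0 1))
    (μL μR Gstar : ℝ → ℝ)
    (hμL : ∀ s, μL s = (∫ x in (0:ℝ)..s, η x) / s)
    (hμR : ∀ s, μR s = (∫ x in s..(1:ℝ), η x) / (1 - s))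
    (hGstar : ∀ s, Gstar s = s * |μL s - c| + (1 - s) * |μR s - c|)
    (s : ℝ) (h0 : 0 < s) (h1 : s < 1) :
    Gstar s = |(∫ x in (0:ℝ)..s, η x) - c*s| +
      |((∫ x in (0:ℝ)..(1:ℝ), η x) - (∫ x in (0:ℝ)..s, η x)) - c*(1-s)| := by
  have hsne : s ≠ 0 := ne_of_gt h0
  have hs1ne : (1:ℝ) - s ≠ 0 := by intro h; linarith [h]
  have hInt : ∀ a b : ℝ, 0 ≤ a → b ≤ 1 → a ≤ b → IntervalIntegrable η volume a b := by
    intro a b ha hb hab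
    exact (hη_cont.mono (Set.uIcc_subset_Icc ⟨ha, by linarith⟩ ⟨by linarith, hb⟩)).intervalIntegrable
  have hd : (∫ x in s..(1:ℝ), η x) = (∫ x in (0:ℝ)..(1:ℝ), η x) - (∫ x in (0:ℝ)..s, η x) := by
    have := intervalIntegral.integral_add_adjacent_intervals
      (hInt 0 s le_rfl (by linarith) (le_of_lt h0)) (hInt s 1 (le_of_lt h0) le_rfl (le_of_lt h1))
    linarith
  rw [hGstar, hμL, hμR]
  have e1 : s * |(∫ x in (0:ℝ)..s, η x) / s - c| = |(∫ x in (0:ℝ)..s, η x) - c*s| := by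
    have e0 : s * ((∫ x in (0:ℝ)..s, η x) / s - c) = (∫ x in (0:ℝ)..s, η x) - c*s := by
      field_simp
    rw [← e0, abs_mul, abs_of_pos h0]
  have e2 : (1-s) * |(∫ x in s..(1:ℝ), η x) / (1 - s) - c|
      = |((∫ x in (0:ℝ)..(1:ℝ), η x) - (∫ x in (0:ℝ)..s, η x)) - c*(1-s)| := by
    have e0 : (1-s) * ((∫ x in s..(1:ℝ), η x) / (1 - s) - c)
        = ((∫ x in (0:ℝ)..(1:ℝ), η x) - (∫ x in (0:ℝ)..s, η x)) - c*(1-s) := by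
      rw [hd]
      field_simp
    rw [← e0, abs_mul, abs_of_pos (by linarith : (0:ℝ) < 1 - s)]
  rw [e1, e2]

lemma mdfs_ratio01 (n : ℕ) (y b : ℕ → ℝ)
    (hy01 : ∀ i, y i = 0 ∨ y i = 1) (hb01 : ∀ i, b i = 0 ∨ b i = 1) :
    0 ≤ (∑ i ∈ Finset.range n, y i * b i) / (∑ i ∈ Finset.range n, b i) ∧
    (∑ i ∈ Finset.range n, y i * b i) / (∑ i ∈ Finset.range n, b i) ≤ 1 := by
  have hbnn : ∀ i, 0 ≤ b i := by
    intro i; rcases hb01 i with h | h <;> rw [h] <;> norm_num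
  have hynn : ∀ i, 0 ≤ y i := by
    intro i; rcases hy01 i with h | h <;> rw [h] <;> norm_num
  have hNnn : 0 ≤ ∑ i ∈ Finset.range n, b i :=
    Finset.sum_nonneg (fun i _ => hbnn i)
  have hSnn : 0 ≤ ∑ i ∈ Finset.range n, y i * b i :=
    Finset.sum_nonneg (fun i _ => mul_nonneg (hynn i) (hbnn i))
  have hSN : (∑ i ∈ Finset.range n, y i * b i) ≤ ∑ i ∈ Finset.range n, b i := by
    apply Finset.sum_le_sum
    intro i _
    rcases hy01 i with h | h <;> rw [h]
    · simpa using hbnn i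
    · simp
  rcases eq_or_lt_of_le hNnn with h | h
  · have hS0 : (∑ i ∈ Finset.range n, y i * b i) = 0 := le_antisymm (h ▸ hSN) hSnn
    rw [hS0, ← h]
    norm_num
  · exact ⟨div_nonneg hSnn (le_of_lt h), (div_le_one h).mpr hSN⟩

set_option maxHeartbeats 1000000 in
/-- Deterministic bracketing: grid control implies uniform control of the
empirical objective. -/
lemma mdfs_det (c ε d : ℝ) (hc : c ∈ Set.Icc (0:ℝ) 1)
    (hε0 : 0 < ε) (hε2 : ε < 1/2) (hd0 : 0 < d) (hdε : d ≤ ε/2)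
    (m : ℕ) (hm : 1 ≤ m) (hgrid : (1:ℝ)/m ≤ d/2)
    (B : ℝ → ℝ)
    (hBinc : ∀ s t : ℝ, 0 ≤ s → s ≤ t → t ≤ 1 → B s ≤ B t ∧ B t - B s ≤ t - s)
    (hBrange : ∀ s ∈ Set.Icc (0:ℝ) 1, 0 ≤ B s ∧ B s ≤ 1)
    (n : ℕ) (hn : 1 ≤ n) (x y : ℕ → ℝ)
    (hy01 : ∀ i, y i = 0 ∨ y i = 1)
    (hgridF : ∀ j ∈ Finset.range (m+1),
      |(∑ i ∈ Finset.range n, if x i ≤ (j:ℝ)/m then (1:ℝ) else 0)/n - (j:ℝ)/m| ≤ d/2 ∧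
      |(∑ i ∈ Finset.range n, y i * (if x i ≤ (j:ℝ)/m then (1:ℝ) else 0))/n - B ((j:ℝ)/m)| ≤ d/2)
    (hT : |(∑ i ∈ Finset.range n, y i)/n - B 1| ≤ d/2)
    (s : ℝ) (hs : s ∈ Set.Ioo ε (1-ε)) :
    |(s * |(∑ i ∈ Finset.range n, y i * (if x i ≤ s then (1:ℝ) else 0)) /
            (∑ i ∈ Finset.range n, (if x i ≤ s then (1:ℝ) else 0)) - c| +
      (1-s) * |(∑ i ∈ Finset.range n, y i * (if s < x i then (1:ℝ) else 0)) /
            (∑ i ∈ Finset.range n, (if s < x i then (1:ℝ) else 0)) - c|) -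
     (|B s - c*s| + |(B 1 - B s) - c*(1-s)|)| ≤ 12 * d / ε := by
  obtain ⟨hsε, hs1ε⟩ := hs
  have hs0 : 0 < s := lt_trans hε0 hsε
  have hs1 : s < 1 := by linarith
  have hn0 : (0:ℝ) < n := by exact_mod_cast hn
  have hm0 : (0:ℝ) < m := by exact_mod_cast hm
  -- notation
  set NL : ℝ → ℝ := fun t => ∑ i ∈ Finset.range n, (if x i ≤ t then (1:ℝ) else 0) with hNL
  set SL : ℝ → ℝ := fun t => ∑ i ∈ Finset.range n, y i * (if x i ≤ t then (1:ℝ) else 0) with hSL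
  set T : ℝ := ∑ i ∈ Finset.range n, y i with hTdef
  -- monotonicity
  have hy0 : ∀ i, 0 ≤ y i := by
    intro i; rcases hy01 i with h | h <;> rw [h] <;> norm_num
  have hNLmono : ∀ t t' : ℝ, t ≤ t' → NL t ≤ NL t' := by
    intro t t' htt
    apply Finset.sum_le_sum
    intro i _
    by_cases h : x i ≤ t
    · rw [if_pos h, if_pos (le_trans h htt)]
    · rw [if_neg h]
      by_cases h2 : x i ≤ t' <;> simp [h2]
  have hSLmono : ∀ t t' : ℝ, t ≤ t' → SL t ≤ SL t' := by
    intro t t' htt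
    apply Finset.sum_le_sum
    intro i _
    apply mul_le_mul_of_nonneg_left _ (hy0 i)
    by_cases h : x i ≤ t
    · rw [if_pos h, if_pos (le_trans h htt)]
    · rw [if_neg h]
      by_cases h2 : x i ≤ t' <;> simp [h2]
  -- grid index
  set j : ℕ := ⌊s * m⌋₊ with hj
  have hjm : j < m := by
    rw [hj, Nat.floor_lt (by positivity)]
    calc s * m < 1 * m := by apply mul_lt_mul_of_pos_right hs1 hm0
    _ = m := one_mul _
  have hfloor_le : (j:ℝ)/m ≤ s := by
    rw [div_le_iff₀ hm0]
    exact Nat.floor_le (by positivity)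
  have hlt_floor : s ≤ ((j:ℝ)+1)/m := by
    rw [le_div_iff₀ hm0]
    exact le_of_lt (Nat.lt_floor_add_one _)
  have hjr : j ∈ Finset.range (m+1) := Finset.mem_range.mpr (by omega)
  have hj1r : j+1 ∈ Finset.range (m+1) := Finset.mem_range.mpr (by omega)
  have hgap : ((j:ℝ)+1)/m - (j:ℝ)/m ≤ d/2 := by
    have : ((j:ℝ)+1)/m - (j:ℝ)/m = 1/m := by field_simp; ring
    rw [this]; exact hgrid
  have hgj0 : (0:ℝ) ≤ (j:ℝ)/m := by positivity
  have hgj1 : ((j:ℝ)+1)/m ≤ 1 := by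
    rw [div_le_one hm0]
    have : (j:ℝ)+1 ≤ m := by exact_mod_cast hjm
    linarith
  obtain ⟨hFj, hSj⟩ := hgridF j hjr
  obtain ⟨hFj1, hSj1⟩ := hgridF (j+1) hj1r
  push_cast at hFj1 hSj1
  -- uniform F bound
  have hFs : |NL s / n - s| ≤ d := by
    rw [abs_le]
    constructor
    · have h1 : NL ((j:ℝ)/m) ≤ NL s := hNLmono _ _ hfloor_le
      have h2 : (j:ℝ)/m - d/2 ≤ NL ((j:ℝ)/m) / n := by
        have := (abs_le.mp hFj).1; linarith
      have h3 : NL ((j:ℝ)/m)/n ≤ NL s / n := by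
        gcongr
      nlinarith [hgap, hfloor_le, hlt_floor]
    · have h1 : NL s ≤ NL (((j:ℝ)+1)/m) := hNLmono _ _ hlt_floor
      have h2 : NL (((j:ℝ)+1)/m) / n ≤ ((j:ℝ)+1)/m + d/2 := by
        have := (abs_le.mp hFj1).2; linarith
      have h3 : NL s / n ≤ NL (((j:ℝ)+1)/m)/n := by
        gcongr
      nlinarith [hgap, hfloor_le, hlt_floor]
  -- uniform S bound
  have hBj : B ((j:ℝ)/m) ≤ B s ∧ B s ≤ B (((j:ℝ)+1)/m) ∧
      B (((j:ℝ)+1)/m) - B ((j:ℝ)/m) ≤ d/2 := by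
    obtain ⟨h1, _⟩ := hBinc ((j:ℝ)/m) s hgj0 hfloor_le (le_of_lt hs1)
    obtain ⟨h2, _⟩ := hBinc s (((j:ℝ)+1)/m) (le_of_lt hs0) hlt_floor hgj1
    obtain ⟨_, h3⟩ := hBinc ((j:ℝ)/m) (((j:ℝ)+1)/m) hgj0
      (by gcongr <;> linarith) hgj1
    exact ⟨h1, h2, le_trans h3 hgap⟩
  have hSs : |SL s / n - B s| ≤ d := by
    rw [abs_le]
    constructor
    · have h1 : SL ((j:ℝ)/m) ≤ SL s := hSLmono _ _ hfloor_le
      have h2 : B ((j:ℝ)/m) - d/2 ≤ SL ((j:ℝ)/m) / n := by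
        have := (abs_le.mp hSj).1; linarith
      have h3 : SL ((j:ℝ)/m)/n ≤ SL s / n := by gcongr
      have := hBj.2.2; have := hBj.1
      linarith
    · have h1 : SL s ≤ SL (((j:ℝ)+1)/m) := hSLmono _ _ hlt_floor
      have h2 : SL (((j:ℝ)+1)/m) / n ≤ B (((j:ℝ)+1)/m) + d/2 := by
        have := (abs_le.mp hSj1).2; linarith
      have h3 : SL s / n ≤ SL (((j:ℝ)+1)/m)/n := by gcongr
      have := hBj.2.2; have := hBj.2.1
      linarith
  -- positivity
  have hNLn_lb : ε/2 ≤ NL s / n := by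
    have := (abs_le.mp hFs).1; linarith
  have hNLpos : 0 < NL s := by
    have h := lt_of_lt_of_le (by linarith : (0:ℝ) < ε/2) hNLn_lb
    have e : NL s = (NL s / n) * n := by field_simp
    rw [e]; positivity
  have hNLne : NL s ≠ 0 := ne_of_gt hNLpos
  have hnne : (n:ℝ) ≠ 0 := ne_of_gt hn0
  have hεne : ε ≠ 0 := ne_of_gt hε0
  have hBs01 : 0 ≤ B s ∧ B s ≤ 1 := hBrange s ⟨le_of_lt hs0, le_of_lt hs1⟩
  -- left ratio
  have hratL : SL s / NL s = (SL s / n) / (NL s / n) := by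
    rw [div_div_div_cancel_right₀ hnne]
  have hL0 : |s * ((SL s/n)/(NL s/n)) - B s| ≤ 2*d/(ε/2) :=
    mdfs_ratio_bound (le_of_lt hs0) (le_of_lt hs1) hBs01.1 hBs01.2
      (by linarith : (0:ℝ) < ε/2) hNLn_lb hFs hSs (le_of_lt hd0)
  have hLdiff : abs (s * |SL s / NL s - c| - |B s - c*s|) ≤ 4*d/ε := by
    have e1 : s * |SL s / NL s - c| = |s * ((SL s/n)/(NL s/n)) - c*s| := by
      have e0 : s * ((SL s/n)/(NL s/n)) - c*s = s * (SL s/NL s - c) := by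
        rw [← hratL]; ring
      rw [e0, abs_mul, abs_of_pos hs0]
    rw [e1]
    refine le_trans (abs_abs_sub_abs_le_abs_sub _ _) ?_
    have e2 : s * ((SL s/n)/(NL s/n)) - c*s - (B s - c*s)
        = s * ((SL s/n)/(NL s/n)) - B s := by ring
    rw [e2]
    refine le_trans hL0 (le_of_eq ?_)
    field_simp
    ring
  -- right-side sums
  have hNR : (∑ i ∈ Finset.range n, (if s < x i then (1:ℝ) else 0)) = n - NL s := by
    have e : ∀ i, (if s < x i then (1:ℝ) else 0) = 1 - (if x i ≤ s then (1:ℝ) else 0) := by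
      intro i
      by_cases h : x i ≤ s
      · rw [if_neg (not_lt.mpr h), if_pos h]; norm_num
      · rw [if_pos (lt_of_not_ge h), if_neg h]; norm_num
    rw [Finset.sum_congr rfl (fun i _ => e i), Finset.sum_sub_distrib,
      Finset.sum_const, Finset.card_range, nsmul_eq_mul, mul_one]
  have hSR : (∑ i ∈ Finset.range n, y i * (if s < x i then (1:ℝ) else 0)) = T - SL s := by
    have e : ∀ i, y i * (if s < x i then (1:ℝ) else 0)
        = y i - y i * (if x i ≤ s then (1:ℝ) else 0) := by
      intro i
      by_cases h : x i ≤ s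
      · rw [if_neg (not_lt.mpr h), if_pos h]; ring
      · rw [if_pos (lt_of_not_ge h), if_neg h]; ring
    rw [Finset.sum_congr rfl (fun i _ => e i), Finset.sum_sub_distrib]
  -- right-side normalized quantities
  have hNRn : ((n:ℝ) - NL s)/n = 1 - NL s/n := by field_simp
  have hNRbound : |((n:ℝ) - NL s)/n - (1-s)| ≤ d := by
    rw [hNRn]
    have : 1 - NL s/n - (1-s) = -(NL s/n - s) := by ring
    rw [this, abs_neg]
    exact hFs
  have hNRn_lb : ε/2 ≤ ((n:ℝ) - NL s)/n := by
    have := (abs_le.mp hNRbound).1; linarith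
  have hNRpos : 0 < (n:ℝ) - NL s := by
    have hq : 0 < ((n:ℝ) - NL s)/n := lt_of_lt_of_le (by linarith) hNRn_lb
    have := mul_pos hq hn0
    rwa [div_mul_cancel₀ _ hnne] at this
  have hSRn : (T - SL s)/n = T/n - SL s/n := by field_simp
  have hSRbound : |(T - SL s)/n - (B 1 - B s)| ≤ 2*d := by
    rw [hSRn]
    have e : T/n - SL s/n - (B 1 - B s) = (T/n - B 1) + (B s - SL s/n) := by ring
    rw [e]
    refine le_trans (abs_add_le _ _) ?_
    rw [abs_sub_comm (B s)]
    linarith [hT, hSs]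
  have hB1s : 0 ≤ B 1 - B s ∧ B 1 - B s ≤ 1 := by
    obtain ⟨h1, h2⟩ := hBinc s 1 (le_of_lt hs0) (le_of_lt hs1) le_rfl
    constructor <;> linarith
  have hratR : (T - SL s) / ((n:ℝ) - NL s) = ((T - SL s)/n) / (((n:ℝ) - NL s)/n) := by
    rw [div_div_div_cancel_right₀ hnne]
  have hR0 : |(1-s) * (((T - SL s)/n)/(((n:ℝ) - NL s)/n)) - (B 1 - B s)| ≤ 2*(2*d)/(ε/2) :=
    mdfs_ratio_bound (by linarith) (by linarith) hB1s.1 hB1s.2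
      (by linarith : (0:ℝ) < ε/2) hNRn_lb (le_trans hNRbound (by linarith)) hSRbound (by linarith)
  have hRdiff : abs ((1-s) * |(T - SL s) / ((n:ℝ) - NL s) - c| - |(B 1 - B s) - c*(1-s)|) ≤ 8*d/ε := by
    have e1 : (1-s) * |(T - SL s) / ((n:ℝ) - NL s) - c|
        = |(1-s) * (((T - SL s)/n)/(((n:ℝ) - NL s)/n)) - c*(1-s)| := by
      have e0 : (1-s) * (((T - SL s)/n)/(((n:ℝ) - NL s)/n)) - c*(1-s)
          = (1-s) * ((T - SL s) / ((n:ℝ) - NL s) - c) := by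
        rw [← hratR]; ring
      rw [e0, abs_mul, abs_of_pos (by linarith : (0:ℝ) < 1 - s)]
    rw [e1]
    refine le_trans (abs_abs_sub_abs_le_abs_sub _ _) ?_
    have e2 : (1-s) * (((T - SL s)/n)/(((n:ℝ) - NL s)/n)) - c*(1-s) - ((B 1 - B s) - c*(1-s))
        = (1-s) * (((T - SL s)/n)/(((n:ℝ) - NL s)/n)) - (B 1 - B s) := by ring
    rw [e2]
    refine le_trans hR0 (le_of_eq ?_)
    field_simp
    ring
  -- conclusion
  have eNL : (∑ i ∈ Finset.range n, (if x i ≤ s then (1:ℝ) else 0)) = NL s := rfl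
  have eSL : (∑ i ∈ Finset.range n, y i * (if x i ≤ s then (1:ℝ) else 0)) = SL s := rfl
  rw [eNL, eSL, hNR, hSR]
  have efin : s * |SL s / NL s - c| + (1 - s) * |(T - SL s) / ((n:ℝ) - NL s) - c| -
      (|B s - c * s| + |B 1 - B s - c * (1 - s)|)
      = (s * |SL s / NL s - c| - |B s - c*s|)
        + ((1 - s) * |(T - SL s) / ((n:ℝ) - NL s) - c| - |(B 1 - B s) - c*(1-s)|) := by
    ring
  rw [efin]
  refine le_trans (abs_add_le _ _) ?_
  have : 4*d/ε + 8*d/ε = 12*d/ε := by ring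
  linarith [hLdiff, hRdiff]

set_option maxHeartbeats 1600000 in
/-- Consistency of the MDFS estimator: Suppose there exists a unique
`s* ∈ (0,1)` with `η s* = c`, and there is `ε₀ > 0` with `[s* - ε₀, s* + ε₀] ⊆ (0,1)`
such that `η` is strictly monotone and differentiable on `[s* - ε₀, s* + ε₀]`.
Let `ε ∈ (0, 1/2)` with `s* ∈ (ε, 1-ε)`. If `ŝ_n` take values in `(ε, 1-ε)` and
satisfy `Ĝ*_n(ŝ_n, c) ≥ sup_{s ∈ (ε, 1-ε)} Ĝ*_n(s, c) - δ_n` with deterministic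
`δ_n → 0`, then `ŝ_n → s*` in probability. -/
theorem mdfs_estimator_consistency
    (η : ℝ → ℝ) (c : ℝ) (hc : c ∈ Set.Ioo (0:ℝ) 1)
    (hη_cont : ContinuousOn η (Set.Icc 0 1))
    (hη_mem : ∀ x ∈ Set.Icc (0:ℝ) 1, η x ∈ Set.Icc (0:ℝ) 1)
    (μL μR Gstar : ℝ → ℝ)
    (hμL : ∀ s, μL s = (∫ x in (0:ℝ)..s, η x) / s)
    (hμR : ∀ s, μR s = (∫ x in s..(1:ℝ), η x) / (1 - s))
    (hGstar : ∀ s, Gstar s = s * |μL s - c| + (1 - s) * |μR s - c|)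
    -- the unique threshold crossing and the local regularity of η around it:
    (sstar : ℝ) (hstar : sstar ∈ Set.Ioo (0:ℝ) 1)
    (hcross : η sstar = c)
    (huniq : ∀ s ∈ Set.Ioo (0:ℝ) 1, η s = c → s = sstar)
    (ε₀ : ℝ) (hε₀ : 0 < ε₀)
    (hsub : Set.Icc (sstar - ε₀) (sstar + ε₀) ⊆ Set.Ioo (0:ℝ) 1)
    (hmono : StrictMonoOn η (Set.Icc (sstar - ε₀) (sstar + ε₀)) ∨
             StrictAntiOn η (Set.Icc (sstar - ε₀) (sstar + ε₀)))
    (hdiff : DifferentiableOn ℝ η (Set.Icc (sstar - ε₀) (sstar + ε₀)))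
    -- sampling model: (X i, Y i) i.i.d., X uniform on [0,1], Y | X Bernoulli (η X)
    (Ω : Type*) [MeasureSpace Ω] [IsProbabilityMeasure (ℙ : Measure Ω)]
    (X Y : ℕ → Ω → ℝ)
    (hX_meas : ∀ i, Measurable (X i)) (hY_meas : ∀ i, Measurable (Y i))
    (hiid : iIndepFun
        (fun i ω => (X i ω, Y i ω)) ℙ)
    (hident : ∀ i j : ℕ, Measure.map (fun ω => (X i ω, Y i ω)) (ℙ : Measure Ω) =
        Measure.map (fun ω => (X j ω, Y j ω)) (ℙ : Measure Ω))
    (hX_unif : ∀ i, Measure.map (X i) (ℙ : Measure Ω) =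
        volume.restrict (Set.Icc (0:ℝ) 1))
    (hY01 : ∀ i ω, Y i ω = 0 ∨ Y i ω = 1)
    (hjoint : ∀ i, ∀ A : Set ℝ, MeasurableSet A →
        (ℙ : Measure Ω) {ω | X i ω ∈ A ∧ Y i ω = 1} =
          ENNReal.ofReal (∫ x in A ∩ Set.Icc (0:ℝ) 1, η x))
    -- the empirical MDFS objective (the convention 0/0 = 0 holds in Lean):
    (Ghat : ℕ → ℝ → Ω → ℝ)
    (hGhat : ∀ n s ω, Ghat n s ω =
        s * |(∑ i ∈ Finset.range n, Y i ω * (if X i ω ≤ s then (1:ℝ) else 0)) /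
              (∑ i ∈ Finset.range n, (if X i ω ≤ s then (1:ℝ) else 0)) - c| +
        (1 - s) * |(∑ i ∈ Finset.range n, Y i ω * (if s < X i ω then (1:ℝ) else 0)) /
              (∑ i ∈ Finset.range n, (if s < X i ω then (1:ℝ) else 0)) - c|)
    (ε : ℝ) (hε : ε ∈ Set.Ioo (0:ℝ) (1/2))
    (hstar_mem : sstar ∈ Set.Ioo ε (1 - ε))
    -- near-maximizing estimators:
    (shat : ℕ → Ω → ℝ) (δ : ℕ → ℝ)
    (hδ : Tendsto δ atTop (nhds 0))
    (hshat_mem : ∀ n ω, shat n ω ∈ Set.Ioo ε (1 - ε))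
    (hshat_near : ∀ n ω,
        sSup ((fun s => Ghat n s ω) '' Set.Ioo ε (1 - ε)) - δ n ≤
          Ghat n (shat n ω) ω) :
    TendstoInMeasure (ℙ : Measure Ω) shat atTop (fun _ => sstar) := by
  obtain ⟨hε0, hε2⟩ := hε
  obtain ⟨hc0, hc1⟩ := hc
  -- basic B facts
  have hBfacts := mdfs_Bfacts η hη_cont hη_mem
  have hBrange : ∀ s ∈ Set.Icc (0:ℝ) 1,
      0 ≤ (∫ x in (0:ℝ)..s, η x) ∧ (∫ x in (0:ℝ)..s, η x) ≤ 1 := by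
    intro s hs
    have h0 := hBfacts 0 s le_rfl hs.1 hs.2
    rw [intervalIntegral.integral_same] at h0
    exact ⟨by linarith [h0.1], by linarith [h0.2, hs.2]⟩
  -- boundedness of Ghat
  have hGhat_le : ∀ n (ω : Ω), ∀ s, 0 ≤ s → s ≤ 1 → Ghat n s ω ≤ 1 := by
    intro n ω s h0 h1
    rw [hGhat]
    have r1 := mdfs_ratio01 n (fun i => Y i ω) (fun i => if X i ω ≤ s then (1:ℝ) else 0)
      (fun i => hY01 i ω) (fun i => by by_cases h : X i ω ≤ s <;> simp [h])
    have r2 := mdfs_ratio01 n (fun i => Y i ω) (fun i => if s < X i ω then (1:ℝ) else 0)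
      (fun i => hY01 i ω) (fun i => by by_cases h : s < X i ω <;> simp [h])
    have a1 : |(∑ i ∈ Finset.range n, Y i ω * (if X i ω ≤ s then (1:ℝ) else 0)) /
        (∑ i ∈ Finset.range n, (if X i ω ≤ s then (1:ℝ) else 0)) - c| ≤ 1 :=
      abs_le.mpr ⟨by linarith [r1.1], by linarith [r1.2]⟩
    have a2 : |(∑ i ∈ Finset.range n, Y i ω * (if s < X i ω then (1:ℝ) else 0)) /
        (∑ i ∈ Finset.range n, (if s < X i ω then (1:ℝ) else 0)) - c| ≤ 1 :=
      abs_le.mpr ⟨by linarith [r2.1], by linarith [r2.2]⟩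
    calc s * |(∑ i ∈ Finset.range n, Y i ω * (if X i ω ≤ s then (1:ℝ) else 0)) /
              (∑ i ∈ Finset.range n, (if X i ω ≤ s then (1:ℝ) else 0)) - c| +
        (1 - s) * |(∑ i ∈ Finset.range n, Y i ω * (if s < X i ω then (1:ℝ) else 0)) /
              (∑ i ∈ Finset.range n, (if s < X i ω then (1:ℝ) else 0)) - c|
        ≤ s * 1 + (1 - s) * 1 := by
          apply add_le_add
          · exact mul_le_mul_of_nonneg_left a1 h0
          · exact mul_le_mul_of_nonneg_left a2 (by linarith)
      _ = 1 := by ring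
  have hbdd : ∀ n (ω : Ω), BddAbove ((fun s => Ghat n s ω) '' Set.Ioo ε (1-ε)) := by
    intro n ω
    refine ⟨1, ?_⟩
    rintro v ⟨s, hs, rfl⟩
    exact hGhat_le n ω s (by linarith [hs.1]) (by linarith [hs.2])
  -- start of the convergence proof
  rw [tendstoInMeasure_iff_dist]
  intro r hr
  obtain ⟨γ, hγ0, hγ⟩ := mdfs_gap η c ⟨hc0, hc1⟩ hη_cont hη_mem μL μR Gstar hμL hμR hGstar
    sstar hstar hcross huniq ε₀ hε₀ hmono ε ⟨hε0, hε2⟩ hstar_mem r hr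
  set d : ℝ := min (ε/2) (γ*ε/48) with hd
  have hd0 : 0 < d := lt_min (by linarith) (by positivity)
  have hdε2 : d ≤ ε/2 := min_le_left _ _
  have hdγ : 12*d/ε ≤ γ/4 := by
    have h1 : d ≤ γ*ε/48 := min_le_right _ _
    rw [div_le_iff₀ hε0]
    nlinarith
  set m : ℕ := ⌈(2:ℝ)/d⌉₊ with hm
  have hmR : (2:ℝ)/d ≤ m := Nat.le_ceil _
  have hm0R : (0:ℝ) < m := lt_of_lt_of_le (by positivity) hmR
  have hm1 : 1 ≤ m := by exact_mod_cast Nat.one_le_cast.mpr (by exact_mod_cast hm0R)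
  have hgrid : (1:ℝ)/m ≤ d/2 := by
    rw [div_le_iff₀ hm0R]
    have h2 : d/2 * (2/d) ≤ d/2 * m := by
      apply mul_le_mul_of_nonneg_left hmR (by linarith)
    have h3 : d/2 * (2/d) = 1 := by field_simp
    linarith
  have hgj : ∀ j ∈ Finset.range (m+1), (j:ℝ)/m ∈ Set.Icc (0:ℝ) 1 := by
    intro j hj
    have hjm : (j:ℝ) ≤ m := by
      have := Finset.mem_range.mp hj
      exact_mod_cast Nat.lt_succ_iff.mp this
    exact ⟨by positivity, by rw [div_le_one hm0R]; exact hjm⟩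
  -- measurable test functions
  have hgF : ∀ a : ℝ, Measurable (fun p : ℝ×ℝ => if p.1 ≤ a then (1:ℝ) else 0) := by
    intro a
    exact Measurable.ite (measurableSet_le measurable_fst measurable_const)
      measurable_const measurable_const
  have hgY : Measurable (fun p : ℝ×ℝ => if p.2 = 1 then (1:ℝ) else 0) := by
    exact Measurable.ite (measurable_snd (measurableSet_singleton 1))
      measurable_const measurable_const
  have hYid : ∀ i (ω : Ω), (if Y i ω = 1 then (1:ℝ) else 0) = Y i ω := by
    intro i ω
    rcases hY01 i ω with h | h <;> simp [h]
  -- LLN at grid points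
  have hp1 : ∀ j ∈ Finset.range (m+1), Tendsto (fun n => (ℙ : Measure Ω)
      {ω | d/2 ≤ |(∑ i ∈ Finset.range n, (if X i ω ≤ (j:ℝ)/m then (1:ℝ) else 0))/n - (j:ℝ)/m|})
      atTop (nhds 0) := by
    intro j hj
    exact mdfs_lln X Y hX_meas hY_meas hiid hident
      (fun p => if p.1 ≤ (j:ℝ)/m then (1:ℝ) else 0) (hgF _)
      (fun p => by by_cases h : p.1 ≤ (j:ℝ)/m <;> simp [h])
      ((j:ℝ)/m) (mdfs_mean_ind (X 0) (hX_meas 0) (hX_unif 0) _ (hgj j hj))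
      (d/2) (half_pos hd0)
  have hp2 : ∀ j ∈ Finset.range (m+1), Tendsto (fun n => (ℙ : Measure Ω)
      {ω | d/2 ≤ |(∑ i ∈ Finset.range n, Y i ω * (if X i ω ≤ (j:ℝ)/m then (1:ℝ) else 0))/n
        - (∫ x in (0:ℝ)..((j:ℝ)/m), η x)|}) atTop (nhds 0) := by
    intro j hj
    have hmean : ∫ ω, (fun p : ℝ×ℝ => (if p.2 = 1 then (1:ℝ) else 0) *
        (if p.1 ≤ (j:ℝ)/m then (1:ℝ) else 0)) (X 0 ω, Y 0 ω) ∂ℙ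
        = ∫ x in (0:ℝ)..((j:ℝ)/m), η x := by
      have := mdfs_mean_Yind η hη_mem (X 0) (Y 0) (hX_meas 0) (hY_meas 0)
        (hY01 0) (hjoint 0) _ (hgj j hj)
      rw [← this]
      congr 1
      funext ω
      simp only [hYid]
    have hlln := mdfs_lln X Y hX_meas hY_meas hiid hident
      (fun p => (if p.2 = 1 then (1:ℝ) else 0) * (if p.1 ≤ (j:ℝ)/m then (1:ℝ) else 0))
      (hgY.mul (hgF _))
      (fun p => by by_cases h1 : p.2 = 1 <;> by_cases h2 : p.1 ≤ (j:ℝ)/m <;> simp [h1, h2])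
      (∫ x in (0:ℝ)..((j:ℝ)/m), η x) hmean (d/2) (half_pos hd0)
    have hseteq : ∀ n : ℕ, {ω : Ω | d/2 ≤ |(∑ i ∈ Finset.range n,
          (fun p : ℝ×ℝ => (if p.2 = 1 then (1:ℝ) else 0) *
            (if p.1 ≤ (j:ℝ)/m then (1:ℝ) else 0)) (X i ω, Y i ω))/n
          - (∫ x in (0:ℝ)..((j:ℝ)/m), η x)|}
        = {ω : Ω | d/2 ≤ |(∑ i ∈ Finset.range n, Y i ω * (if X i ω ≤ (j:ℝ)/m then (1:ℝ) else 0))/n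
          - (∫ x in (0:ℝ)..((j:ℝ)/m), η x)|} := by
      intro n
      ext ω
      simp only [Set.mem_setOf_eq, hYid]
    have : (fun n => (ℙ : Measure Ω) {ω | d/2 ≤ |(∑ i ∈ Finset.range n,
          (fun p : ℝ×ℝ => (if p.2 = 1 then (1:ℝ) else 0) *
            (if p.1 ≤ (j:ℝ)/m then (1:ℝ) else 0)) (X i ω, Y i ω))/n
          - (∫ x in (0:ℝ)..((j:ℝ)/m), η x)|})
        = (fun n => (ℙ : Measure Ω) {ω | d/2 ≤ |(∑ i ∈ Finset.range n,
            Y i ω * (if X i ω ≤ (j:ℝ)/m then (1:ℝ) else 0))/n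
          - (∫ x in (0:ℝ)..((j:ℝ)/m), η x)|}) := by
      funext n
      rw [hseteq n]
    rw [← this]
    exact hlln
  have hp3 : Tendsto (fun n => (ℙ : Measure Ω)
      {ω | d/2 ≤ |(∑ i ∈ Finset.range n, Y i ω)/n - (∫ x in (0:ℝ)..(1:ℝ), η x)|})
      atTop (nhds 0) := by
    have hmean : ∫ ω, (fun p : ℝ×ℝ => if p.2 = 1 then (1:ℝ) else 0) (X 0 ω, Y 0 ω) ∂ℙ
        = ∫ x in (0:ℝ)..(1:ℝ), η x := by
      have := mdfs_mean_Y η hη_mem (X 0) (Y 0) (hX_meas 0) (hY_meas 0) (hY01 0) (hjoint 0)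
      rw [← this]
      congr 1
      funext ω
      simp only [hYid]
    have hlln := mdfs_lln X Y hX_meas hY_meas hiid hident
      (fun p => if p.2 = 1 then (1:ℝ) else 0) hgY
      (fun p => by by_cases h : p.2 = 1 <;> simp [h])
      (∫ x in (0:ℝ)..(1:ℝ), η x) hmean (d/2) (half_pos hd0)
    have hseteq : ∀ n : ℕ, {ω : Ω | d/2 ≤ |(∑ i ∈ Finset.range n,
          (fun p : ℝ×ℝ => if p.2 = 1 then (1:ℝ) else 0) (X i ω, Y i ω))/n
          - (∫ x in (0:ℝ)..(1:ℝ), η x)|}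
        = {ω : Ω | d/2 ≤ |(∑ i ∈ Finset.range n, Y i ω)/n - (∫ x in (0:ℝ)..(1:ℝ), η x)|} := by
      intro n
      ext ω
      simp only [Set.mem_setOf_eq, hYid]
    have : (fun n => (ℙ : Measure Ω) {ω | d/2 ≤ |(∑ i ∈ Finset.range n,
          (fun p : ℝ×ℝ => if p.2 = 1 then (1:ℝ) else 0) (X i ω, Y i ω))/n
          - (∫ x in (0:ℝ)..(1:ℝ), η x)|})
        = (fun n => (ℙ : Measure Ω) {ω | d/2 ≤ |(∑ i ∈ Finset.range n, Y i ω)/n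
          - (∫ x in (0:ℝ)..(1:ℝ), η x)|}) := by
      funext n
      rw [hseteq n]
    rw [← this]
    exact hlln
  -- bad events
  set E1 : ℕ → ℕ → Set Ω := fun j n =>
    {ω | d/2 ≤ |(∑ i ∈ Finset.range n, (if X i ω ≤ (j:ℝ)/m then (1:ℝ) else 0))/n - (j:ℝ)/m|}
    with hE1
  set E2 : ℕ → ℕ → Set Ω := fun j n =>
    {ω | d/2 ≤ |(∑ i ∈ Finset.range n, Y i ω * (if X i ω ≤ (j:ℝ)/m then (1:ℝ) else 0))/n
      - (∫ x in (0:ℝ)..((j:ℝ)/m), η x)|} with hE2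
  set E3 : ℕ → Set Ω := fun n =>
    {ω | d/2 ≤ |(∑ i ∈ Finset.range n, Y i ω)/n - (∫ x in (0:ℝ)..(1:ℝ), η x)|} with hE3
  set Bad : ℕ → Set Ω := fun n =>
    (⋃ j ∈ Finset.range (m+1), (E1 j n ∪ E2 j n)) ∪ E3 n with hBad
  -- inclusion of the deviation event into the bad event
  have hincl : ∀ n : ℕ, 1 ≤ n → δ n < γ/4 →
      {x | r ≤ dist (shat n x) sstar} ⊆ Bad n := by
    intro n hn hδn ω hω
    by_contra hbad
    rw [hBad] at hbad
    have hg12 : ∀ j ∈ Finset.range (m+1), ω ∉ E1 j n ∧ ω ∉ E2 j n := by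
      intro j hj
      constructor
      · intro hmem
        exact hbad (Set.mem_union_left _ (Set.mem_biUnion hj (Set.mem_union_left _ hmem)))
      · intro hmem
        exact hbad (Set.mem_union_left _ (Set.mem_biUnion hj (Set.mem_union_right _ hmem)))
    have hg3 : ω ∉ E3 n := fun hmem => hbad (Set.mem_union_right _ hmem)
    -- grid bounds
    have hgridF : ∀ j ∈ Finset.range (m+1),
        |(∑ i ∈ Finset.range n, if (fun i => X i ω) i ≤ (j:ℝ)/m then (1:ℝ) else 0)/n - (j:ℝ)/m| ≤ d/2 ∧
        |(∑ i ∈ Finset.range n, (fun i => Y i ω) i * (if (fun i => X i ω) i ≤ (j:ℝ)/m then (1:ℝ) else 0))/n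
          - (∫ x in (0:ℝ)..((j:ℝ)/m), η x)| ≤ d/2 := by
      intro j hj
      obtain ⟨h1, h2⟩ := hg12 j hj
      rw [hE1] at h1
      rw [hE2] at h2
      simp only [Set.mem_setOf_eq, not_le] at h1 h2
      exact ⟨le_of_lt h1, le_of_lt h2⟩
    have hT : |(∑ i ∈ Finset.range n, (fun i => Y i ω) i)/n - (∫ x in (0:ℝ)..(1:ℝ), η x)| ≤ d/2 := by
      rw [hE3] at hg3
      simp only [Set.mem_setOf_eq, not_le] at hg3
      exact le_of_lt hg3
    have hdet := mdfs_det c ε d ⟨le_of_lt hc0, le_of_lt hc1⟩ hε0 hε2 hd0 hdε2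
      m hm1 hgrid (fun t => ∫ x in (0:ℝ)..t, η x) hBfacts hBrange
      n hn (fun i => X i ω) (fun i => Y i ω) (fun i => hY01 i ω) hgridF hT
    have hU : ∀ s ∈ Set.Ioo ε (1-ε), |Ghat n s ω - Gstar s| ≤ γ/4 := by
      intro s hs
      have h := hdet s hs
      refine le_trans ?_ hdγ
      rw [hGhat n s ω, mdfs_Gform η c hη_cont μL μR Gstar hμL hμR hGstar s
        (by linarith [hs.1]) (by linarith [hs.2])]
      exact h
    -- the argmax argument
    have hU1 := abs_le.mp (hU sstar hstar_mem)
    have hU2 := abs_le.mp (hU (shat n ω) (hshat_mem n ω))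
    have hsup : Ghat n sstar ω ≤ sSup ((fun s => Ghat n s ω) '' Set.Ioo ε (1-ε)) :=
      le_csSup (hbdd n ω) ⟨sstar, hstar_mem, rfl⟩
    have hnear := hshat_near n ω
    have hgap := hγ (shat n ω)
      ⟨le_of_lt (hshat_mem n ω).1, le_of_lt (hshat_mem n ω).2⟩
      (by have hω' : r ≤ dist (shat n ω) sstar := hω
          rw [Real.dist_eq] at hω'
          exact hω')
    linarith
  -- probability bound and limit
  have hPbound : ∀ n, (ℙ : Measure Ω) (Bad n) ≤
      (∑ j ∈ Finset.range (m+1), ((ℙ : Measure Ω) (E1 j n) + (ℙ : Measure Ω) (E2 j n)))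
        + (ℙ : Measure Ω) (E3 n) := by
    intro n
    rw [hBad]
    refine le_trans (measure_union_le _ _) ?_
    refine add_le_add ?_ le_rfl
    refine le_trans (measure_biUnion_finset_le _ _) ?_
    apply Finset.sum_le_sum
    intro j _
    exact measure_union_le _ _
  have hPlim : Tendsto (fun n =>
      (∑ j ∈ Finset.range (m+1), ((ℙ : Measure Ω) (E1 j n) + (ℙ : Measure Ω) (E2 j n)))
        + (ℙ : Measure Ω) (E3 n)) atTop (nhds 0) := by
    have hsum : Tendsto (fun n => ∑ j ∈ Finset.range (m+1),
        ((ℙ : Measure Ω) (E1 j n) + (ℙ : Measure Ω) (E2 j n))) atTop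
        (nhds (∑ j ∈ Finset.range (m+1), (0 + 0 : ENNReal))) := by
      apply tendsto_finset_sum
      intro j hj
      exact (hp1 j hj).add (hp2 j hj)
    have := hsum.add hp3
    simpa using this
  have hev : ∀ᶠ n in atTop,
      (ℙ : Measure Ω) {x | r ≤ dist (shat n x) sstar} ≤
      (∑ j ∈ Finset.range (m+1), ((ℙ : Measure Ω) (E1 j n) + (ℙ : Measure Ω) (E2 j n)))
        + (ℙ : Measure Ω) (E3 n) := by
    have h1 : ∀ᶠ n in atTop, δ n < γ/4 := hδ.eventually (gt_mem_nhds (by linarith))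
    have h2 : ∀ᶠ (n:ℕ) in atTop, 1 ≤ n := eventually_ge_atTop 1
    filter_upwards [h1, h2] with n hn1 hn2
    exact le_trans (measure_mono (hincl n hn2 hn1)) (hPbound n)
  exact tendsto_of_tendsto_of_tendsto_of_le_of_le' tendsto_const_nhds hPlim
    (Filter.Eventually.of_forall (fun n => zero_le)) hev
end
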